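/- arXiv:1312.0099 — 12 statements merged into one kernel-verified Lean document; each statement's English description precedes it below -/
import Mathlib

section
/- Let n ≥ 2 be an integer, α > 0, β > 0, and let d_1,…,d_{n−1} and δ_1,…,δ_{n−1} be positive reals. Set q_i := exp(−α d_i − β δ_i) and λ := Σ_{i=1}^{n−1} (α d_i + β δ_i). Then the trend information M_θ := 1 + Σ_{i=1}^{n−1} (1 − q_i)/(1 + q_i) satisfies M_θ ≤ 1 + (n−1)·(1 − exp(−λ/(n−1)))/(1 + exp(−λ/(n−1))), with equality if and only if α d_i + β δ_i = λ/(n−1) for all i = 1,…,n−1; that is, among designs with fixed skewed size λ, the design with α d_i + β δ_i constant maximizes the Fisher information on the trend parameter θ. -/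
/-- Fisher information on the trend parameter `θ` of a shifted
Ornstein-Uhlenbeck sheet observed on a monotonic set with increments
`d i`, `δ i`:  `M_θ = 1 + Σ (1 - q_i)/(1 + q_i)` with
`q_i = exp(-(α d_i + β δ_i))`. -/
noncomputable def trendInfo (n : ℕ) (α β : ℝ) (d δ : ℕ → ℝ) : ℝ :=
  1 + ∑ i ∈ Finset.range (n - 1),
    (1 - Real.exp (-(α * d i + β * δ i))) / (1 + Real.exp (-(α * d i + β * δ i)))

/-- The "skewed size" `λ = Σ (α d_i + β δ_i)` of the design. -/
noncomputable def skewSize (n : ℕ) (α β : ℝ) (d δ : ℕ → ℝ) : ℝ :=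
  ∑ i ∈ Finset.range (n - 1), (α * d i + β * δ i)

noncomputable def ouF (x : ℝ) : ℝ := (1 - Real.exp (-x)) / (1 + Real.exp (-x))

lemma ouF_eq (x : ℝ) : ouF x = 1 - 2 * (1 + Real.exp x)⁻¹ := by
  have h : (0:ℝ) < 1 + Real.exp x := by positivity
  rw [ouF, Real.exp_neg]
  have he := (Real.exp_pos x).ne'
  field_simp
  ring

lemma ouF_concave : StrictConcaveOn ℝ (Set.Ici (0:ℝ)) ouF := by
  have hfun : ouF = fun x => 1 - 2 * (1 + Real.exp x)⁻¹ := funext ouF_eq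
  rw [hfun]
  apply strictConcaveOn_of_deriv2_neg (convex_Ici 0)
    (Continuous.continuousOn (by fun_prop (disch := intro x; positivity)))
  intro x hx
  rw [interior_Ici] at hx
  have hne : ∀ y : ℝ, (1 + Real.exp y) ≠ 0 := fun y => by positivity
  have hd1 : ∀ y : ℝ, HasDerivAt (fun x => 1 - 2 * (1 + Real.exp x)⁻¹)
      (2 * Real.exp y / (1 + Real.exp y) ^ 2) y := by
    intro y
    have h := (((Real.hasDerivAt_exp y).const_add 1).inv (hne y)).const_mul 2
    have h2 := h.const_sub 1
    refine h2.congr_deriv ?_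
    ring
  have hderiv : deriv (fun x => 1 - 2 * (1 + Real.exp x)⁻¹)
      = fun y => 2 * Real.exp y / (1 + Real.exp y) ^ 2 := funext fun y => (hd1 y).deriv
  have h2 : HasDerivAt (fun y => 2 * Real.exp y / (1 + Real.exp y) ^ 2)
      (2 * Real.exp x * (1 - Real.exp x) / (1 + Real.exp x) ^ 3) x := by
    have hnum : HasDerivAt (fun y => 2 * Real.exp y) (2 * Real.exp x) x :=
      (Real.hasDerivAt_exp x).const_mul 2
    have hden : HasDerivAt (fun y => (1 + Real.exp y) ^ 2)
        ((2:ℕ) * (1 + Real.exp x) ^ 1 * Real.exp x) x :=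
      ((Real.hasDerivAt_exp x).const_add 1).pow 2
    have h := hnum.div hden (pow_ne_zero 2 (hne x))
    refine h.congr_deriv ?_
    have := hne x
    field_simp
    ring
  have : deriv^[2] (fun x => 1 - 2 * (1 + Real.exp x)⁻¹) x
      = 2 * Real.exp x * (1 - Real.exp x) / (1 + Real.exp x) ^ 3 := by
    show deriv (deriv _) x = _
    rw [hderiv, h2.deriv]
  rw [this]
  apply div_neg_of_neg_of_pos
  · have h1 : 1 < Real.exp x := Real.one_lt_exp_iff.mpr hx
    nlinarith [Real.exp_pos x]
  · positivity


theorem stmt_0' (n : ℕ) (hn : 2 ≤ n) (α β : ℝ) (hα : 0 < α) (hβ : 0 < β)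
    (d δ : ℕ → ℝ) (hd : ∀ i ∈ Finset.range (n - 1), 0 < d i)
    (hδ : ∀ i ∈ Finset.range (n - 1), 0 < δ i) :
    (1:ℝ) + ∑ i ∈ Finset.range (n - 1), ouF (α * d i + β * δ i) ≤
      1 + ((n : ℝ) - 1) * ouF ((∑ i ∈ Finset.range (n-1), (α * d i + β * δ i)) / ((n : ℝ) - 1)) ∧
    ((1:ℝ) + ∑ i ∈ Finset.range (n - 1), ouF (α * d i + β * δ i) =
      1 + ((n : ℝ) - 1) * ouF ((∑ i ∈ Finset.range (n-1), (α * d i + β * δ i)) / ((n : ℝ) - 1)) ↔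
      ∀ i ∈ Finset.range (n - 1),
        α * d i + β * δ i = (∑ i ∈ Finset.range (n-1), (α * d i + β * δ i)) / ((n : ℝ) - 1)) := by
  set N : ℝ := (n : ℝ) - 1 with hNdef
  have hN : (0:ℝ) < N := by
    have : (2:ℝ) ≤ (n:ℝ) := by exact_mod_cast hn
    linarith
  set t := Finset.range (n - 1) with ht
  set p : ℕ → ℝ := fun i => α * d i + β * δ i with hp
  have hcard : ((t.card : ℝ)) = N := by
    rw [ht, Finset.card_range, hNdef]
    have : (1:ℕ) ≤ n := by omega
    push_cast [Nat.cast_sub this]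
    ring
  have h₀ : ∀ i ∈ t, (0:ℝ) < 1 / N := fun i _ => by positivity
  have h₁ : ∑ i ∈ t, (1:ℝ) / N = 1 := by
    rw [Finset.sum_const, nsmul_eq_mul, hcard]
    field_simp
  have hmem : ∀ i ∈ t, p i ∈ Set.Ici (0:ℝ) := by
    intro i hi
    have := hd i hi; have := hδ i hi
    simp only [Set.mem_Ici, hp]
    nlinarith
  have hcm : ∑ i ∈ t, (1 / N) • p i = (∑ i ∈ t, p i) / N := by
    simp only [smul_eq_mul, ← Finset.mul_sum]
    ring
  have hle : ∑ i ∈ t, (1 / N) • ouF (p i) ≤ ouF ((∑ i ∈ t, p i) / N) := by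
    rw [← hcm]
    exact ouF_concave.concaveOn.le_map_sum (fun i hi => (h₀ i hi).le) h₁ hmem
  have hsum : ∑ i ∈ t, (1 / N) • ouF (p i) = (∑ i ∈ t, ouF (p i)) / N := by
    simp only [smul_eq_mul, ← Finset.mul_sum]
    ring
  constructor
  · have : (∑ i ∈ t, ouF (p i)) / N ≤ ouF ((∑ i ∈ t, p i) / N) := by
      rw [← hsum]; exact hle
    have := (div_le_iff₀ hN).mp this
    linarith [this]
  · have heqiff := ouF_concave.map_sum_eq_iff h₀ h₁ hmem
    rw [hcm] at heqiff
    constructor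
    · intro h
      have h' : ouF ((∑ i ∈ t, p i) / N) = ∑ i ∈ t, (1 / N) • ouF (p i) := by
        rw [hsum]
        field_simp
        linarith
      intro i hi
      exact heqiff.mp h' i hi
    · intro h
      have h' := heqiff.mpr h
      rw [hsum] at h'
      have : ∑ i ∈ t, ouF (p i) = N * ouF ((∑ i ∈ t, p i) / N) := by
        field_simp at h'
        linarith
      linarith


theorem stmt_0 (n : ℕ) (hn : 2 ≤ n) (α β : ℝ) (hα : 0 < α) (hβ : 0 < β)
    (d δ : ℕ → ℝ) (hd : ∀ i ∈ Finset.range (n - 1), 0 < d i)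
    (hδ : ∀ i ∈ Finset.range (n - 1), 0 < δ i) :
    trendInfo n α β d δ ≤
      1 + ((n : ℝ) - 1) *
        ((1 - Real.exp (-(skewSize n α β d δ / ((n : ℝ) - 1)))) /
         (1 + Real.exp (-(skewSize n α β d δ / ((n : ℝ) - 1))))) ∧
    (trendInfo n α β d δ =
      1 + ((n : ℝ) - 1) *
        ((1 - Real.exp (-(skewSize n α β d δ / ((n : ℝ) - 1)))) /
         (1 + Real.exp (-(skewSize n α β d δ / ((n : ℝ) - 1))))) ↔
      ∀ i ∈ Finset.range (n - 1),
        α * d i + β * δ i = skewSize n α β d δ / ((n : ℝ) - 1)) :=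
  stmt_0' n hn α β hα hβ d δ hd hδ
end

section
/- Let n ≥ 2 and let q_1,…,q_{n−1} ∈ (0,1). Define the n×n real matrix C by C_{ii} = 1 and C_{ij} = C_{ji} = ∏_{k=i}^{j−1} q_k for 1 ≤ i < j ≤ n, and define the n×n tridiagonal matrix T by T_{11} = 1/(1−q_1²), T_{nn} = 1/(1−q_{n−1}²), T_{kk} = 1/(1−q_k²) + q_{k−1}²/(1−q_{k−1}²) for 2 ≤ k ≤ n−1, T_{k,k+1} = T_{k+1,k} = −q_k/(1−q_k²) for 1 ≤ k ≤ n−1, and T_{ij} = 0 whenever |i−j| ≥ 2. Then C·T = I, so C is invertible with C⁻¹ = T. -/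
private lemma sum2' {n : ℕ} (f : Fin n → ℝ) (a b : Fin n) (hab : a ≠ b)
    (h0 : ∀ k, k ≠ a → k ≠ b → f k = 0) : ∑ k, f k = f a + f b := by
  classical
  rw [← Finset.sum_subset (Finset.subset_univ ({a, b} : Finset (Fin n)))
    (by intro k _ hk; simp only [Finset.mem_insert, Finset.mem_singleton, not_or] at hk
        exact h0 k hk.1 hk.2)]
  rw [Finset.sum_insert (by simp [hab]), Finset.sum_singleton]

private lemma sum3' {n : ℕ} (f : Fin n → ℝ) (a b c : Fin n) (hab : a ≠ b) (hac : a ≠ c)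
    (hbc : b ≠ c) (h0 : ∀ k, k ≠ a → k ≠ b → k ≠ c → f k = 0) :
    ∑ k, f k = f a + f b + f c := by
  classical
  rw [← Finset.sum_subset (Finset.subset_univ ({a, b, c} : Finset (Fin n)))
    (by intro k _ hk
        simp only [Finset.mem_insert, Finset.mem_singleton, not_or] at hk
        exact h0 k hk.1 hk.2.1 hk.2.2)]
  rw [Finset.sum_insert (by simp [hab, hac]), Finset.sum_insert (by simp [hbc]),
    Finset.sum_singleton, add_assoc]

theorem stmt_2 (n : ℕ) (hn : 2 ≤ n) (q : ℕ → ℝ)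
    (hq : ∀ k < n - 1, q k ∈ Set.Ioo (0 : ℝ) 1)
    (C T : Matrix (Fin n) (Fin n) ℝ)
    (hC : ∀ i j : Fin n, C i j =
      ∏ k ∈ Finset.Ico (min (i : ℕ) (j : ℕ)) (max (i : ℕ) (j : ℕ)), q k)
    (hT : ∀ i j : Fin n, T i j =
      if (i : ℕ) = (j : ℕ) then
        (if (i : ℕ) = 0 then 1 / (1 - q 0 ^ 2)
         else if (i : ℕ) = n - 1 then 1 / (1 - q (n - 2) ^ 2)
         else 1 / (1 - q (i : ℕ) ^ 2) + q ((i : ℕ) - 1) ^ 2 / (1 - q ((i : ℕ) - 1) ^ 2))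
      else if (i : ℕ) + 1 = (j : ℕ) then -q (i : ℕ) / (1 - q (i : ℕ) ^ 2)
      else if (j : ℕ) + 1 = (i : ℕ) then -q (j : ℕ) / (1 - q (j : ℕ) ^ 2)
      else 0) :
    C * T = 1 ∧ IsUnit C ∧ C⁻¹ = T := by
  have hden : ∀ k, k < n - 1 → 1 - q k ^ 2 ≠ 0 := by
    intro k hk
    obtain ⟨h1, h2⟩ := hq k hk
    nlinarith
  have prod_single : ∀ a : ℕ, ∏ k ∈ Finset.Ico a (a + 1), q k = q a := by
    intro a
    rw [Finset.prod_Ico_succ_top (le_refl a), Finset.Ico_self, Finset.prod_empty, one_mul]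
  have hCT : C * T = 1 := by
    ext i j
    rw [Matrix.mul_apply, Matrix.one_apply]
    have hjlt := j.isLt
    have hilt := i.isLt
    by_cases hj0 : (j : ℕ) = 0
    · -- j = 0 : nonzero entries at k = j and k = j+1
      have hb : (1 : ℕ) < n := by omega
      rw [sum2' (fun k => C i k * T k j) j ⟨1, hb⟩
        (by intro h; have : (j : ℕ) = 1 := congrArg Fin.val h; omega)
        (by intro k h1 h2
            have hklt := k.isLt
            have v1 : (k : ℕ) ≠ (j : ℕ) := fun h => h1 (Fin.ext h)
            have v2 : (k : ℕ) ≠ 1 := fun h => h2 (Fin.ext h)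
            show C i k * T k j = 0
            rw [hT, if_neg v1, if_neg (by omega), if_neg (by omega), mul_zero])]
      rw [hC, hC, hT, hT]
      simp only [Fin.val_mk]
      rw [if_pos trivial, if_pos hj0, if_neg (by omega : ¬(1 : ℕ) = (j : ℕ)),
        if_neg (by omega : ¬(1 : ℕ) + 1 = (j : ℕ)), if_pos (by omega : (j : ℕ) + 1 = 1)]
      rw [hj0]
      have h0 : 1 - q 0 ^ 2 ≠ 0 := hden 0 (by omega)
      by_cases hij : (i : ℕ) = (j : ℕ)
      · rw [if_pos (Fin.ext hij)]
        rw [show min (i : ℕ) 0 = 0 by omega, show max (i : ℕ) 0 = 0 by omega,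
          show min (i : ℕ) 1 = 0 by omega, show max (i : ℕ) 1 = 1 by omega,
          Finset.Ico_self, Finset.prod_empty, show (1 : ℕ) = 0 + 1 from rfl, prod_single]
        field_simp
        ring
      · rw [if_neg (fun h => hij (congrArg Fin.val h))]
        have hi1 : 1 ≤ (i : ℕ) := by omega
        rw [show min (i : ℕ) 0 = 0 by omega, show max (i : ℕ) 0 = (i : ℕ) by omega,
          show min (i : ℕ) 1 = 1 by omega, show max (i : ℕ) 1 = (i : ℕ) by omega]
        rw [← Finset.prod_Ico_consecutive q (by omega : (0 : ℕ) ≤ 1) hi1,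
          show (1 : ℕ) = 0 + 1 from rfl, prod_single]
        field_simp
        ring
    · by_cases hjn : (j : ℕ) = n - 1
      · -- j = n-1 : nonzero entries at k = j-1 and k = j
        have hj1 : 1 ≤ (j : ℕ) := by omega
        have hb : (j : ℕ) - 1 < n := by omega
        rw [sum2' (fun k => C i k * T k j) ⟨(j : ℕ) - 1, hb⟩ j
          (by intro h; have : (j : ℕ) - 1 = (j : ℕ) := congrArg Fin.val h; omega)
          (by intro k h1 h2
              have hklt := k.isLt
              have v1 : (k : ℕ) ≠ (j : ℕ) - 1 := fun h => h1 (Fin.ext h)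
              have v2 : (k : ℕ) ≠ (j : ℕ) := fun h => h2 (Fin.ext h)
              show C i k * T k j = 0
              rw [hT, if_neg v2, if_neg (by omega), if_neg (by omega), mul_zero])]
        rw [hC, hC, hT, hT]
        simp only [Fin.val_mk]
        rw [if_neg (by omega : ¬(j : ℕ) - 1 = (j : ℕ)),
          if_pos (by omega : (j : ℕ) - 1 + 1 = (j : ℕ)), if_pos trivial, if_neg hj0,
          if_pos hjn]
        have hqlt : (j : ℕ) - 1 < n - 1 := by omega
        have h0 : 1 - q ((j : ℕ) - 1) ^ 2 ≠ 0 := hden _ hqlt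
        rw [show n - 2 = (j : ℕ) - 1 by omega]
        by_cases hij : (i : ℕ) = (j : ℕ)
        · rw [if_pos (Fin.ext hij)]
          rw [show min (i : ℕ) ((j : ℕ) - 1) = (j : ℕ) - 1 by omega,
            show max (i : ℕ) ((j : ℕ) - 1) = (j : ℕ) by omega,
            show min (i : ℕ) (j : ℕ) = (j : ℕ) by omega,
            show max (i : ℕ) (j : ℕ) = (j : ℕ) by omega,
            Finset.Ico_self, Finset.prod_empty,
            show Finset.Ico ((j : ℕ) - 1) (j : ℕ)
                = Finset.Ico ((j : ℕ) - 1) (((j : ℕ) - 1) + 1) from by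
              rw [show ((j : ℕ) - 1) + 1 = (j : ℕ) by omega],
            prod_single]
          field_simp
          ring
        · rw [if_neg (fun h => hij (congrArg Fin.val h))]
          have hilt' : (i : ℕ) < (j : ℕ) := by omega
          rw [show min (i : ℕ) ((j : ℕ) - 1) = (i : ℕ) by omega,
            show max (i : ℕ) ((j : ℕ) - 1) = (j : ℕ) - 1 by omega,
            show min (i : ℕ) (j : ℕ) = (i : ℕ) by omega,
            show max (i : ℕ) (j : ℕ) = (j : ℕ) by omega]
          rw [show Finset.Ico (i : ℕ) (j : ℕ)
                = Finset.Ico (i : ℕ) (((j : ℕ) - 1) + 1) from by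
              rw [show ((j : ℕ) - 1) + 1 = (j : ℕ) by omega],
            Finset.prod_Ico_succ_top (by omega : (i : ℕ) ≤ (j : ℕ) - 1)]
          field_simp
          ring
      · -- 1 ≤ j ≤ n-2 : three nonzero entries
        have hj1 : 1 ≤ (j : ℕ) := by omega
        have hj2 : (j : ℕ) < n - 1 := by omega
        have hb1 : (j : ℕ) - 1 < n := by omega
        have hb2 : (j : ℕ) + 1 < n := by omega
        rw [sum3' (fun k => C i k * T k j) ⟨(j : ℕ) - 1, hb1⟩ j ⟨(j : ℕ) + 1, hb2⟩
          (by intro h; have : (j : ℕ) - 1 = (j : ℕ) := congrArg Fin.val h; omega)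
          (by intro h; have : (j : ℕ) - 1 = (j : ℕ) + 1 := congrArg Fin.val h; omega)
          (by intro h; have : (j : ℕ) = (j : ℕ) + 1 := congrArg Fin.val h; omega)
          (by intro k h1 h2 h3
              have hklt := k.isLt
              have v1 : (k : ℕ) ≠ (j : ℕ) - 1 := fun h => h1 (Fin.ext h)
              have v2 : (k : ℕ) ≠ (j : ℕ) := fun h => h2 (Fin.ext h)
              have v3 : (k : ℕ) ≠ (j : ℕ) + 1 := fun h => h3 (Fin.ext h)
              show C i k * T k j = 0
              rw [hT, if_neg v2, if_neg (by omega), if_neg (by omega), mul_zero])]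
        rw [hC, hC, hC, hT, hT, hT]
        simp only [Fin.val_mk]
        rw [if_neg (by omega : ¬(j : ℕ) - 1 = (j : ℕ)),
          if_pos (by omega : (j : ℕ) - 1 + 1 = (j : ℕ)),
          if_pos trivial, if_neg hj0, if_neg hjn,
          if_neg (by omega : ¬(j : ℕ) + 1 = (j : ℕ)),
          if_neg (by omega : ¬(j : ℕ) + 1 + 1 = (j : ℕ)),
          if_pos trivial]
        have h0 : 1 - q ((j : ℕ) - 1) ^ 2 ≠ 0 := hden _ (by omega)
        have h1 : 1 - q (j : ℕ) ^ 2 ≠ 0 := hden _ hj2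
        by_cases hij : (i : ℕ) = (j : ℕ)
        · rw [if_pos (Fin.ext hij)]
          rw [show min (i : ℕ) ((j : ℕ) - 1) = (j : ℕ) - 1 by omega,
            show max (i : ℕ) ((j : ℕ) - 1) = (j : ℕ) by omega,
            show min (i : ℕ) (j : ℕ) = (j : ℕ) by omega,
            show max (i : ℕ) (j : ℕ) = (j : ℕ) by omega,
            show min (i : ℕ) ((j : ℕ) + 1) = (j : ℕ) by omega,
            show max (i : ℕ) ((j : ℕ) + 1) = (j : ℕ) + 1 by omega,
            Finset.Ico_self, Finset.prod_empty, prod_single]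
          rw [show Finset.Ico ((j : ℕ) - 1) (j : ℕ)
                = Finset.Ico ((j : ℕ) - 1) (((j : ℕ) - 1) + 1) from by
              rw [show ((j : ℕ) - 1) + 1 = (j : ℕ) by omega],
            prod_single]
          field_simp
          ring
        · rw [if_neg (fun h => hij (congrArg Fin.val h))]
          rcases lt_or_gt_of_ne hij with hlt | hgt
          · -- i < j
            rw [show min (i : ℕ) ((j : ℕ) - 1) = (i : ℕ) by omega,
              show max (i : ℕ) ((j : ℕ) - 1) = (j : ℕ) - 1 by omega,
              show min (i : ℕ) (j : ℕ) = (i : ℕ) by omega,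
              show max (i : ℕ) (j : ℕ) = (j : ℕ) by omega,
              show min (i : ℕ) ((j : ℕ) + 1) = (i : ℕ) by omega,
              show max (i : ℕ) ((j : ℕ) + 1) = (j : ℕ) + 1 by omega]
            rw [Finset.prod_Ico_succ_top (by omega : (i : ℕ) ≤ (j : ℕ)),
              show Finset.Ico (i : ℕ) (j : ℕ)
                  = Finset.Ico (i : ℕ) (((j : ℕ) - 1) + 1) from by
                rw [show ((j : ℕ) - 1) + 1 = (j : ℕ) by omega],
              Finset.prod_Ico_succ_top (by omega : (i : ℕ) ≤ (j : ℕ) - 1)]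
            field_simp
            ring
          · -- i > j
            rw [show min (i : ℕ) ((j : ℕ) - 1) = (j : ℕ) - 1 by omega,
              show max (i : ℕ) ((j : ℕ) - 1) = (i : ℕ) by omega,
              show min (i : ℕ) (j : ℕ) = (j : ℕ) by omega,
              show max (i : ℕ) (j : ℕ) = (i : ℕ) by omega,
              show min (i : ℕ) ((j : ℕ) + 1) = (j : ℕ) + 1 by omega,
              show max (i : ℕ) ((j : ℕ) + 1) = (i : ℕ) by omega]
            rw [← Finset.prod_Ico_consecutive q (by omega : (j : ℕ) - 1 ≤ (j : ℕ))
                (by omega : (j : ℕ) ≤ (i : ℕ)),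
              ← Finset.prod_Ico_consecutive q (by omega : (j : ℕ) ≤ (j : ℕ) + 1)
                (by omega : (j : ℕ) + 1 ≤ (i : ℕ)),
              show Finset.Ico ((j : ℕ) - 1) (j : ℕ)
                  = Finset.Ico ((j : ℕ) - 1) (((j : ℕ) - 1) + 1) by
                rw [show ((j : ℕ) - 1) + 1 = (j : ℕ) by omega],
              prod_single, prod_single]
            field_simp
            ring
  refine ⟨hCT, ?_, Matrix.inv_eq_right_inv hCT⟩
  exact (Matrix.isUnit_iff_isUnit_det C).mpr (Matrix.isUnit_det_of_right_inverse hCT)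
end

section
/- Let n ≥ 2 and let q_1,…,q_{n−1} ∈ (0,1). Let C be the n×n real matrix with C_{ii} = 1 and C_{ij} = C_{ji} = ∏_{k=i}^{j−1} q_k for i < j. Then C is invertible and the sum of all entries of C⁻¹, i.e. 1ᵀ C⁻¹ 1 where 1 is the all-ones vector, equals 1 + Σ_{i=1}^{n−1} (1 − q_i)/(1 + q_i). -/
noncomputable def fca (q : ℕ → ℝ) (a b : ℕ) : ℝ :=
  ∏ k ∈ Finset.Ico (min a b) (max a b), q k

noncomputable def dd (n : ℕ) (q : ℕ → ℝ) (i : ℕ) : ℝ :=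
  (if 1 ≤ i then (q (i-1))^2/(1-(q (i-1))^2) else 0) +
  (if i + 2 ≤ n then (q i)^2/(1-(q i)^2) else 0) + 1

noncomputable def ee (q : ℕ → ℝ) (i : ℕ) : ℝ := -(q i)/(1-(q i)^2)

noncomputable def BB (n : ℕ) (q : ℕ → ℝ) (i j : ℕ) : ℝ :=
  (if j = i then dd n q i else 0) + (if j = i+1 then ee q i else 0) +
  (if i = j+1 then ee q j else 0)

lemma fca_self (q : ℕ → ℝ) (a : ℕ) : fca q a a = 1 := by
  simp [fca]

lemma fca_symm (q : ℕ → ℝ) (a b : ℕ) : fca q a b = fca q b a := by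
  simp [fca, min_comm, max_comm]

lemma fca_step (q : ℕ → ℝ) {a b : ℕ} (h : a < b) :
    fca q a b = q a * fca q (a+1) b := by
  unfold fca
  rw [min_eq_left h.le, max_eq_right h.le, min_eq_left h, max_eq_right h,
    Finset.prod_eq_prod_Ico_succ_bot h]

lemma fca_step' (q : ℕ → ℝ) {a b : ℕ} (h : b ≤ a) :
    fca q (a+1) b = q a * fca q a b := by
  unfold fca
  rw [min_eq_right h, max_eq_left h,
    min_eq_right (Nat.le_succ_of_le h), max_eq_left (Nat.le_succ_of_le h),
    Finset.prod_Ico_succ_top h, mul_comm]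

lemma mul_entry (n : ℕ) (q : ℕ → ℝ) (hq : ∀ k < n - 1, q k ∈ Set.Ioo (0:ℝ) 1)
    {i j : ℕ} (hi : i < n) (hj : j < n) :
    ∑ k ∈ Finset.range n, BB n q i k * fca q k j = if i = j then 1 else 0 := by
  have hne : ∀ k, k < n - 1 → 1 - (q k)^2 ≠ 0 := by
    intro k hk
    obtain ⟨h0, h1⟩ := hq k hk
    nlinarith
  have hsum : ∑ k ∈ Finset.range n, BB n q i k * fca q k j
      = (∑ k ∈ Finset.range n, (if k = i then dd n q i * fca q i j else 0))
      + (∑ k ∈ Finset.range n, (if k = i+1 then ee q i * fca q (i+1) j else 0))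
      + (∑ k ∈ Finset.range n, (if i = k+1 then ee q k * fca q k j else 0)) := by
    rw [← Finset.sum_add_distrib, ← Finset.sum_add_distrib]
    refine Finset.sum_congr rfl fun k _ => ?_
    unfold BB
    rw [add_mul, add_mul]
    congr 1
    · congr 1
      · split_ifs with h
        · subst h; rfl
        · exact zero_mul _
      · split_ifs with h
        · subst h; rfl
        · exact zero_mul _
    · split_ifs with h
      · subst h; rfl
      · exact zero_mul _
  rw [hsum]
  simp only [Finset.sum_ite_eq', Finset.mem_range, hi, if_true]
  obtain _ | m := i
  · -- i = 0
    rw [show (∑ k ∈ Finset.range n, if 0 = k+1 then ee q k * fca q k j else 0) = 0 by simp,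
      add_zero]
    unfold dd ee
    rw [if_neg (by omega : ¬ 1 ≤ 0)]
    obtain _ | j' := j
    · -- j = 0
      rw [fca_self, if_pos rfl, fca_step' q (le_refl 0), fca_self]
      by_cases h2 : 2 ≤ n
      · have hne0 := hne 0 (by omega)
        rw [if_pos (by omega : 0 + 2 ≤ n), if_pos (by omega : 0 + 1 < n)]
        field_simp
        ring
      · rw [if_neg (by omega : ¬ 0 + 2 ≤ n), if_neg (by omega : ¬ 0 + 1 < n)]
        norm_num
    · -- j ≥ 1
      have h2 : 2 ≤ n := by omega
      have hne0 := hne 0 (by omega)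
      rw [if_pos (by omega : 0 + 2 ≤ n), if_pos (by omega : 0 + 1 < n),
        if_neg (by omega : ¬ 0 = j' + 1), fca_step q (by omega : 0 < j' + 1)]
      field_simp
      ring
  · -- i = m + 1
    have hnem := hne m (by omega)
    rw [show (∑ k ∈ Finset.range n, if m + 1 = k+1 then ee q k * fca q k j else 0)
        = ee q m * fca q m j by
      simp only [Nat.add_right_cancel_iff]
      rw [Finset.sum_ite_eq (Finset.range n) m, if_pos (Finset.mem_range.mpr (by omega))]]
    unfold dd ee
    rw [if_pos (by omega : 1 ≤ m + 1)]
    simp only [Nat.add_sub_cancel]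
    rcases lt_trichotomy j (m+1) with hlt | heq | hgt
    · -- j < m + 1, i.e. j ≤ m
      rw [if_neg (by omega : ¬ m + 1 = j), fca_step' q (by omega : j ≤ m),
        fca_step' q (by omega : j ≤ m + 1), fca_step' q (by omega : j ≤ m)]
      by_cases h2 : m + 1 + 1 < n
      · have hnem1 := hne (m+1) (by omega)
        rw [if_pos (by omega : m + 1 + 2 ≤ n), if_pos h2]
        field_simp
        ring
      · rw [if_neg (by omega : ¬ m + 1 + 2 ≤ n), if_neg h2]
        field_simp
        ring
    · -- j = m + 1
      subst heq
      rw [if_pos rfl, fca_self, fca_step' q (le_refl (m+1)), fca_self,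
        fca_step q (by omega : m < m + 1), fca_self]
      by_cases h2 : m + 1 + 1 < n
      · have hnem1 := hne (m+1) (by omega)
        rw [if_pos (by omega : m + 1 + 2 ≤ n), if_pos h2]
        field_simp
        ring
      · rw [if_neg (by omega : ¬ m + 1 + 2 ≤ n), if_neg h2]
        field_simp
        ring
    · -- j > m + 1
      have h2 : m + 1 + 1 < n := by omega
      have hnem1 := hne (m+1) (by omega)
      rw [if_neg (by omega : ¬ m + 1 = j), if_pos (by omega : m + 1 + 2 ≤ n), if_pos h2,
        fca_step q (by omega : m + 1 < j), fca_step q (by omega : m < j),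
        fca_step q (by omega : m + 1 < j)]
      field_simp
      ring

noncomputable def gg (q : ℕ → ℝ) (k : ℕ) : ℝ := (q k)^2/(1-(q k)^2) + ee q k

lemma sum_BB (n : ℕ) (hn : 2 ≤ n) (q : ℕ → ℝ)
    (hq : ∀ k < n - 1, q k ∈ Set.Ioo (0:ℝ) 1) :
    ∑ i ∈ Finset.range n, ∑ j ∈ Finset.range n, BB n q i j
      = 1 + ∑ i ∈ Finset.range (n-1), (1 - q i) / (1 + q i) := by
  have hne : ∀ k, k < n - 1 → 1 - (q k)^2 ≠ 0 := by
    intro k hk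
    obtain ⟨h0, h1⟩ := hq k hk
    nlinarith
  have h1p : ∀ k, k < n - 1 → 1 + q k ≠ 0 := by
    intro k hk
    obtain ⟨h0, h1⟩ := hq k hk
    nlinarith
  have hrow : ∀ i ∈ Finset.range n, ∑ j ∈ Finset.range n, BB n q i j
      = 1 + (if 1 ≤ i then gg q (i-1) else 0) + (if i + 2 ≤ n then gg q i else 0) := by
    intro i hi
    rw [Finset.mem_range] at hi
    have hsplit : ∑ j ∈ Finset.range n, BB n q i j
        = (∑ j ∈ Finset.range n, (if j = i then dd n q i else 0))
        + (∑ j ∈ Finset.range n, (if j = i+1 then ee q i else 0))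
        + (∑ j ∈ Finset.range n, (if i = j+1 then ee q j else 0)) := by
      rw [← Finset.sum_add_distrib, ← Finset.sum_add_distrib]
      rfl
    rw [hsplit]
    simp only [Finset.sum_ite_eq', Finset.mem_range, hi, if_true]
    obtain _ | m := i
    · rw [show (∑ j ∈ Finset.range n, if 0 = j+1 then ee q j else 0) = 0 by simp]
      unfold dd gg
      split_ifs <;> first | ring1 | (exfalso; omega)
    · rw [show (∑ j ∈ Finset.range n, if m + 1 = j+1 then ee q j else 0) = ee q m by
        simp only [Nat.add_right_cancel_iff]
        rw [Finset.sum_ite_eq (Finset.range n) m, if_pos (Finset.mem_range.mpr (by omega))]]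
      unfold dd gg
      simp only [Nat.add_sub_cancel]
      split_ifs <;> first | ring1 | (exfalso; omega)
  rw [Finset.sum_congr rfl hrow]
  rw [Finset.sum_add_distrib, Finset.sum_add_distrib]
  have e1 : ∑ i ∈ Finset.range n, (1:ℝ) = n := by simp
  have e2 : ∑ i ∈ Finset.range n, (if 1 ≤ i then gg q (i-1) else 0)
      = ∑ i ∈ Finset.range (n-1), gg q i := by
    obtain ⟨m, rfl⟩ : ∃ m, n = m + 1 := ⟨n - 1, by omega⟩
    rw [Finset.sum_range_succ']
    simp
  have e3 : ∑ i ∈ Finset.range n, (if i + 2 ≤ n then gg q i else 0)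
      = ∑ i ∈ Finset.range (n-1), gg q i := by
    rw [← Finset.sum_subset (Finset.range_subset_range.mpr (by omega : n - 1 ≤ n))
      (fun x _ hx => by rw [if_neg (by simp at hx ⊢; omega)])]
    refine Finset.sum_congr rfl fun x hx => ?_
    rw [Finset.mem_range] at hx
    rw [if_pos (by omega)]
  have e4 : ∑ i ∈ Finset.range (n-1), (1 - q i) / (1 + q i)
      = ∑ i ∈ Finset.range (n-1), (1 + 2 * gg q i) := by
    refine Finset.sum_congr rfl fun k hk => ?_
    rw [Finset.mem_range] at hk
    have := hne k hk
    have := h1p k hk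
    unfold gg ee
    field_simp
    ring
  rw [e1, e2, e3, e4, Finset.sum_add_distrib, ← Finset.mul_sum]
  simp only [Finset.sum_const, Finset.card_range, nsmul_eq_mul, mul_one]
  rw [Nat.cast_sub (by omega : 1 ≤ n), Nat.cast_one]
  ring


theorem stmt_3 (n : ℕ) (hn : 2 ≤ n) (q : ℕ → ℝ)
    (hq : ∀ k < n - 1, q k ∈ Set.Ioo (0 : ℝ) 1)
    (C : Matrix (Fin n) (Fin n) ℝ)
    (hC : ∀ i j : Fin n, C i j =
      ∏ k ∈ Finset.Ico (min (i : ℕ) (j : ℕ)) (max (i : ℕ) (j : ℕ)), q k) :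
    IsUnit C ∧
    ∑ i : Fin n, ∑ j : Fin n, C⁻¹ i j =
      1 + ∑ i ∈ Finset.range (n - 1), (1 - q i) / (1 + q i) := by
  set B : Matrix (Fin n) (Fin n) ℝ := Matrix.of (fun i j => BB n q (i:ℕ) (j:ℕ)) with hB
  have hBC : B * C = 1 := by
    ext i j
    rw [Matrix.mul_apply]
    have hterm : ∀ k : Fin n, B i k * C k j = BB n q (i:ℕ) (k:ℕ) * fca q (k:ℕ) (j:ℕ) :=
      fun k => by rw [hC]; rfl
    rw [Finset.sum_congr rfl (fun k _ => hterm k),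
      Fin.sum_univ_eq_sum_range (fun k => BB n q (i:ℕ) k * fca q k (j:ℕ)) n,
      mul_entry n q hq i.isLt j.isLt, Matrix.one_apply]
    simp [Fin.ext_iff]
  have hCB : C * B = 1 := mul_eq_one_comm.mp hBC
  refine ⟨⟨⟨C, B, hCB, hBC⟩, rfl⟩, ?_⟩
  rw [Matrix.inv_eq_left_inv hBC]
  have hrow : ∀ i : Fin n, ∑ j : Fin n, B i j = ∑ j ∈ Finset.range n, BB n q (i:ℕ) j :=
    fun i => Fin.sum_univ_eq_sum_range (fun j => BB n q (i:ℕ) j) n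
  rw [Finset.sum_congr rfl (fun i _ => hrow i),
    Fin.sum_univ_eq_sum_range (fun i => ∑ j ∈ Finset.range n, BB n q i j) n]
  exact sum_BB n hn q hq
end

section
/- For a fixed λ > 0, the sequence n ↦ M_θ(n;λ) := 1 + (n−1)·(1 − exp(−λ/(n−1)))/(1 + exp(−λ/(n−1))), n ≥ 2, is strictly increasing in n. -/
/-- The Fisher information on the trend of the optimal (skewed-equidistant)
`n`-point monotonic design with skewed design-region size `λ`. -/
noncomputable def MthetaOpt (n : ℕ) (lam : ℝ) : ℝ :=
  1 + ((n : ℝ) - 1) *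
    ((1 - Real.exp (-(lam / ((n : ℝ) - 1)))) / (1 + Real.exp (-(lam / ((n : ℝ) - 1)))))

lemma aux_strictMono (lam : ℝ) (hlam : 0 < lam) :
    StrictMonoOn (fun x : ℝ => x * ((1 - Real.exp (-(lam / x))) / (1 + Real.exp (-(lam / x)))))
      (Set.Ioi 0) := by
  set f : ℝ → ℝ := fun x : ℝ =>
    x * ((1 - Real.exp (-(lam / x))) / (1 + Real.exp (-(lam / x)))) with hf
  have key : ∀ x ∈ Set.Ioi (0:ℝ), HasDerivAt f
      (1 * ((1 - Real.exp (-(lam / x))) / (1 + Real.exp (-(lam / x)))) +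
        x * ((-(Real.exp (-(lam / x)) * (lam / x ^ 2)) * (1 + Real.exp (-(lam / x))) -
          (1 - Real.exp (-(lam / x))) * (Real.exp (-(lam / x)) * (lam / x ^ 2))) /
          (1 + Real.exp (-(lam / x))) ^ 2)) x := by
    intro x hx
    have hx0 : (0:ℝ) < x := hx
    have hxne : x ≠ 0 := ne_of_gt hx0
    have h1 : HasDerivAt (fun x : ℝ => -(lam / x)) (lam / x ^ 2) x := by
      simp only [div_eq_mul_inv]
      have := ((hasDerivAt_inv hxne).const_mul lam).neg
      convert this using 1
      · rfl
      · rfl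
      · rfl
      · ring
    have h2 : HasDerivAt (fun x : ℝ => Real.exp (-(lam / x)))
        (Real.exp (-(lam / x)) * (lam / x ^ 2)) x := h1.exp
    have h3 := (hasDerivAt_const x (1:ℝ)).sub h2
    have h4 := (hasDerivAt_const x (1:ℝ)).add h2
    have hne : (1 + Real.exp (-(lam / x))) ≠ 0 := by positivity
    have h5 := h3.div h4 hne
    have h6 := (hasDerivAt_id x).mul h5
    simp only [zero_sub, zero_add, id_eq] at h6
    exact h6
  have hpos : ∀ x ∈ Set.Ioi (0:ℝ),
      0 < 1 * ((1 - Real.exp (-(lam / x))) / (1 + Real.exp (-(lam / x)))) +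
        x * ((-(Real.exp (-(lam / x)) * (lam / x ^ 2)) * (1 + Real.exp (-(lam / x))) -
          (1 - Real.exp (-(lam / x))) * (Real.exp (-(lam / x)) * (lam / x ^ 2))) /
          (1 + Real.exp (-(lam / x))) ^ 2) := by
    intro x hx
    have hx0 : (0:ℝ) < x := hx
    set e := Real.exp (-(lam / x)) with he
    have hep : 0 < e := Real.exp_pos _
    have hne : (1 + e) ≠ 0 := by positivity
    have hEe : e * Real.exp (lam / x) = 1 := by
      rw [he, ← Real.exp_add]; simp
    have hsinh : lam / x < Real.sinh (lam / x) := (Real.self_lt_sinh_iff).mpr (by positivity)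
    have hsinh' : lam / x < (Real.exp (lam / x) - e) / 2 := by
      rwa [Real.sinh_eq] at hsinh
    have keyineq : 2 * lam * e < x * (1 - e ^ 2) := by
      have h2 : (x * e) * (lam / x) < (x * e) * ((Real.exp (lam / x) - e) / 2) :=
        mul_lt_mul_of_pos_left hsinh' (mul_pos hx0 hep)
      have h2' : lam * e = (x * e) * (lam / x) := by field_simp
      have h3 : x * e * Real.exp (lam / x) = x := by rw [mul_assoc, hEe, mul_one]
      nlinarith [h2, h3, h2']
    have heq : 1 * ((1 - e) / (1 + e)) +
        x * ((-(e * (lam / x ^ 2)) * (1 + e) - (1 - e) * (e * (lam / x ^ 2))) / (1 + e) ^ 2)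
        = (x * (1 - e ^ 2) - 2 * lam * e) / (x * (1 + e) ^ 2) := by
      field_simp
      ring
    rw [heq]
    apply div_pos (by linarith) (by positivity)
  exact strictMonoOn_of_deriv_pos (convex_Ioi 0)
    (fun x hx => (key x hx).continuousAt.continuousWithinAt)
    (fun x hx => by rw [(key x (by simpa using hx)).deriv]; exact hpos x (by simpa using hx))

theorem stmt_5 (lam : ℝ) (hlam : 0 < lam) :
    ∀ m n : ℕ, 2 ≤ m → m < n → MthetaOpt m lam < MthetaOpt n lam := by
  intro m n hm hmn
  have hm1 : (0:ℝ) < (m : ℝ) - 1 := by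
    have : (2:ℝ) ≤ m := by exact_mod_cast hm
    linarith
  have hn1 : (0:ℝ) < (n : ℝ) - 1 := by
    have : (m:ℝ) < n := by exact_mod_cast hmn
    linarith
  have hlt : (m:ℝ) - 1 < (n:ℝ) - 1 := by
    have : (m:ℝ) < n := by exact_mod_cast hmn
    linarith
  unfold MthetaOpt
  have := aux_strictMono lam hlam hm1 hn1 hlt
  simpa using add_lt_add_left this 1
end

section
/- For every fixed λ > 0, M_θ(n;λ) := 1 + (n−1)·(1 − exp(−λ/(n−1)))/(1 + exp(−λ/(n−1))) satisfies M_θ(n;λ) < λ/2 + 1 for every integer n ≥ 2, and M_θ(n;λ) → λ/2 + 1 as n → ∞. -/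
open Real Filter

/-- Key inequality: `2 - 2e^{-x} < x(1 + e^{-x})` for `x > 0` (i.e. `tanh(x/2) < x/2`). -/
lemma key_ineq_stmt6 (x : ℝ) (hx : 0 < x) :
    2 - 2 * Real.exp (-x) < x * (1 + Real.exp (-x)) := by
  set f : ℝ → ℝ := fun t => t + t * Real.exp (-t) + 2 * Real.exp (-t) - 2 with hf
  have hderiv : ∀ t : ℝ, HasDerivAt f (1 - (1 + t) * Real.exp (-t)) t := by
    intro t
    have h1 : HasDerivAt (fun t : ℝ => Real.exp (-t)) (-Real.exp (-t)) t := by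
      simpa [Function.comp_def] using (Real.hasDerivAt_exp (-t)).comp t (hasDerivAt_neg t)
    have h2 : HasDerivAt (fun t : ℝ => t * Real.exp (-t))
        (1 * Real.exp (-t) + t * (-Real.exp (-t))) t :=
      (hasDerivAt_id t).mul h1
    have h3 := (((hasDerivAt_id t).add h2).add (h1.const_mul 2)).sub_const 2
    exact h3.congr_deriv (by ring)
  have hmono : StrictMonoOn f (Set.Ici 0) := by
    apply strictMonoOn_of_deriv_pos (convex_Ici 0)
    · exact Continuous.continuousOn (by fun_prop)
    · intro t ht
      rw [interior_Ici] at ht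
      rw [(hderiv t).deriv]
      have hpos := Real.exp_pos (-t)
      have hlt : (1 + t) * Real.exp (-t) < 1 := by
        have h4 := Real.add_one_lt_exp (ne_of_gt (show (0:ℝ) < t from ht))
        calc (1 + t) * Real.exp (-t) < Real.exp t * Real.exp (-t) := by
              apply mul_lt_mul_of_pos_right _ hpos; linarith
          _ = 1 := by rw [← Real.exp_add]; simp
      linarith
  have h0 : f 0 < f x := hmono (le_refl (0:ℝ)) (le_of_lt hx) hx
  simp only [hf, neg_zero, Real.exp_zero, mul_one, zero_mul, zero_add] at h0
  nlinarith [h0]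

theorem stmt_6 (lam : ℝ) (hlam : 0 < lam) :
    (∀ n : ℕ, 2 ≤ n → MthetaOpt n lam < lam / 2 + 1) ∧
    Filter.Tendsto (fun n : ℕ => MthetaOpt n lam) Filter.atTop (nhds (lam / 2 + 1)) := by
  constructor
  · intro n hn
    unfold MthetaOpt
    have hm : (1:ℝ) ≤ (n:ℝ) - 1 := by
      have : (2:ℝ) ≤ (n:ℝ) := by exact_mod_cast hn
      linarith
    have hm0 : (0:ℝ) < (n:ℝ) - 1 := by linarith
    set x := lam / ((n:ℝ) - 1) with hxdef
    have hx : 0 < x := div_pos hlam hm0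
    have hd : (0:ℝ) < 1 + Real.exp (-x) := by positivity
    have hlt : (1 - Real.exp (-x)) / (1 + Real.exp (-x)) < x / 2 := by
      rw [div_lt_div_iff₀ hd two_pos]
      nlinarith [key_ineq_stmt6 x hx]
    have := mul_lt_mul_of_pos_left hlt hm0
    have hmx2 : ((n:ℝ) - 1) * x = lam := by
      rw [hxdef]; field_simp
    nlinarith [this]
  · unfold MthetaOpt
    set h : ℕ → ℝ := fun n => lam / ((n:ℝ) - 1) with hhdef
    have hm : Tendsto (fun n : ℕ => (n:ℝ) - 1) atTop atTop :=
      tendsto_atTop_add_const_right _ _ tendsto_natCast_atTop_atTop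
    have hh0 : Tendsto h atTop (nhds 0) :=
      Tendsto.div_atTop tendsto_const_nhds hm
    have hev : ∀ᶠ n : ℕ in atTop, 0 < h n := by
      filter_upwards [eventually_ge_atTop 2] with n hn
      have : (2:ℝ) ≤ (n:ℝ) := by exact_mod_cast hn
      exact div_pos hlam (by linarith)
    have hneg : Tendsto (fun n => -(h n)) atTop (nhdsWithin (0:ℝ) {0}ᶜ) := by
      apply tendsto_nhdsWithin_of_tendsto_nhds_of_eventually_within
      · simpa using hh0.neg
      · filter_upwards [hev] with n hn
        simp [Set.mem_compl_iff]
        linarith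
    have hslope : Tendsto (slope Real.exp 0) (nhdsWithin (0:ℝ) {0}ᶜ) (nhds 1) := by
      have := hasDerivAt_iff_tendsto_slope.mp (Real.hasDerivAt_exp 0)
      simpa using this
    have hE : Tendsto (fun n => slope Real.exp 0 (-(h n))) atTop (nhds 1) :=
      hslope.comp hneg
    have hexp : Tendsto (fun n => Real.exp (-(h n))) atTop (nhds 1) := by
      have : Tendsto (fun n => -(h n)) atTop (nhds 0) := by simpa using hh0.neg
      simpa [Function.comp_def] using (Real.continuous_exp.tendsto 0).comp this
    have hG : Tendsto (fun n => 1 + lam * slope Real.exp 0 (-(h n)) / (1 + Real.exp (-(h n))))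
        atTop (nhds (1 + lam * 1 / (1 + 1))) := by
      apply Tendsto.const_add
      exact ((hE.const_mul lam).div (tendsto_const_nhds.add hexp) (by norm_num))
    have heq : 1 + lam * 1 / (1 + 1) = lam / 2 + 1 := by ring
    rw [heq] at hG
    apply hG.congr'
    filter_upwards [eventually_ge_atTop 2] with n hn
    have h2 : (2:ℝ) ≤ (n:ℝ) := by exact_mod_cast hn
    have hm0 : (0:ℝ) < (n:ℝ) - 1 := by linarith
    have hhn : h n ≠ 0 := ne_of_gt (div_pos hlam hm0)
    have hs : slope Real.exp 0 (-(h n)) = (1 - Real.exp (-(h n))) / h n := by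
      rw [slope_def_field]
      field_simp
      rw [Real.exp_zero, sub_zero, div_neg, mul_div_cancel_left₀ _ hhn]
      ring
    rw [hs, hhdef]
    field_simp
end

section
/- Let n ≥ 2, α > 0, β > 0, and let d_1,…,d_{n−1}, δ_1,…,δ_{n−1} be positive reals; set q_k := exp(−α d_k − β δ_k). Let C be the n×n matrix with C_{ii} = 1 and C_{ij} = C_{ji} = ∏_{k=i}^{j−1} q_k for i < j, and let A be the n×n matrix with A_{ii} = 0 and A_{ij} = A_{ji} = −(Σ_{k=i}^{j−1} d_k)·∏_{k=i}^{j−1} q_k for i < j. Then C is invertible and (1/2)·tr(C⁻¹ A C⁻¹ A) = Σ_{i=1}^{n−1} d_i² q_i² (1 + q_i²)/(1 − q_i²)². -/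
open Finset Matrix

namespace Stmt8Aux
noncomputable section

variable (q d : ℕ → ℝ)

def c (i j : ℕ) : ℝ := ∏ k ∈ Finset.Ico i j, q k
def sd (i j : ℕ) : ℝ := ∑ k ∈ Finset.Ico i j, d k
def w (i : ℕ) : ℝ := if i = 0 then 1 else 1 - q (i-1) ^ 2

def Kf (i j : ℕ) : ℝ := (if i = j then 1 else 0) + (if j + 1 = i then -q j else 0)
def KTf (i j : ℕ) : ℝ := Kf q j i
def Lf (i j : ℕ) : ℝ := if j ≤ i then c q j i else 0
def Cf (i j : ℕ) : ℝ := c q (min i j) (max i j)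
def Af (i j : ℕ) : ℝ := -(sd d (min i j) (max i j)) * c q (min i j) (max i j)
def Pf (i j : ℕ) : ℝ :=
  if i = 0 then -(sd d 0 j) * c q 0 j
  else if i ≤ j then -(c q i j) * ((1 - q (i-1)^2) * sd d i j - q (i-1)^2 * d (i-1))
  else -q (i-1) * d (i-1) * c q j (i-1)
def Nf (i j : ℕ) : ℝ :=
  if i = j then (if i = 0 then 0 else 2 * q (i-1)^2 * d (i-1))
  else if i < j then -(w q i) * q (j-1) * d (j-1) * c q i (j-1)
  else -(w q j) * q (i-1) * d (i-1) * c q j (i-1)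
def WLTf (i j : ℕ) : ℝ := w q i * Lf q j i
def Wdf (i j : ℕ) : ℝ := if i = j then w q i else 0
def Widf (i j : ℕ) : ℝ := if i = j then (w q i)⁻¹ else 0
def Gf (i j : ℕ) : ℝ := (w q i)⁻¹ * Nf q d i j

lemma c_self (i : ℕ) : c q i i = 1 := by simp [c]
lemma c_top {i j : ℕ} (h : i ≤ j) : c q i (j+1) = c q i j * q j :=
  Finset.prod_Ico_succ_top h _
lemma c_bot {i j : ℕ} (h : i < j) : c q i j = q i * c q (i+1) j :=
  Finset.prod_eq_prod_Ico_succ_bot h _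
lemma sd_self (i : ℕ) : sd d i i = 0 := by simp [sd]
lemma sd_top {i j : ℕ} (h : i ≤ j) : sd d i (j+1) = sd d i j + d j :=
  Finset.sum_Ico_succ_top h _
lemma sd_bot {i j : ℕ} (h : i < j) : sd d i j = d i + sd d (i+1) j :=
  Finset.sum_eq_sum_Ico_succ_bot h _

lemma sum_K {n i : ℕ} (hi : i < n) (f : ℕ → ℝ) :
    ∑ a ∈ Finset.range n, Kf q i a * f a
      = f i + (if i = 0 then 0 else -q (i-1) * f (i-1)) := by
  unfold Kf
  simp only [add_mul, ite_mul, one_mul, zero_mul]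
  rw [Finset.sum_add_distrib]
  congr 1
  · rw [Finset.sum_ite_eq (Finset.range n) i f, if_pos (Finset.mem_range.mpr hi)]
  · rcases Nat.eq_zero_or_pos i with rfl | hpos
    · simp
    · rw [if_neg (by omega)]
      have hcond : ∀ a : ℕ, (a + 1 = i) = (a = i - 1) := fun a => propext (by omega)
      simp only [hcond]
      rw [Finset.sum_ite_eq' (Finset.range n) (i-1) (fun a => -q a * f a),
        if_pos (Finset.mem_range.mpr (by omega))]

lemma sum_ite_left {n i : ℕ} (hi : i < n) (g : ℕ → ℝ) (v : ℝ) :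
    ∑ a ∈ Finset.range n, (if i = a then v else 0) * g a = v * g i := by
  simp only [ite_mul, zero_mul]
  rw [Finset.sum_ite_eq (Finset.range n) i (fun a => v * g a),
    if_pos (Finset.mem_range.mpr hi)]

lemma of_mul_of {n : ℕ} (F G : ℕ → ℕ → ℝ) :
    (Matrix.of fun i j : Fin n => F i j) * (Matrix.of fun i j : Fin n => G i j)
      = Matrix.of fun i j : Fin n => ∑ a ∈ Finset.range n, F i a * G a j := by
  ext i j
  simp only [Matrix.mul_apply, Matrix.of_apply]
  exact Fin.sum_univ_eq_sum_range (fun a => F i a * G a j) n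

lemma trace_of {n : ℕ} (F : ℕ → ℕ → ℝ) :
    Matrix.trace (Matrix.of fun i j : Fin n => F i j)
      = ∑ i ∈ Finset.range n, F i i := by
  rw [Matrix.trace]
  exact Fin.sum_univ_eq_sum_range (fun i => F i i) n

lemma KL_entry (i j : ℕ) :
    Lf q i j + (if i = 0 then 0 else -q (i-1) * Lf q (i-1) j)
      = if i = j then (1:ℝ) else 0 := by
  rcases Nat.eq_zero_or_pos i with rfl | hpos
  · simp only [Lf, if_pos rfl, add_zero]
    split_ifs <;> first | omega | (try rw [show j = 0 by omega]) <;>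
      simp [c_self]
  · obtain ⟨m, rfl⟩ := Nat.exists_eq_succ_of_ne_zero hpos.ne'
    rcases lt_trichotomy j (m+1) with h | h | h
    · have hc : c q j (m+1) = c q j m * q m := c_top q (by omega)
      simp only [Lf, Nat.succ_sub_one, hc, if_neg (Nat.succ_ne_zero m)]
      split_ifs <;> first | omega | ring1
    · subst h
      simp only [Lf, Nat.succ_sub_one, if_neg (Nat.succ_ne_zero m), c_self]
      split_ifs <;> first | omega | ring1
    · simp only [Lf, Nat.succ_sub_one, if_neg (Nat.succ_ne_zero m)]
      split_ifs <;> first | omega | ring1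

lemma KC_entry (i j : ℕ) :
    Cf q i j + (if i = 0 then 0 else -q (i-1) * Cf q (i-1) j)
      = w q i * Lf q j i := by
  rcases Nat.eq_zero_or_pos i with rfl | hpos
  · simp only [Cf, Lf, w, if_pos rfl, add_zero,
      Nat.min_eq_left (Nat.zero_le j), Nat.max_eq_right (Nat.zero_le j),
      if_pos (Nat.zero_le j), if_true]
    ring
  · obtain ⟨m, rfl⟩ := Nat.exists_eq_succ_of_ne_zero hpos.ne'
    rcases le_or_gt (m+1) j with h | h
    · have hc : c q m j = q m * c q (m+1) j := c_bot q (by omega)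
      simp only [Cf, Lf, w, Nat.succ_sub_one, if_neg (Nat.succ_ne_zero m),
        show min (m+1) j = m+1 by omega, show max (m+1) j = j by omega,
        show min m j = m by omega, show max m j = j by omega, hc, if_pos h]
      ring
    · have hc : c q j (m+1) = c q j m * q m := c_top q (by omega)
      simp only [Cf, Lf, w, Nat.succ_sub_one, if_neg (Nat.succ_ne_zero m),
        show min (m+1) j = j by omega, show max (m+1) j = m+1 by omega,
        show min m j = j by omega, show max m j = m by omega, hc,
        if_neg (show ¬ m+1 ≤ j by omega)]
      ring

lemma KA_entry (i j : ℕ) :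
    Af q d i j + (if i = 0 then 0 else -q (i-1) * Af q d (i-1) j)
      = Pf q d i j := by
  rcases Nat.eq_zero_or_pos i with rfl | hpos
  · simp only [Af, Pf, if_pos rfl, add_zero, if_true,
      Nat.min_eq_left (Nat.zero_le j), Nat.max_eq_right (Nat.zero_le j)]
  · obtain ⟨m, rfl⟩ := Nat.exists_eq_succ_of_ne_zero hpos.ne'
    rcases le_or_gt (m+1) j with h | h
    · have hc : c q m j = q m * c q (m+1) j := c_bot q (by omega)
      have hs : sd d m j = d m + sd d (m+1) j := sd_bot d (by omega)
      simp only [Af, Pf, Nat.succ_sub_one, if_neg (Nat.succ_ne_zero m),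
        show min (m+1) j = m+1 by omega, show max (m+1) j = j by omega,
        show min m j = m by omega, show max m j = j by omega, hc, hs, if_pos h]
      ring
    · have hc : c q j (m+1) = c q j m * q m := c_top q (by omega)
      have hs : sd d j (m+1) = sd d j m + d m := sd_top d (by omega)
      simp only [Af, Pf, Nat.succ_sub_one, if_neg (Nat.succ_ne_zero m),
        show min (m+1) j = j by omega, show max (m+1) j = m+1 by omega,
        show min m j = j by omega, show max m j = m by omega, hc, hs,
        if_neg (show ¬ m+1 ≤ j by omega)]
      ring

lemma PK_entry (i j : ℕ) :
    Pf q d i j + (if j = 0 then 0 else -q (j-1) * Pf q d i (j-1))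
      = Nf q d i j := by
  rcases Nat.eq_zero_or_pos j with rfl | hjpos
  · rw [if_pos rfl, add_zero]
    rcases Nat.eq_zero_or_pos i with rfl | hipos
    · simp [Pf, Nf, sd_self, c_self]
    · obtain ⟨m, rfl⟩ := Nat.exists_eq_succ_of_ne_zero hipos.ne'
      simp only [Pf, Nf, w, Nat.succ_sub_one]
      split_ifs <;> first | omega | ring1 | contradiction
  · obtain ⟨t, rfl⟩ := Nat.exists_eq_succ_of_ne_zero hjpos.ne'
    rw [if_neg (Nat.succ_ne_zero t)]
    rcases Nat.eq_zero_or_pos i with rfl | hipos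
    · have hc : c q 0 (t+1) = c q 0 t * q t := c_top q (Nat.zero_le t)
      have hs : sd d 0 (t+1) = sd d 0 t + d t := sd_top d (Nat.zero_le t)
      simp only [Pf, Nf, w, Nat.succ_sub_one, hc, hs]
      split_ifs <;> first | omega | ring1 | contradiction
    · obtain ⟨m, rfl⟩ := Nat.exists_eq_succ_of_ne_zero hipos.ne'
      rcases lt_trichotomy m t with h | h | h
      · have hc : c q (m+1) (t+1) = c q (m+1) t * q t := c_top q (by omega)
        have hs : sd d (m+1) (t+1) = sd d (m+1) t + d t := sd_top d (by omega)
        simp only [Pf, Nf, w, Nat.succ_sub_one, hc, hs]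
        split_ifs <;> first | omega | ring1 | contradiction
      · subst h
        simp only [Pf, Nf, w, Nat.succ_sub_one, sd_self, c_self]
        split_ifs <;> first | omega | ring1 | contradiction
      · have hc2 : c q t m = q t * c q (t+1) m := c_bot q (by omega)
        simp only [Pf, Nf, w, Nat.succ_sub_one, hc2]
        split_ifs <;> first | omega | ring1 | contradiction

lemma Nf_symm (i j : ℕ) : Nf q d i j = Nf q d j i := by
  rcases eq_or_ne i j with rfl | hne
  · rfl
  · unfold Nf
    split_ifs <;> first | omega | ring1

lemma tele : ∀ j : ℕ, ∑ i ∈ Finset.range (j+1), w q i * (c q i j)^2 = 1 := by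
  intro j
  induction j with
  | zero => simp [w, c_self]
  | succ p ih =>
    rw [Finset.sum_range_succ]
    have hco : ∀ i ∈ Finset.range (p+1), w q i * (c q i (p+1))^2
        = q p ^ 2 * (w q i * (c q i p)^2) := by
      intro i hi
      have hi' : i ≤ p := by have := Finset.mem_range.mp hi; omega
      rw [c_top q hi']
      ring
    rw [Finset.sum_congr rfl hco, ← Finset.mul_sum, ih, c_self]
    simp only [w, if_neg (Nat.succ_ne_zero p), Nat.succ_sub_one]
    ring

lemma trace_sum {n : ℕ} (hn : 2 ≤ n)
    (hw : ∀ i, i < n → 0 < w q i) (hq1 : ∀ k, k < n - 1 → q k ^ 2 ≠ 1) :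
    ∑ i ∈ Finset.range n, ∑ a ∈ Finset.range n,
        (((w q i)⁻¹ * Nf q d i a) * ((w q a)⁻¹ * Nf q d a i))
      = ∑ m ∈ Finset.range (n-1),
          2 * (d m ^ 2 * q m ^ 2 * (1 + q m ^ 2) / (1 - q m ^ 2) ^ 2) := by
  set F : ℕ → ℕ → ℝ :=
    fun i a => ((w q i)⁻¹ * Nf q d i a) * ((w q a)⁻¹ * Nf q d a i) with hF
  have key : ∀ m, m ≤ n → ∑ i ∈ Finset.range m, ∑ a ∈ Finset.range m, F i a
      = ∑ k ∈ Finset.range (m-1),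
          2 * (d k ^ 2 * q k ^ 2 * (1 + q k ^ 2) / (1 - q k ^ 2) ^ 2) := by
    intro m
    induction m with
    | zero => simp
    | succ p ih =>
      intro hp
      have hpn : p ≤ n := Nat.le_of_succ_le hp
      rw [Finset.sum_range_succ]
      have hin : ∀ i ∈ Finset.range p, ∑ a ∈ Finset.range (p+1), F i a
          = (∑ a ∈ Finset.range p, F i a) + F i p := by
        intro i _
        rw [Finset.sum_range_succ]
      rw [Finset.sum_congr rfl hin, Finset.sum_add_distrib, ih hpn,
        Finset.sum_range_succ]
      have hsymm : ∀ a, F p a = F a p := by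
        intro a
        simp only [hF]
        rw [Nf_symm q d p a, Nf_symm q d a p]
        ring
      have hsum2 : ∑ a ∈ Finset.range p, F p a = ∑ a ∈ Finset.range p, F a p :=
        Finset.sum_congr rfl fun a _ => hsymm a
      rcases Nat.eq_zero_or_pos p with rfl | hppos
      · simp [hF, Nf]
      · obtain ⟨s, rfl⟩ := Nat.exists_eq_succ_of_ne_zero hppos.ne'
        have hsn : s < n - 1 := by omega
        have hws : w q (s+1) = 1 - q s ^ 2 := by
          simp [w, Nat.succ_sub_one]
        have hwsne : (1 - q s ^ 2) ≠ 0 := by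
          intro hcon
          exact hq1 s hsn (by linarith)
        have hcol : ∑ a ∈ Finset.range (s+1), F a (s+1)
            = (q s * d s)^2 * (w q (s+1))⁻¹ := by
          have hterm : ∀ a ∈ Finset.range (s+1), F a (s+1)
              = ((q s * d s)^2 * (w q (s+1))⁻¹) * (w q a * (c q a s)^2) := by
            intro a ha
            have ha' : a < s + 1 := Finset.mem_range.mp ha
            have hNa : Nf q d a (s+1) = -(w q a) * q s * d s * c q a s := by
              unfold Nf
              rw [if_neg (by omega), if_pos (by omega)]
              simp [Nat.succ_sub_one]
            have hNa' : Nf q d (s+1) a = -(w q a) * q s * d s * c q a s := by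
              rw [Nf_symm]; exact hNa
            have hwa : (w q a)⁻¹ * (w q a)^2 = w q a := by
              rw [pow_two, ← mul_assoc, inv_mul_cancel₀ (hw a (by omega)).ne', one_mul]
            simp only [hF, hNa, hNa']
            linear_combination (q s^2 * d s^2 * c q a s^2 * (w q (s+1))⁻¹) * hwa
          rw [Finset.sum_congr rfl hterm, ← Finset.mul_sum, tele q s, mul_one]
        have hdiag : F (s+1) (s+1)
            = 4 * q s ^ 4 * d s ^ 2 * ((w q (s+1))⁻¹)^2 := by
          have : Nf q d (s+1) (s+1) = 2 * q s ^2 * d s := by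
            simp [Nf, Nat.succ_sub_one]
          simp only [hF, this]
          ring
        rw [hsum2, hcol, hdiag, hws]
        have : Nat.succ s + 1 - 1 = s + 1 := rfl
        rw [this, Finset.sum_range_succ, show s + 1 - 1 = s from rfl]
        field_simp
        ring
  exact key n le_rfl

-- ### Matrix level

variable {n : ℕ}

def Km (n : ℕ) (q : ℕ → ℝ) : Matrix (Fin n) (Fin n) ℝ := Matrix.of fun i j => Kf q i j
def KTm (n : ℕ) (q : ℕ → ℝ) : Matrix (Fin n) (Fin n) ℝ := Matrix.of fun i j => KTf q i j
def Lm (n : ℕ) (q : ℕ → ℝ) : Matrix (Fin n) (Fin n) ℝ := Matrix.of fun i j => Lf q i j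
def Cm (n : ℕ) (q : ℕ → ℝ) : Matrix (Fin n) (Fin n) ℝ := Matrix.of fun i j => Cf q i j
def WLTm (n : ℕ) (q : ℕ → ℝ) : Matrix (Fin n) (Fin n) ℝ := Matrix.of fun i j => WLTf q i j
def Wm (n : ℕ) (q : ℕ → ℝ) : Matrix (Fin n) (Fin n) ℝ := Matrix.of fun i j => Wdf q i j
def Wim (n : ℕ) (q : ℕ → ℝ) : Matrix (Fin n) (Fin n) ℝ := Matrix.of fun i j => Widf q i j
def Am (n : ℕ) (q d : ℕ → ℝ) : Matrix (Fin n) (Fin n) ℝ := Matrix.of fun i j => Af q d i j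
def Pm (n : ℕ) (q d : ℕ → ℝ) : Matrix (Fin n) (Fin n) ℝ := Matrix.of fun i j => Pf q d i j
def Nm (n : ℕ) (q d : ℕ → ℝ) : Matrix (Fin n) (Fin n) ℝ := Matrix.of fun i j => Nf q d i j
def Gm (n : ℕ) (q d : ℕ → ℝ) : Matrix (Fin n) (Fin n) ℝ := Matrix.of fun i j => Gf q d i j

lemma mKL : Km n q * Lm n q = 1 := by
  unfold Km Lm
  rw [of_mul_of (Kf q) (Lf q)]
  ext i j
  rw [Matrix.of_apply, sum_K q i.isLt (fun a => Lf q a j), KL_entry,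
    Matrix.one_apply]
  simp [Fin.val_eq_val]

lemma mKC : Km n q * Cm n q = WLTm n q := by
  unfold Km Cm WLTm
  rw [of_mul_of (Kf q) (Cf q)]
  ext i j
  rw [Matrix.of_apply, sum_K q i.isLt (fun a => Cf q a j), KC_entry]
  rfl

lemma mKA : Km n q * Am n q d = Pm n q d := by
  unfold Km Am Pm
  rw [of_mul_of (Kf q) (Af q d)]
  ext i j
  rw [Matrix.of_apply, sum_K q i.isLt (fun a => Af q d a j), KA_entry]
  rfl

lemma mPK : Pm n q d * KTm n q = Nm n q d := by
  unfold Pm KTm Nm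
  rw [of_mul_of (Pf q d) (KTf q)]
  ext i j
  rw [Matrix.of_apply]
  have : ∑ a ∈ Finset.range n, Pf q d i a * KTf q a j
      = ∑ a ∈ Finset.range n, Kf q j a * Pf q d i a :=
    Finset.sum_congr rfl fun a _ => by rw [KTf]; ring
  rw [this, sum_K q j.isLt (fun a => Pf q d i a), PK_entry]
  rfl

lemma mWLK : WLTm n q * KTm n q = Wm n q := by
  unfold WLTm KTm Wm
  rw [of_mul_of (WLTf q) (KTf q)]
  ext i j
  rw [Matrix.of_apply]
  have h1 : ∑ b ∈ Finset.range n, WLTf q i b * KTf q b j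
      = w q i * ∑ b ∈ Finset.range n, Kf q j b * Lf q b i := by
    rw [Finset.mul_sum]
    exact Finset.sum_congr rfl fun b _ => by rw [WLTf, KTf]; ring
  rw [h1, sum_K q j.isLt (fun b => Lf q b i), KL_entry]
  rw [Matrix.of_apply, Wdf]
  split_ifs <;> first | ring1 | omega

lemma mWWi (hw : ∀ i, i < n → w q i ≠ 0) : Wm n q * Wim n q = 1 := by
  unfold Wm Wim
  rw [of_mul_of (Wdf q) (Widf q)]
  ext i j
  rw [Matrix.of_apply]
  have h1 : ∑ a ∈ Finset.range n, Wdf q i a * Widf q a j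
      = w q i * Widf q i j := by
    unfold Wdf
    exact sum_ite_left i.isLt (fun a => Widf q a j) (w q i)
  rw [h1, Matrix.one_apply, Widf]
  rcases eq_or_ne (i:ℕ) (j:ℕ) with h | h
  · rw [if_pos h, if_pos (Fin.val_eq_val i j |>.mp h), mul_inv_cancel₀ (hw i i.isLt)]
  · rw [if_neg h, if_neg (fun hc => h (by rw [hc])), mul_zero]

lemma mWiN : Wim n q * Nm n q d = Gm n q d := by
  unfold Wim Nm Gm
  rw [of_mul_of (Widf q) (Nf q d)]
  ext i j
  rw [Matrix.of_apply]
  have h1 : ∑ a ∈ Finset.range n, Widf q i a * Nf q d a j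
      = (w q i)⁻¹ * Nf q d i j := by
    unfold Widf
    exact sum_ite_left i.isLt (fun a => Nf q d a j) ((w q i)⁻¹)
  rw [h1]
  rfl

end
end Stmt8Aux

open Stmt8Aux in
theorem stmt_8 (n : ℕ) (hn : 2 ≤ n) (α β : ℝ) (hα : 0 < α) (hβ : 0 < β)
    (d δ : ℕ → ℝ) (hd : ∀ i < n - 1, 0 < d i) (hδ : ∀ i < n - 1, 0 < δ i)
    (q : ℕ → ℝ) (hq : ∀ k, q k = Real.exp (-(α * d k + β * δ k)))
    (C A : Matrix (Fin n) (Fin n) ℝ)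
    (hC : ∀ i j : Fin n, C i j =
      ∏ k ∈ Finset.Ico (min (i : ℕ) (j : ℕ)) (max (i : ℕ) (j : ℕ)), q k)
    (hA : ∀ i j : Fin n, A i j =
      -(∑ k ∈ Finset.Ico (min (i : ℕ) (j : ℕ)) (max (i : ℕ) (j : ℕ)), d k) *
        ∏ k ∈ Finset.Ico (min (i : ℕ) (j : ℕ)) (max (i : ℕ) (j : ℕ)), q k) :
    IsUnit C ∧
    (1 / 2 : ℝ) * Matrix.trace (C⁻¹ * A * C⁻¹ * A) =
      ∑ i ∈ Finset.range (n - 1),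
        d i ^ 2 * q i ^ 2 * (1 + q i ^ 2) / (1 - q i ^ 2) ^ 2 := by
  -- positivity facts
  have hq0 : ∀ k, 0 < q k := fun k => by rw [hq]; exact Real.exp_pos _
  have hqlt : ∀ k, k < n - 1 → q k < 1 := by
    intro k hk
    rw [hq]
    have h1 : 0 < α * d k := mul_pos hα (hd k hk)
    have h2 : 0 < β * δ k := mul_pos hβ (hδ k hk)
    calc Real.exp (-(α * d k + β * δ k)) < Real.exp 0 :=
          Real.exp_lt_exp.mpr (by linarith)
      _ = 1 := Real.exp_zero
  have hq2 : ∀ k, k < n - 1 → q k ^ 2 < 1 := by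
    intro k hk
    have := hq0 k
    have := hqlt k hk
    nlinarith
  have hw : ∀ i, i < n → 0 < w q i := by
    intro i hi
    unfold w
    rcases Nat.eq_zero_or_pos i with rfl | hpos
    · simp
    · rw [if_neg (by omega)]
      have : q (i-1) ^ 2 < 1 := hq2 (i-1) (by omega)
      linarith
  have hwne : ∀ i, i < n → w q i ≠ 0 := fun i hi => (hw i hi).ne'
  -- identify C and A with our template matrices
  have hCm : C = Cm n q := by
    ext i j
    rw [hC i j]
    rfl
  have hAm : A = Am n q d := by
    ext i j
    rw [hA i j]
    rfl
  -- factorization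
  have hLK : Lm n q * Km n q = 1 := mul_eq_one_comm.mp (mKL q)
  have hCfact : Cm n q = Lm n q * WLTm n q := by
    rw [← mKC, ← Matrix.mul_assoc, hLK, one_mul]
  have hRight : Cm n q * (KTm n q * (Wim n q * Km n q)) = 1 := by
    rw [hCfact, Matrix.mul_assoc,
      ← Matrix.mul_assoc (WLTm n q) (KTm n q) (Wim n q * Km n q), mWLK,
      ← Matrix.mul_assoc (Wm n q) (Wim n q) (Km n q), mWWi q hwne, one_mul]
    exact hLK
  have hLeft : (KTm n q * (Wim n q * Km n q)) * Cm n q = 1 :=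
    mul_eq_one_comm.mp hRight
  constructor
  · exact ⟨⟨C, KTm n q * (Wim n q * Km n q), by rw [hCm]; exact hRight,
      by rw [hCm]; exact hLeft⟩, rfl⟩
  · have hCinv : C⁻¹ = KTm n q * (Wim n q * Km n q) := by
      rw [hCm]
      exact Matrix.inv_eq_right_inv hRight
    have hN : Km n q * (Am n q d * KTm n q) = Nm n q d := by
      rw [← Matrix.mul_assoc, mKA, mPK]
    rw [hCinv, hAm]
    -- rearrange the trace
    have e1 : KTm n q * (Wim n q * Km n q) * Am n q d *
          (KTm n q * (Wim n q * Km n q)) * Am n q d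
        = KTm n q * (Wim n q * (Km n q * (Am n q d * (KTm n q * (Wim n q *
            (Km n q * Am n q d)))))) := by
      simp only [Matrix.mul_assoc]
    have e2 : (Wim n q * (Km n q * (Am n q d * (KTm n q * (Wim n q *
            (Km n q * Am n q d)))))) * KTm n q
        = (Wim n q * Nm n q d) * (Wim n q * Nm n q d) := by
      rw [← hN]
      simp only [Matrix.mul_assoc]
    rw [e1, Matrix.trace_mul_comm, e2, mWiN]
    unfold Gm
    rw [of_mul_of (Gf q d) (Gf q d),
      trace_of (fun i j => ∑ a ∈ Finset.range n, Gf q d i a * Gf q d a j)]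
    simp only [Gf]
    rw [trace_sum q d hn hw (fun k hk => (hq2 k hk).ne)]
    rw [Finset.mul_sum]
    exact Finset.sum_congr rfl fun m _ => by ring
end

section
/- Let n ≥ 2, α > 0, β > 0, and let d_1,…,d_{n−1}, δ_1,…,δ_{n−1} be positive reals; set q_k := exp(−α d_k − β δ_k). Let C be the n×n matrix with C_{ii} = 1 and C_{ij} = C_{ji} = ∏_{k=i}^{j−1} q_k for i < j, let A be the matrix with A_{ii} = 0 and A_{ij} = A_{ji} = −(Σ_{k=i}^{j−1} d_k)·∏_{k=i}^{j−1} q_k for i < j, and let B be the matrix with B_{ii} = 0 and B_{ij} = B_{ji} = −(Σ_{k=i}^{j−1} δ_k)·∏_{k=i}^{j−1} q_k for i < j. Then C is invertible and (1/2)·tr(C⁻¹ A C⁻¹ B) = Σ_{i=1}^{n−1} d_i δ_i q_i² (1 + q_i²)/(1 − q_i²)². -/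
noncomputable def stmt9cE (q : ℕ → ℝ) (i j : ℕ) : ℝ :=
  ∏ k ∈ Finset.Ico (min i j) (max i j), q k
noncomputable def stmt9sE (d : ℕ → ℝ) (i j : ℕ) : ℝ :=
  ∑ k ∈ Finset.Ico (min i j) (max i j), d k
noncomputable def stmt9aE (q d : ℕ → ℝ) (i j : ℕ) : ℝ := -(stmt9sE d i j) * stmt9cE q i j

section evals
variable (q d : ℕ → ℝ) (i j n : ℕ)

lemma stmt9cE_symm : stmt9cE q i j = stmt9cE q j i := by
  unfold stmt9cE; rw [min_comm, max_comm]
lemma stmt9sE_symm : stmt9sE d i j = stmt9sE d j i := by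
  unfold stmt9sE; rw [min_comm, max_comm]
lemma stmt9cE_diag : stmt9cE q i i = 1 := by simp [stmt9cE]
lemma stmt9sE_diag : stmt9sE d i i = 0 := by simp [stmt9sE]
lemma stmt9aE_diag : stmt9aE q d i i = 0 := by simp [stmt9aE, stmt9sE_diag]
lemma stmt9cE_succ (h : i ≤ j) : stmt9cE q i (j+1) = stmt9cE q i j * q j := by
  unfold stmt9cE
  rw [min_eq_left h, max_eq_right h, min_eq_left (h.trans (Nat.le_succ j)),
    max_eq_right (h.trans (Nat.le_succ j)), Finset.prod_Ico_succ_top h]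
lemma stmt9sE_succ (h : i ≤ j) : stmt9sE d i (j+1) = stmt9sE d i j + d j := by
  unfold stmt9sE
  rw [min_eq_left h, max_eq_right h, min_eq_left (h.trans (Nat.le_succ j)),
    max_eq_right (h.trans (Nat.le_succ j)), Finset.sum_Ico_succ_top h]
lemma stmt9cE_bot (h : j < i) : stmt9cE q j i = q j * stmt9cE q (j+1) i := by
  unfold stmt9cE
  rw [min_eq_left h.le, max_eq_right h.le, min_eq_left h, max_eq_right h,
    Finset.prod_eq_prod_Ico_succ_bot h]
lemma stmt9sE_bot (h : j < i) : stmt9sE d j i = d j + stmt9sE d (j+1) i := by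
  unfold stmt9sE
  rw [min_eq_left h.le, max_eq_right h.le, min_eq_left h, max_eq_right h,
    Finset.sum_eq_sum_Ico_succ_bot h]
lemma stmt9cE_adj : stmt9cE q i (i+1) = q i := by
  unfold stmt9cE
  rw [min_eq_left (Nat.le_succ i), max_eq_right (Nat.le_succ i)]
  simp
lemma stmt9sE_adj : stmt9sE d i (i+1) = d i := by
  unfold stmt9sE
  rw [min_eq_left (Nat.le_succ i), max_eq_right (Nat.le_succ i)]
  simp
end evals

noncomputable def stmt9kE (n : ℕ) (q : ℕ → ℝ) (i j : ℕ) : ℝ :=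
  if i = j then 1 + (if i = 0 then 0 else q (i-1)^2/(1 - q (i-1)^2))
      + (if i+1 < n then q i^2/(1 - q i^2) else 0)
  else if i + 1 = j then -q i / (1 - q i^2)
  else if j + 1 = i then -q j / (1 - q j^2)
  else 0
noncomputable def stmt9wE (n : ℕ) (q d : ℕ → ℝ) (i j : ℕ) : ℝ :=
  if i = j then (if i = 0 then 0 else 2*d (i-1)*q (i-1)^2/(1 - q (i-1)^2)^2)
      + (if i+1 < n then 2*d i*q i^2/(1 - q i^2)^2 else 0)
  else if i + 1 = j then -(d i * q i * (1 + q i^2)) / (1 - q i^2)^2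
  else if j + 1 = i then -(d j * q j * (1 + q j^2)) / (1 - q j^2)^2
  else 0

section evals
variable (n : ℕ) (q d : ℕ → ℝ) (i j : ℕ)
lemma stmt9kE_diag : stmt9kE n q i i = 1 + (if i = 0 then 0 else q (i-1)^2/(1 - q (i-1)^2))
    + (if i+1 < n then q i^2/(1 - q i^2) else 0) := by simp [stmt9kE]
lemma stmt9kE_lo : stmt9kE n q i (i+1) = -q i / (1 - q i^2) := by
  unfold stmt9kE; rw [if_neg (by omega), if_pos rfl]
lemma stmt9kE_hi : stmt9kE n q (j+1) j = -q j / (1 - q j^2) := by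
  unfold stmt9kE; rw [if_neg (by omega), if_neg (by omega), if_pos rfl]
lemma stmt9kE_far (h1 : i ≠ j) (h2 : i + 1 ≠ j) (h3 : j + 1 ≠ i) : stmt9kE n q i j = 0 := by
  unfold stmt9kE; rw [if_neg h1, if_neg h2, if_neg h3]
lemma stmt9wE_diag : stmt9wE n q d i i =
    (if i = 0 then 0 else 2*d (i-1)*q (i-1)^2/(1 - q (i-1)^2)^2)
    + (if i+1 < n then 2*d i*q i^2/(1 - q i^2)^2 else 0) := by simp [stmt9wE]
lemma stmt9wE_lo : stmt9wE n q d i (i+1) = -(d i * q i * (1 + q i^2)) / (1 - q i^2)^2 := by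
  unfold stmt9wE; rw [if_neg (by omega), if_pos rfl]
lemma stmt9wE_hi : stmt9wE n q d (j+1) j = -(d j * q j * (1 + q j^2)) / (1 - q j^2)^2 := by
  unfold stmt9wE; rw [if_neg (by omega), if_neg (by omega), if_pos rfl]
lemma stmt9wE_far (h1 : i ≠ j) (h2 : i + 1 ≠ j) (h3 : j + 1 ≠ i) : stmt9wE n q d i j = 0 := by
  unfold stmt9wE; rw [if_neg h1, if_neg h2, if_neg h3]
end evals

lemma stmt9_sum_tridiag (n j : ℕ) (hj : j < n) (f : ℕ → ℝ)
    (h : ∀ l, l ≠ j - 1 → l ≠ j → l ≠ j + 1 → f l = 0) :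
    ∑ l ∈ Finset.range n, f l =
      (if j = 0 then 0 else f (j - 1)) + f j + (if j + 1 < n then f (j + 1) else 0) := by
  have key : ∀ l, f l = (if l = j - 1 ∧ j ≠ 0 then f l else 0) + (if l = j then f l else 0)
      + (if l = j + 1 then f l else 0) := by
    intro l
    by_cases h1 : l = j
    · subst h1; rw [if_pos rfl, if_neg (by omega), if_neg (by omega)]; ring
    · by_cases h2 : l = j - 1
      · have h0 : j ≠ 0 := by omega
        rw [if_pos ⟨h2, h0⟩, if_neg h1, if_neg (by omega)]; ring
      · by_cases h3 : l = j + 1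
        · rw [if_neg (by tauto), if_neg h1, if_pos h3]; ring
        · rw [if_neg (by tauto), if_neg h1, if_neg h3, h l h2 h1 h3]; ring
  rw [Finset.sum_congr rfl (fun l _ => key l), Finset.sum_add_distrib, Finset.sum_add_distrib]
  congr 1
  · congr 1
    · by_cases h0 : j = 0
      · simp [h0]
      · rw [if_neg h0]
        have e : ∀ l, (if l = j - 1 ∧ j ≠ 0 then f l else 0) = if l = j - 1 then f l else 0 := by
          intro l; by_cases h' : l = j - 1 <;> simp [h', h0]
        rw [Finset.sum_congr rfl fun l _ => e l, Finset.sum_ite_eq' (Finset.range n) (j-1) f,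
          if_pos (Finset.mem_range.mpr (by omega))]
    · rw [Finset.sum_ite_eq' (Finset.range n) j f, if_pos (Finset.mem_range.mpr hj)]
  · rw [Finset.sum_ite_eq' (Finset.range n) (j+1) f]
    by_cases h' : j + 1 < n
    · rw [if_pos (Finset.mem_range.mpr h'), if_pos h']
    · rw [if_neg (by simpa using h'), if_neg h']


lemma stmt9_CK (n : ℕ) (q : ℕ → ℝ) (hq : ∀ k, k + 1 < n → 1 - q k ^ 2 ≠ 0)
    (i j : ℕ) (hi : i < n) (hj : j < n) :
    ∑ l ∈ Finset.range n, stmt9cE q i l * stmt9kE n q l j = if i = j then 1 else 0 := by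
  have hvan : ∀ l, l ≠ j - 1 → l ≠ j → l ≠ j + 1 →
      stmt9cE q i l * stmt9kE n q l j = 0 := by
    intro l h1 h2 h3
    rw [stmt9kE_far n q l j h2 (by omega) (by omega), mul_zero]
  rw [stmt9_sum_tridiag n j hj _ hvan]
  rcases Nat.lt_trichotomy i j with hlt | heq | hgt
  · -- i < j
    obtain ⟨m, rfl⟩ : ∃ m, j = m + 1 := ⟨j - 1, by omega⟩
    have him : i ≤ m := by omega
    have hx : 1 - q m ^ 2 ≠ 0 := hq m (by omega)
    rw [if_neg (show ¬(i = m + 1) by omega), if_neg (show ¬(m + 1 = 0) by omega)]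
    simp only [Nat.add_sub_cancel]
    rw [stmt9kE_lo, stmt9kE_diag, if_neg (show ¬(m + 1 = 0) by omega), Nat.add_sub_cancel,
      stmt9kE_hi, stmt9cE_succ q i (m+1) (by omega), stmt9cE_succ q i m him]
    by_cases hn : m + 1 + 1 < n
    · have hy : 1 - q (m+1) ^ 2 ≠ 0 := hq (m+1) hn
      rw [if_pos hn, if_pos hn]
      field_simp
      ring
    · rw [if_neg hn, if_neg hn]
      field_simp
      ring
  · -- i = j
    subst heq
    rw [if_pos rfl, stmt9kE_diag]
    by_cases h0 : i = 0
    · subst h0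
      rw [if_pos (rfl : (0:ℕ) = 0), if_pos (rfl : (0:ℕ) = 0), stmt9cE_diag]
      by_cases hn : 0 + 1 < n
      · have hy : 1 - q 0 ^ 2 ≠ 0 := hq 0 hn
        rw [if_pos hn, if_pos hn, stmt9cE_adj, stmt9kE_hi]
        field_simp
        ring
      · rw [if_neg hn, if_neg hn]; ring
    · obtain ⟨m, rfl⟩ : ∃ m, i = m + 1 := ⟨i - 1, by omega⟩
      have hx : 1 - q m ^ 2 ≠ 0 := hq m (by omega)
      rw [if_neg (show ¬(m + 1 = 0) by omega), if_neg (show ¬(m + 1 = 0) by omega),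
        Nat.add_sub_cancel, stmt9cE_diag, stmt9kE_lo]
      have e1 : stmt9cE q (m+1) m = q m := by rw [stmt9cE_symm, stmt9cE_adj]
      rw [e1]
      by_cases hn : m + 1 + 1 < n
      · have hy : 1 - q (m+1) ^ 2 ≠ 0 := hq (m+1) hn
        rw [if_pos hn, if_pos hn, stmt9cE_adj, stmt9kE_hi]
        field_simp
        ring
      · rw [if_neg hn, if_neg hn]
        field_simp
        ring
  · -- i > j
    rw [if_neg (show ¬(i = j) by omega)]
    by_cases h0 : j = 0
    · subst h0
      have hy : 1 - q 0 ^ 2 ≠ 0 := hq 0 (by omega)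
      rw [if_pos (rfl : (0:ℕ) = 0), if_pos (show 0 + 1 < n by omega), stmt9kE_diag,
        if_pos (rfl : (0:ℕ) = 0), if_pos (show 0 + 1 < n by omega), stmt9kE_hi]
      have e1 : stmt9cE q i 0 = q 0 * stmt9cE q 1 i := by
        rw [stmt9cE_symm]; exact stmt9cE_bot q i 0 hgt
      have e2 : stmt9cE q i (0+1) = stmt9cE q 1 i := stmt9cE_symm q i 1
      rw [e1, e2]
      field_simp
      ring
    · obtain ⟨m, rfl⟩ : ∃ m, j = m + 1 := ⟨j - 1, by omega⟩
      have hx : 1 - q m ^ 2 ≠ 0 := hq m (by omega)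
      have hy : 1 - q (m+1) ^ 2 ≠ 0 := hq (m+1) (by omega)
      rw [if_neg (show ¬(m + 1 = 0) by omega), if_pos (show m + 1 + 1 < n by omega)]
      simp only [Nat.add_sub_cancel]
      rw [stmt9kE_lo, stmt9kE_diag, if_neg (show ¬(m + 1 = 0) by omega), Nat.add_sub_cancel,
        if_pos (show m + 1 + 1 < n by omega), stmt9kE_hi]
      have e1 : stmt9cE q i m = q m * (q (m+1) * stmt9cE q (m+1+1) i) := by
        rw [stmt9cE_symm, stmt9cE_bot q i m (by omega), stmt9cE_bot q i (m+1) (by omega)]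
      have e2 : stmt9cE q i (m+1) = q (m+1) * stmt9cE q (m+1+1) i := by
        rw [stmt9cE_symm, stmt9cE_bot q i (m+1) (by omega)]
      have e3 : stmt9cE q i (m+1+1) = stmt9cE q (m+1+1) i := stmt9cE_symm q i (m+1+1)
      rw [e1, e2, e3]
      field_simp
      ring

lemma stmt9_AKCW (n : ℕ) (q d : ℕ → ℝ) (hq : ∀ k, k + 1 < n → 1 - q k ^ 2 ≠ 0)
    (i j : ℕ) (hi : i < n) (hj : j < n) :
    ∑ l ∈ Finset.range n, stmt9aE q d i l * stmt9kE n q l j =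
      ∑ l ∈ Finset.range n, stmt9cE q i l * stmt9wE n q d l j := by
  have hvanL : ∀ l, l ≠ j - 1 → l ≠ j → l ≠ j + 1 →
      stmt9aE q d i l * stmt9kE n q l j = 0 := by
    intro l h1 h2 h3
    rw [stmt9kE_far n q l j h2 (by omega) (by omega), mul_zero]
  have hvanR : ∀ l, l ≠ j - 1 → l ≠ j → l ≠ j + 1 →
      stmt9cE q i l * stmt9wE n q d l j = 0 := by
    intro l h1 h2 h3
    rw [stmt9wE_far n q d l j h2 (by omega) (by omega), mul_zero]
  rw [stmt9_sum_tridiag n j hj _ hvanL, stmt9_sum_tridiag n j hj _ hvanR]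
  rcases Nat.lt_trichotomy i j with hlt | heq | hgt
  · -- i < j
    obtain ⟨m, rfl⟩ : ∃ m, j = m + 1 := ⟨j - 1, by omega⟩
    have him : i ≤ m := by omega
    have hx : 1 - q m ^ 2 ≠ 0 := hq m (by omega)
    rw [if_neg (show ¬(m + 1 = 0) by omega), if_neg (show ¬(m + 1 = 0) by omega)]
    simp only [Nat.add_sub_cancel]
    rw [stmt9kE_lo, stmt9kE_diag, if_neg (show ¬(m + 1 = 0) by omega), Nat.add_sub_cancel,
      stmt9kE_hi, stmt9wE_lo, stmt9wE_diag, if_neg (show ¬(m + 1 = 0) by omega),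
      Nat.add_sub_cancel, stmt9wE_hi]
    simp only [stmt9aE]
    rw [stmt9cE_succ q i (m+1) (by omega), stmt9cE_succ q i m him,
      stmt9sE_succ d i (m+1) (by omega), stmt9sE_succ d i m him]
    by_cases hn : m + 1 + 1 < n
    · have hy : 1 - q (m+1) ^ 2 ≠ 0 := hq (m+1) hn
      simp only [if_pos hn]
      field_simp
      ring
    · simp only [if_neg hn]
      field_simp
      ring
  · -- i = j
    subst heq
    by_cases h0 : i = 0
    · subst h0
      rw [if_pos (rfl : (0:ℕ) = 0), if_pos (rfl : (0:ℕ) = 0), stmt9kE_diag,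
        if_pos (rfl : (0:ℕ) = 0), stmt9wE_diag, if_pos (rfl : (0:ℕ) = 0),
        stmt9aE_diag, stmt9cE_diag]
      by_cases hn : 0 + 1 < n
      · have hy : 1 - q 0 ^ 2 ≠ 0 := hq 0 hn
        simp only [if_pos hn]
        rw [stmt9kE_hi, stmt9wE_hi]
        simp only [stmt9aE]
        rw [stmt9cE_adj, stmt9sE_adj]
        field_simp
        ring
      · simp only [if_neg hn]
        ring
    · obtain ⟨m, rfl⟩ : ∃ m, i = m + 1 := ⟨i - 1, by omega⟩
      have hx : 1 - q m ^ 2 ≠ 0 := hq m (by omega)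
      rw [if_neg (show ¬(m + 1 = 0) by omega), if_neg (show ¬(m + 1 = 0) by omega),
        Nat.add_sub_cancel, stmt9kE_lo, stmt9kE_diag, if_neg (show ¬(m + 1 = 0) by omega),
        Nat.add_sub_cancel, stmt9wE_lo, stmt9wE_diag, if_neg (show ¬(m + 1 = 0) by omega),
        Nat.add_sub_cancel, stmt9aE_diag, stmt9cE_diag]
      have e1 : stmt9aE q d (m+1) m = -(d m) * q m := by
        rw [stmt9aE, stmt9sE_symm, stmt9cE_symm, stmt9sE_adj, stmt9cE_adj]
      have e2 : stmt9cE q (m+1) m = q m := by rw [stmt9cE_symm, stmt9cE_adj]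
      rw [e1, e2]
      by_cases hn : m + 1 + 1 < n
      · have hy : 1 - q (m+1) ^ 2 ≠ 0 := hq (m+1) hn
        simp only [if_pos hn]
        rw [stmt9kE_hi, stmt9wE_hi]
        simp only [stmt9aE]
        rw [stmt9cE_adj, stmt9sE_adj]
        field_simp
        ring
      · simp only [if_neg hn]
        field_simp
        ring
  · -- i > j
    by_cases h0 : j = 0
    · subst h0
      have hy : 1 - q 0 ^ 2 ≠ 0 := hq 0 (by omega)
      rw [if_pos (rfl : (0:ℕ) = 0), if_pos (rfl : (0:ℕ) = 0), stmt9kE_diag,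
        if_pos (rfl : (0:ℕ) = 0), stmt9wE_diag, if_pos (rfl : (0:ℕ) = 0)]
      simp only [if_pos (show 0 + 1 < n by omega)]
      rw [stmt9kE_hi, stmt9wE_hi]
      simp only [stmt9aE]
      have e1c : stmt9cE q i 0 = q 0 * stmt9cE q 1 i := by
        rw [stmt9cE_symm]; exact stmt9cE_bot q i 0 hgt
      have e1s : stmt9sE d i 0 = d 0 + stmt9sE d 1 i := by
        rw [stmt9sE_symm]; exact stmt9sE_bot d i 0 hgt
      have e2c : stmt9cE q i (0+1) = stmt9cE q 1 i := stmt9cE_symm q i 1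
      have e2s : stmt9sE d i (0+1) = stmt9sE d 1 i := stmt9sE_symm d i 1
      rw [e1c, e1s, e2c, e2s]
      field_simp
      ring
    · obtain ⟨m, rfl⟩ : ∃ m, j = m + 1 := ⟨j - 1, by omega⟩
      have hx : 1 - q m ^ 2 ≠ 0 := hq m (by omega)
      have hy : 1 - q (m+1) ^ 2 ≠ 0 := hq (m+1) (by omega)
      rw [if_neg (show ¬(m + 1 = 0) by omega), if_neg (show ¬(m + 1 = 0) by omega)]
      simp only [Nat.add_sub_cancel]
      rw [stmt9kE_lo, stmt9kE_diag, if_neg (show ¬(m + 1 = 0) by omega), Nat.add_sub_cancel,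
        stmt9kE_hi, stmt9wE_lo, stmt9wE_diag, if_neg (show ¬(m + 1 = 0) by omega),
        Nat.add_sub_cancel, stmt9wE_hi]
      simp only [if_pos (show m + 1 + 1 < n by omega)]
      simp only [stmt9aE]
      have e1c : stmt9cE q i m = q m * (q (m+1) * stmt9cE q (m+1+1) i) := by
        rw [stmt9cE_symm, stmt9cE_bot q i m (by omega), stmt9cE_bot q i (m+1) (by omega)]
      have e1s : stmt9sE d i m = d m + (d (m+1) + stmt9sE d (m+1+1) i) := by
        rw [stmt9sE_symm, stmt9sE_bot d i m (by omega), stmt9sE_bot d i (m+1) (by omega)]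
      have e2c : stmt9cE q i (m+1) = q (m+1) * stmt9cE q (m+1+1) i := by
        rw [stmt9cE_symm, stmt9cE_bot q i (m+1) (by omega)]
      have e2s : stmt9sE d i (m+1) = d (m+1) + stmt9sE d (m+1+1) i := by
        rw [stmt9sE_symm, stmt9sE_bot d i (m+1) (by omega)]
      have e3c : stmt9cE q i (m+1+1) = stmt9cE q (m+1+1) i := stmt9cE_symm q i (m+1+1)
      have e3s : stmt9sE d i (m+1+1) = stmt9sE d (m+1+1) i := stmt9sE_symm d i (m+1+1)
      rw [e1c, e1s, e2c, e2s, e3c, e3s]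
      field_simp
      ring

theorem stmt_9 (n : ℕ) (hn : 2 ≤ n) (α β : ℝ) (hα : 0 < α) (hβ : 0 < β)
    (d δ : ℕ → ℝ) (hd : ∀ i < n - 1, 0 < d i) (hδ : ∀ i < n - 1, 0 < δ i)
    (q : ℕ → ℝ) (hq : ∀ k, q k = Real.exp (-(α * d k + β * δ k)))
    (C A B : Matrix (Fin n) (Fin n) ℝ)
    (hC : ∀ i j : Fin n, C i j =
      ∏ k ∈ Finset.Ico (min (i : ℕ) (j : ℕ)) (max (i : ℕ) (j : ℕ)), q k)
    (hA : ∀ i j : Fin n, A i j =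
      -(∑ k ∈ Finset.Ico (min (i : ℕ) (j : ℕ)) (max (i : ℕ) (j : ℕ)), d k) *
        ∏ k ∈ Finset.Ico (min (i : ℕ) (j : ℕ)) (max (i : ℕ) (j : ℕ)), q k)
    (hB : ∀ i j : Fin n, B i j =
      -(∑ k ∈ Finset.Ico (min (i : ℕ) (j : ℕ)) (max (i : ℕ) (j : ℕ)), δ k) *
        ∏ k ∈ Finset.Ico (min (i : ℕ) (j : ℕ)) (max (i : ℕ) (j : ℕ)), q k) :
    IsUnit C ∧
    (1 / 2 : ℝ) * Matrix.trace (C⁻¹ * A * C⁻¹ * B) =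
      ∑ i ∈ Finset.range (n - 1),
        d i * δ i * q i ^ 2 * (1 + q i ^ 2) / (1 - q i ^ 2) ^ 2 := by
  have hq2 : ∀ k, k + 1 < n → 1 - q k ^ 2 ≠ 0 := by
    intro k hk
    have hk' : k < n - 1 := by omega
    have h1 : 0 < q k := by rw [hq k]; exact Real.exp_pos _
    have h2 : q k < 1 := by
      rw [hq k]
      have hdk := hd k hk'
      have hδk := hδ k hk'
      have hlt : -(α * d k + β * δ k) < 0 := by nlinarith
      calc Real.exp (-(α * d k + β * δ k)) < Real.exp 0 := Real.exp_lt_exp.mpr hlt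
        _ = 1 := Real.exp_zero
    nlinarith
  set K : Matrix (Fin n) (Fin n) ℝ := Matrix.of fun i j : Fin n => stmt9kE n q i j with hK
  set W : Matrix (Fin n) (Fin n) ℝ := Matrix.of fun i j : Fin n => stmt9wE n q d i j with hW
  have hCc : ∀ i j : Fin n, C i j = stmt9cE q i j := fun i j => hC i j
  have hAa : ∀ i j : Fin n, A i j = stmt9aE q d i j := fun i j => hA i j
  have hBb : ∀ i j : Fin n, B i j = stmt9aE q δ i j := fun i j => hB i j
  have hCK : C * K = 1 := by
    ext i j
    rw [Matrix.mul_apply, Matrix.one_apply]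
    have h1 : ∀ l : Fin n, C i l * K l j =
        (fun m => stmt9cE q (i : ℕ) m * stmt9kE n q m (j : ℕ)) (l : ℕ) := by
      intro l; rw [hCc]; rfl
    rw [Finset.sum_congr rfl fun l _ => h1 l,
      Fin.sum_univ_eq_sum_range (fun m => stmt9cE q (i : ℕ) m * stmt9kE n q m (j : ℕ)) n,
      stmt9_CK n q hq2 i j i.isLt j.isLt]
    simp [Fin.val_eq_val]
  have hKC : K * C = 1 := mul_eq_one_comm.mp hCK
  have hUnit : IsUnit C := ⟨⟨C, K, hCK, hKC⟩, rfl⟩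
  have hCinv : C⁻¹ = K := Matrix.inv_eq_right_inv hCK
  have hAK : A * K = C * W := by
    ext i j
    rw [Matrix.mul_apply, Matrix.mul_apply]
    have h1 : ∀ l : Fin n, A i l * K l j =
        (fun m => stmt9aE q d (i : ℕ) m * stmt9kE n q m (j : ℕ)) (l : ℕ) := by
      intro l; rw [hAa]; rfl
    have h2 : ∀ l : Fin n, C i l * W l j =
        (fun m => stmt9cE q (i : ℕ) m * stmt9wE n q d m (j : ℕ)) (l : ℕ) := by
      intro l; rw [hCc]; rfl
    rw [Finset.sum_congr rfl fun l _ => h1 l, Finset.sum_congr rfl fun l _ => h2 l,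
      Fin.sum_univ_eq_sum_range (fun m => stmt9aE q d (i : ℕ) m * stmt9kE n q m (j : ℕ)) n,
      Fin.sum_univ_eq_sum_range (fun m => stmt9cE q (i : ℕ) m * stmt9wE n q d m (j : ℕ)) n]
    exact stmt9_AKCW n q d hq2 i j i.isLt j.isLt
  have hKAK : K * A * K = W := by
    calc K * A * K = K * (A * K) := by rw [Matrix.mul_assoc]
      _ = K * (C * W) := by rw [hAK]
      _ = K * C * W := by rw [Matrix.mul_assoc]
      _ = W := by rw [hKC, Matrix.one_mul]
  refine ⟨hUnit, ?_⟩
  rw [hCinv]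
  have hWB : K * A * K * B = W * B := by rw [hKAK]
  rw [hWB]
  -- trace computation
  have hdiag : ∀ i : Fin n, (W * B) i i =
      (if (i : ℕ) = 0 then 0 else
        d ((i : ℕ) - 1) * δ ((i : ℕ) - 1) * q ((i : ℕ) - 1) ^ 2 *
          (1 + q ((i : ℕ) - 1) ^ 2) / (1 - q ((i : ℕ) - 1) ^ 2) ^ 2) +
      (if (i : ℕ) + 1 < n then
        d (i : ℕ) * δ (i : ℕ) * q (i : ℕ) ^ 2 * (1 + q (i : ℕ) ^ 2) /
          (1 - q (i : ℕ) ^ 2) ^ 2 else 0) := by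
    intro i
    rw [Matrix.mul_apply]
    have h1 : ∀ l : Fin n, W i l * B l i =
        (fun m => stmt9wE n q d (i : ℕ) m * stmt9aE q δ m (i : ℕ)) (l : ℕ) := by
      intro l; rw [hBb]; rfl
    have hvan : ∀ l, l ≠ (i : ℕ) - 1 → l ≠ (i : ℕ) → l ≠ (i : ℕ) + 1 →
        stmt9wE n q d (i : ℕ) l * stmt9aE q δ l (i : ℕ) = 0 := by
      intro l h1' h2' h3'
      rw [stmt9wE_far n q d (i : ℕ) l (by omega) (by omega) (by omega), zero_mul]
    rw [Finset.sum_congr rfl fun l _ => h1 l,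
      Fin.sum_univ_eq_sum_range (fun m => stmt9wE n q d (i : ℕ) m * stmt9aE q δ m (i : ℕ)) n,
      stmt9_sum_tridiag n (i : ℕ) i.isLt _ hvan, stmt9aE_diag, mul_zero, add_zero]
    have hadj : ∀ m : ℕ, stmt9aE q δ m (m + 1) = -(δ m) * q m := by
      intro m; rw [stmt9aE, stmt9sE_adj, stmt9cE_adj]
    by_cases h0 : (i : ℕ) = 0
    · rw [if_pos h0, if_pos h0, h0]
      by_cases hn1 : (0 : ℕ) + 1 < n
      · rw [if_pos hn1, if_pos hn1, stmt9wE_lo]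
        have e : stmt9aE q δ (0 + 1) 0 = -(δ 0) * q 0 := by
          rw [stmt9aE, stmt9sE_symm, stmt9cE_symm, stmt9sE_adj, stmt9cE_adj]
        rw [e]
        ring
      · rw [if_neg hn1, if_neg hn1]
    · obtain ⟨m, hm⟩ : ∃ m, (i : ℕ) = m + 1 := ⟨(i : ℕ) - 1, by omega⟩
      rw [if_neg h0, if_neg h0, hm, Nat.add_sub_cancel]
      have e1 : stmt9wE n q d (m + 1) m = -(d m * q m * (1 + q m ^ 2)) / (1 - q m ^ 2) ^ 2 :=
        stmt9wE_hi n q d m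
      rw [e1, hadj m]
      by_cases hn1 : m + 1 + 1 < n
      · rw [if_pos hn1, if_pos hn1, stmt9wE_lo]
        have e : stmt9aE q δ (m + 1 + 1) (m + 1) = -(δ (m + 1)) * q (m + 1) := by
          rw [stmt9aE, stmt9sE_symm, stmt9cE_symm, stmt9sE_adj, stmt9cE_adj]
        rw [e]
        ring
      · rw [if_neg hn1, if_neg hn1, add_zero, add_zero]
        ring
  rw [Matrix.trace]
  have h2' : ∑ i : Fin n, (W * B).diag i =
      ∑ m ∈ Finset.range n, ((if m = 0 then 0 else
        d (m - 1) * δ (m - 1) * q (m - 1) ^ 2 * (1 + q (m - 1) ^ 2) / (1 - q (m - 1) ^ 2) ^ 2) +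
      (if m + 1 < n then d m * δ m * q m ^ 2 * (1 + q m ^ 2) / (1 - q m ^ 2) ^ 2 else 0)) := by
    rw [← Fin.sum_univ_eq_sum_range]
    exact Finset.sum_congr rfl fun i _ => hdiag i
  rw [h2', Finset.sum_add_distrib]
  obtain ⟨p, rfl⟩ : ∃ p, n = p + 1 := ⟨n - 1, by omega⟩
  have s1 : ∑ m ∈ Finset.range (p + 1), (if m = 0 then 0 else
      d (m - 1) * δ (m - 1) * q (m - 1) ^ 2 * (1 + q (m - 1) ^ 2) / (1 - q (m - 1) ^ 2) ^ 2) =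
      ∑ m ∈ Finset.range p,
        d m * δ m * q m ^ 2 * (1 + q m ^ 2) / (1 - q m ^ 2) ^ 2 := by
    rw [Finset.sum_range_succ']
    simp
  have s2 : ∑ m ∈ Finset.range (p + 1),
      (if m + 1 < p + 1 then d m * δ m * q m ^ 2 * (1 + q m ^ 2) / (1 - q m ^ 2) ^ 2 else 0) =
      ∑ m ∈ Finset.range p,
        d m * δ m * q m ^ 2 * (1 + q m ^ 2) / (1 - q m ^ 2) ^ 2 := by
    rw [Finset.sum_range_succ, if_neg (by omega)]
    rw [add_zero]
    exact Finset.sum_congr rfl fun m hm =>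
      if_pos (by have := Finset.mem_range.mp hm; omega)
  rw [s1, s2]
  have : p + 1 - 1 = p := by omega
  rw [this]
  ring
end

section
/- Let n ≥ 2, α > 0, β > 0. Then Σ_{i=1}^{n−1} F(d_i, δ_i) < (n−1)/(2α²) for all positive d_1,…,d_{n−1}, δ_1,…,δ_{n−1}, where F(d,δ) := d² q² (1+q²)/(1−q²)² with q := exp(−α d − β δ); moreover the supremum of Σ_{i=1}^{n−1} F(d_i, δ_i) over all such positive increment vectors equals (n−1)/(2α²) and is not attained. Hence no design maximizing the Fisher information on the parameter α exists within the class of admissible monotonic designs. -/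
open Real Filter Topology

/-- Key pointwise bound. -/
lemma Ffun_key (α β : ℝ) (hα : 0 < α) (hβ : 0 < β) {d δ : ℝ} (hd : 0 < d) (hδ : 0 < δ) :
    d ^ 2 * Real.exp (-(α * d + β * δ)) ^ 2 *
      (1 + Real.exp (-(α * d + β * δ)) ^ 2) /
      (1 - Real.exp (-(α * d + β * δ)) ^ 2) ^ 2 < 1 / (2 * α ^ 2) := by
  set x := α * d + β * δ with hx
  have hx0 : 0 < x := by positivity
  set q := Real.exp (-x) with hq
  have hq0 : 0 < q := Real.exp_pos _
  have hq1 : q < 1 := by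
    rw [hq, Real.exp_lt_one_iff]; linarith
  have hsinh : x < Real.sinh x := (Real.self_lt_sinh_iff).mpr hx0
  have hqx : q * Real.exp x = 1 := by rw [hq, ← Real.exp_add]; simp
  have h1 : 1 - q ^ 2 = 2 * q * Real.sinh x := by
    rw [Real.sinh_eq, ← hq]; linear_combination -hqx
  have hden : 0 < 1 - q ^ 2 := by nlinarith
  rw [div_lt_div_iff₀ (by positivity) (by positivity)]
  have had : α * d < x := by nlinarith [mul_pos hβ hδ]
  have had0 : 0 < α * d := by positivity
  have hs2 : (α * d) ^ 2 < Real.sinh x ^ 2 := by nlinarith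
  have hrhs : (1 - q ^ 2) ^ 2 = 4 * q ^ 2 * Real.sinh x ^ 2 := by
    rw [h1]; ring
  rw [one_mul, hrhs]
  have h2 : q ^ 2 * (1 + q ^ 2) < 2 * q ^ 2 := by nlinarith
  calc d ^ 2 * q ^ 2 * (1 + q ^ 2) * (2 * α ^ 2)
      = 2 * ((α * d) ^ 2) * (q ^ 2 * (1 + q ^ 2)) := by ring
    _ < 2 * (Real.sinh x ^ 2) * (2 * q ^ 2) := by
        apply mul_lt_mul' ?_ h2 (by positivity) (by positivity)
        nlinarith
    _ = 4 * q ^ 2 * Real.sinh x ^ 2 := by ring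

/-- The contribution `F(d,δ) = d² q² (1+q²)/(1-q²)²`, `q = exp(-(α d + β δ))`,
of a pair of consecutive design points to the Fisher information on `α`. -/
noncomputable def Ffun (α β d δ : ℝ) : ℝ :=
  d ^ 2 * Real.exp (-(α * d + β * δ)) ^ 2 *
    (1 + Real.exp (-(α * d + β * δ)) ^ 2) /
    (1 - Real.exp (-(α * d + β * δ)) ^ 2) ^ 2

lemma Ffun_lt (α β : ℝ) (hα : 0 < α) (hβ : 0 < β) {d δ : ℝ} (hd : 0 < d) (hδ : 0 < δ) :
    Ffun α β d δ < 1 / (2 * α ^ 2) := Ffun_key α β hα hβ hd hδ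

/-- The limit along the family `d = t`, `δ = t²`, `t → 0⁺`. -/
lemma Ffun_tendsto (α β : ℝ) (hα : 0 < α) (hβ : 0 < β) :
    Tendsto (fun t : ℝ => Ffun α β t (t ^ 2)) (𝓝[>] 0) (𝓝 (1 / (2 * α ^ 2))) := by
  set Q : ℝ → ℝ := fun t => Real.exp (-(α * t + β * t ^ 2)) ^ 2 with hQ
  set g : ℝ → ℝ := fun t => 1 - Q t with hg
  -- derivative of g at 0 is 2α
  have hu : HasDerivAt (fun t : ℝ => -(α * t + β * t ^ 2)) (-α) 0 := by
    have h1 : HasDerivAt (fun t : ℝ => α * t) α 0 := by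
      simpa using (hasDerivAt_id (0:ℝ)).const_mul α
    have h2 : HasDerivAt (fun t : ℝ => β * t ^ 2) 0 0 := by
      simpa using (hasDerivAt_pow 2 (0:ℝ)).const_mul β
    have := (h1.add h2).neg; rw [add_zero] at this; exact this
  have hQ' : HasDerivAt Q (-(2 * α)) 0 := by
    have := (hu.exp).pow 2
    exact this.congr_deriv (by simp)
  have hg' : HasDerivAt g (2 * α) 0 := by
    have := hQ'.const_sub 1
    simpa [hg] using this
  have hg0 : g 0 = 0 := by simp [hg, hQ]
  have hslope : Tendsto (fun t : ℝ => g t / t) (𝓝[>] 0) (𝓝 (2 * α)) := by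
    have h := hasDerivAt_iff_tendsto_slope.mp hg'
    have h2 : Tendsto (slope g 0) (𝓝[>] 0) (𝓝 (2 * α)) :=
      h.mono_left (nhdsWithin_mono _ (fun t ht => by
        simp only [Set.mem_compl_iff, Set.mem_singleton_iff]
        exact ne_of_gt ht))
    refine h2.congr (fun t => ?_)
    simp [slope_def_field, hg0, div_eq_div_iff]
  have hinv : Tendsto (fun t : ℝ => t / g t) (𝓝[>] 0) (𝓝 (2 * α)⁻¹) := by
    have := hslope.inv₀ (by positivity)
    refine this.congr (fun t => ?_)
    rw [inv_div]
  have hQcont : Tendsto Q (𝓝[>] 0) (𝓝 1) := by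
    have : ContinuousAt Q 0 := by
      apply ContinuousAt.pow
      exact (Real.continuous_exp.continuousAt).comp (by fun_prop)
    have h0 : Q 0 = 1 := by simp [hQ]
    simpa [h0] using (this.tendsto.mono_left nhdsWithin_le_nhds)
  have key : Tendsto (fun t : ℝ => (t / g t) ^ 2 * (Q t * (1 + Q t)))
      (𝓝[>] 0) (𝓝 ((2 * α)⁻¹ ^ 2 * (1 * (1 + 1)))) :=
    (hinv.pow 2).mul (hQcont.mul (tendsto_const_nhds.add hQcont))
  have heq : ∀ t : ℝ, Ffun α β t (t ^ 2) = (t / g t) ^ 2 * (Q t * (1 + Q t)) := by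
    intro t
    simp only [Ffun, hg, hQ, div_pow]
    ring
  have hval : (2 * α)⁻¹ ^ 2 * (1 * (1 + 1)) = 1 / (2 * α ^ 2) := by
    field_simp; ring
  rw [← hval]
  exact key.congr (fun t => (heq t).symm)

theorem stmt_14 (n : ℕ) (hn : 2 ≤ n) (α β : ℝ) (hα : 0 < α) (hβ : 0 < β) :
    (∀ d δ : ℕ → ℝ, (∀ i < n - 1, 0 < d i) → (∀ i < n - 1, 0 < δ i) →
      ∑ i ∈ Finset.range (n - 1), Ffun α β (d i) (δ i) <
        ((n : ℝ) - 1) / (2 * α ^ 2)) ∧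
    IsLUB {y : ℝ | ∃ d δ : ℕ → ℝ, (∀ i < n - 1, 0 < d i) ∧ (∀ i < n - 1, 0 < δ i) ∧
        y = ∑ i ∈ Finset.range (n - 1), Ffun α β (d i) (δ i)}
      (((n : ℝ) - 1) / (2 * α ^ 2)) ∧
    ¬ ∃ d δ : ℕ → ℝ, (∀ i < n - 1, 0 < d i) ∧ (∀ i < n - 1, 0 < δ i) ∧
      ∑ i ∈ Finset.range (n - 1), Ffun α β (d i) (δ i) =
        ((n : ℝ) - 1) / (2 * α ^ 2) := by
  have hm : 1 ≤ n - 1 := by omega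
  have hcast : ((n : ℝ) - 1) = ((n - 1 : ℕ) : ℝ) := by
    have : (1:ℕ) ≤ n := by omega
    push_cast [Nat.cast_sub this]
    ring
  have part1 : ∀ d δ : ℕ → ℝ, (∀ i < n - 1, 0 < d i) → (∀ i < n - 1, 0 < δ i) →
      ∑ i ∈ Finset.range (n - 1), Ffun α β (d i) (δ i) <
        ((n : ℝ) - 1) / (2 * α ^ 2) := by
    intro d δ hd hδ
    have hlt : ∑ i ∈ Finset.range (n - 1), Ffun α β (d i) (δ i) <
        ∑ i ∈ Finset.range (n - 1), (1 / (2 * α ^ 2)) := by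
      apply Finset.sum_lt_sum_of_nonempty (Finset.nonempty_range_iff.mpr (by omega))
      intro i hi
      exact Ffun_lt α β hα hβ (hd i (Finset.mem_range.mp hi)) (hδ i (Finset.mem_range.mp hi))
    calc ∑ i ∈ Finset.range (n - 1), Ffun α β (d i) (δ i)
        < ∑ i ∈ Finset.range (n - 1), (1 / (2 * α ^ 2)) := hlt
      _ = ((n : ℝ) - 1) / (2 * α ^ 2) := by
          rw [Finset.sum_const, Finset.card_range, hcast, nsmul_eq_mul]
          ring
  refine ⟨part1, ⟨?_, ?_⟩, ?_⟩
  · rintro y ⟨d, δ, hd, hδ, rfl⟩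
    exact (part1 d δ hd hδ).le
  · intro b hb
    have htend : Tendsto (fun t : ℝ => ∑ _i ∈ Finset.range (n - 1), Ffun α β t (t ^ 2))
        (𝓝[>] 0) (𝓝 (((n : ℝ) - 1) / (2 * α ^ 2))) := by
      have h := (Ffun_tendsto α β hα hβ).const_mul ((n - 1 : ℕ) : ℝ)
      have heq : ∀ t : ℝ, ((n - 1 : ℕ) : ℝ) * Ffun α β t (t ^ 2) =
          ∑ _i ∈ Finset.range (n - 1), Ffun α β t (t ^ 2) := by
        intro t; rw [Finset.sum_const, Finset.card_range, nsmul_eq_mul]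
      have hval : ((n - 1 : ℕ) : ℝ) * (1 / (2 * α ^ 2)) = ((n : ℝ) - 1) / (2 * α ^ 2) := by
        rw [hcast]; ring
      rw [← hval]
      exact h.congr heq
    refine le_of_tendsto htend ?_
    filter_upwards [self_mem_nhdsWithin] with t ht
    exact hb ⟨fun _ => t, fun _ => t ^ 2, fun i _ => ht, fun i _ => pow_pos (Set.mem_Ioi.mp ht) 2, rfl⟩
  · rintro ⟨d, δ, hd, hδ, heq⟩
    exact absurd heq (ne_of_lt (part1 d δ hd hδ))
end

section
/- Let n ≥ 3, α > 0, β > 0, and view Φ(d_1,…,d_{n−1},δ_1,…,δ_{n−1}) := Σ_{i=2}^{n−1} Σ_{j=1}^{i−1} (d_i δ_j − d_j δ_i)² w_i w_j, with q_i := exp(−α d_i − β δ_i) and w_i := q_i²(1+q_i²)/(1−q_i²)², as a smooth function on the open set where all d_i > 0 and all δ_i > 0. If all 2(n−1) partial derivatives of Φ vanish at a point of this open set, then there exist positive constants c_1,…,c_{n−1} with d_i = c_i d_1 and δ_i = c_i δ_1 for all i, and at any such point Φ = 0, which is the global minimum value of Φ. Consequently Φ attains no maximum on this open set, i.e. no D-optimal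 design for the covariance parameters (α,β) exists within the class of admissible monotonic designs. -/
/-- `Φ = det M_r(n)`, the D-optimality objective function for the covariance
parameters `(α, β)` of the Ornstein-Uhlenbeck sheet, as a function of the
increment vectors `d`, `δ` (indexed `0, …, n-2`). -/
noncomputable def PhiObj (n : ℕ) (α β : ℝ) (d δ : ℕ → ℝ) : ℝ :=
  ∑ i ∈ Finset.range (n - 1), ∑ j ∈ Finset.range i,
    (d i * δ j - d j * δ i) ^ 2 *
      (Real.exp (-(α * d i + β * δ i)) ^ 2 *
        (1 + Real.exp (-(α * d i + β * δ i)) ^ 2) /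
        (1 - Real.exp (-(α * d i + β * δ i)) ^ 2) ^ 2) *
      (Real.exp (-(α * d j + β * δ j)) ^ 2 *
        (1 + Real.exp (-(α * d j + β * δ j)) ^ 2) /
        (1 - Real.exp (-(α * d j + β * δ j)) ^ 2) ^ 2)


noncomputable def psi (s : ℝ) : ℝ :=
  Real.exp (-s) ^ 2 * (1 + Real.exp (-s) ^ 2) / (1 - Real.exp (-s) ^ 2) ^ 2

noncomputable def psi' (s : ℝ) : ℝ :=
  -2 * Real.exp (-s) ^ 2 * (1 + 3 * Real.exp (-s) ^ 2) / (1 - Real.exp (-s) ^ 2) ^ 3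

lemma exp_neg_sq_lt_one {s : ℝ} (hs : 0 < s) : Real.exp (-s) ^ 2 < 1 := by
  have h : Real.exp (-s) < 1 := Real.exp_lt_one_iff.mpr (by linarith)
  nlinarith [Real.exp_pos (-s)]

lemma psi_nonneg (s : ℝ) : 0 ≤ psi s := by unfold psi; positivity

lemma psi_pos {s : ℝ} (hs : 0 < s) : 0 < psi s := by
  have h1 := exp_neg_sq_lt_one hs
  have h2 : (0:ℝ) < Real.exp (-s) ^ 2 := by positivity
  unfold psi
  apply div_pos (by nlinarith) (by nlinarith)

lemma aux_tanh {x : ℝ} (hx : 0 < x) : 2 * (Real.exp x - 1) < x * (Real.exp x + 1) := by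
  have key : StrictMonoOn (fun x : ℝ => x * Real.exp x + x - 2 * Real.exp x + 2) (Set.Ici 0) := by
    apply strictMonoOn_of_deriv_pos (convex_Ici 0)
    · fun_prop
    · intro y hy
      rw [interior_Ici, Set.mem_Ioi] at hy
      have hdy : HasDerivAt (fun x : ℝ => x * Real.exp x + x - 2 * Real.exp x + 2)
          (y * Real.exp y + 1 - Real.exp y) y := by
        have h := ((((hasDerivAt_id y).fun_mul (Real.hasDerivAt_exp y)).fun_add (hasDerivAt_id y)).fun_sub
          ((Real.hasDerivAt_exp y).const_mul 2)).add_const 2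
        have hval : y * Real.exp y + 1 - Real.exp y
            = 1 * Real.exp y + y * Real.exp y + 1 - 2 * Real.exp y + 0 := by ring
        rw [hval]
        refine h.congr_deriv ?_
        simp [id_eq]
      rw [hdy.deriv]
      have h1 : (1 - y) * Real.exp y < 1 := by
        rcases le_or_gt 1 y with h | h
        · nlinarith [Real.exp_pos y]
        · have h2 := Real.add_one_lt_exp (show -y ≠ 0 by intro h'; apply hy.ne'; linarith)
          rw [Real.exp_neg] at h2
          have h3 := mul_lt_mul_of_pos_right h2 (Real.exp_pos y)
          rw [inv_mul_cancel₀ (Real.exp_pos y).ne'] at h3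
          nlinarith
      nlinarith
  have h0 := key Set.self_mem_Ici (Set.mem_Ici.mpr hx.le) hx
  simp only at h0
  norm_num at h0
  nlinarith

lemma key_ineq {s : ℝ} (hs : 0 < s) :
    1 - (Real.exp (-s) ^ 2) ^ 2 < s * (1 + 3 * Real.exp (-s) ^ 2) := by
  have hvpos : (0:ℝ) < Real.exp (-s) ^ 2 := by positivity
  have hvexp : Real.exp (-s) ^ 2 = Real.exp (-(2*s)) := by
    rw [sq, ← Real.exp_add]; ring_nf
  have hvE : Real.exp (-s) ^ 2 * Real.exp (2*s) = 1 := by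
    rw [hvexp, ← Real.exp_add]; norm_num
  have h1 := aux_tanh (show (0:ℝ) < 2*s by linarith)
  have h1' : 1 - Real.exp (-s)^2 < s * (1 + Real.exp (-s)^2) := by
    nlinarith [mul_lt_mul_of_pos_left h1 hvpos]
  have h2 : 1 - Real.exp (-s)^2 ≤ 2*s := by
    have := Real.add_one_le_exp (-(2*s))
    rw [← hvexp] at this
    linarith
  nlinarith [mul_le_mul_of_nonneg_left h2 hvpos.le]

lemma bracket_neg {s : ℝ} (hs : 0 < s) : 2 * psi s + s * psi' s < 0 := by
  have hv1 := exp_neg_sq_lt_one hs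
  have hvpos : (0:ℝ) < Real.exp (-s) ^ 2 := by positivity
  have h1v : (1 : ℝ) - Real.exp (-s)^2 ≠ 0 := by linarith
  have key := key_ineq hs
  have heq : 2 * psi s + s * psi' s
      = 2 * Real.exp (-s)^2 * ((1 - (Real.exp (-s)^2)^2) - s*(1+3*Real.exp (-s)^2))
        / (1 - Real.exp (-s)^2)^3 := by
    unfold psi psi'
    field_simp
    ring
  rw [heq]
  apply div_neg_of_neg_of_pos
  · apply mul_neg_of_pos_of_neg (by positivity)
    linarith
  · have : (0:ℝ) < 1 - Real.exp (-s)^2 := by linarith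
    positivity

lemma hasDerivAt_psi {s : ℝ} (hs : 0 < s) : HasDerivAt psi (psi' s) s := by
  have hv1 := exp_neg_sq_lt_one hs
  have hvpos : (0:ℝ) < Real.exp (-s) ^ 2 := by positivity
  have h1v : (1 : ℝ) - Real.exp (-s)^2 ≠ 0 := by linarith
  have hE : HasDerivAt (fun t : ℝ => Real.exp (-t)) (-Real.exp (-s)) s := by
    simpa [Function.comp_def] using (Real.hasDerivAt_exp (-s)).comp s (hasDerivAt_neg s)
  have hv : HasDerivAt (fun t : ℝ => Real.exp (-t) ^ 2) (-2 * Real.exp (-s)^2) s := by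
    have h := hE.fun_pow 2
    refine h.congr_deriv ?_
    push_cast
    ring
  have hnum : HasDerivAt (fun t : ℝ => Real.exp (-t)^2 * (1 + Real.exp (-t)^2))
      (-2 * Real.exp (-s)^2 * (1 + Real.exp (-s)^2) + Real.exp (-s)^2 * (0 + -2*Real.exp (-s)^2)) s :=
    hv.mul ((hasDerivAt_const s (1:ℝ)).add hv)
  have hden : HasDerivAt (fun t : ℝ => (1 - Real.exp (-t)^2)^2)
      (4 * Real.exp (-s)^2 * (1 - Real.exp (-s)^2)) s := by
    have h := ((hasDerivAt_const s (1:ℝ)).fun_sub hv).fun_pow 2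
    refine h.congr_deriv ?_
    push_cast
    ring
  have hden0 : ((1 : ℝ) - Real.exp (-s)^2)^2 ≠ 0 := pow_ne_zero 2 h1v
  have hfinal := hnum.div hden hden0
  have hrw : psi' s = ((-2 * Real.exp (-s)^2 * (1 + Real.exp (-s)^2) + Real.exp (-s)^2 * (0 + -2*Real.exp (-s)^2)) * (1 - Real.exp (-s)^2)^2
      - Real.exp (-s)^2 * (1 + Real.exp (-s)^2) * (4 * Real.exp (-s)^2 * (1 - Real.exp (-s)^2)))
      / ((1 - Real.exp (-s)^2)^2)^2 := by
    unfold psi'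
    field_simp
    ring
  rw [hrw]
  exact hfinal

noncomputable def Gd (α β : ℝ) (d δ : ℕ → ℝ) (i k j : ℕ) : ℝ :=
  if k = i then
    (2*(d i*δ j - d j*δ i)*δ j * psi (α*d i+β*δ i)
      + (d i*δ j - d j*δ i)^2 * (psi' (α*d i+β*δ i) * α)) * psi (α*d j+β*δ j)
  else if j = i then
    (2*(d k*δ i - d i*δ k)*(-δ k)) * psi (α*d k+β*δ k) * psi (α*d i+β*δ i)
      + (d k*δ i - d i*δ k)^2 * psi (α*d k+β*δ k) * (psi' (α*d i+β*δ i) * α)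
  else 0

noncomputable def Gdel (α β : ℝ) (d δ : ℕ → ℝ) (i k j : ℕ) : ℝ :=
  if k = i then
    (2*(d i*δ j - d j*δ i)*(-(d j)) * psi (α*d i+β*δ i)
      + (d i*δ j - d j*δ i)^2 * (psi' (α*d i+β*δ i) * β)) * psi (α*d j+β*δ j)
  else if j = i then
    (2*(d k*δ i - d i*δ k)*(d k)) * psi (α*d k+β*δ k) * psi (α*d i+β*δ i)
      + (d k*δ i - d i*δ k)^2 * psi (α*d k+β*δ k) * (psi' (α*d i+β*δ i) * β)
  else 0

lemma hasDerivAt_phi_d (n : ℕ) (α β : ℝ) (hα : 0 < α) (hβ : 0 < β)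
    (d δ : ℕ → ℝ) (hd : ∀ i < n-1, 0 < d i) (hδ : ∀ i < n-1, 0 < δ i)
    (i : ℕ) (hi : i < n-1) :
    HasDerivAt (fun x : ℝ => PhiObj n α β (Function.update d i x) δ)
      (∑ k ∈ Finset.range (n-1), ∑ j ∈ Finset.range k, Gd α β d δ i k j) (d i) := by
  unfold PhiObj
  apply HasDerivAt.fun_sum
  intro k hk
  apply HasDerivAt.fun_sum
  intro j hj
  rw [Finset.mem_range] at hk hj
  have hsi : 0 < α * d i + β * δ i := add_pos (mul_pos hα (hd i hi)) (mul_pos hβ (hδ i hi))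
  have hlin : HasDerivAt (fun x : ℝ => α * x + β * δ i) α (d i) := by
    simpa using ((hasDerivAt_id (d i)).const_mul α).add_const (β * δ i)
  have hB : HasDerivAt (fun x : ℝ => Real.exp (-(α*x+β*δ i))^2 * (1+Real.exp (-(α*x+β*δ i))^2) / (1-Real.exp (-(α*x+β*δ i))^2)^2)
      (psi' (α*d i+β*δ i) * α) (d i) := by
    have h := (hasDerivAt_psi hsi).comp (d i) hlin
    simpa [psi, Function.comp_def] using h
  by_cases hki : k = i
  · subst hki
    have hji : j ≠ k := by omega
    simp only [Gd, if_pos rfl, Function.update_self, Function.update_of_ne hji]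
    have hA : HasDerivAt (fun x : ℝ => (x*δ j - d j*δ k)^2) (2*(d k*δ j - d j*δ k)*δ j) (d k) := by
      have h := (((hasDerivAt_id (d k)).mul_const (δ j)).sub_const (d j*δ k)).fun_pow 2
      refine h.congr_deriv ?_
      simp [id_eq]
      try ring
    have h := (hA.mul hB).mul_const
      (Real.exp (-(α*d j+β*δ j))^2 * (1+Real.exp (-(α*d j+β*δ j))^2) / (1-Real.exp (-(α*d j+β*δ j))^2)^2)
    exact h
  · by_cases hji : j = i
    · subst hji
      have hkj : k ≠ j := hki
      simp only [Gd, if_neg hki, if_pos rfl, Function.update_self, Function.update_of_ne hkj]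
      have hA : HasDerivAt (fun x : ℝ => (d k*δ j - x*δ k)^2) (2*(d k*δ j - d j*δ k)*(-δ k)) (d j) := by
        have h := (((hasDerivAt_id (d j)).mul_const (δ k)).const_sub (d k*δ j)).fun_pow 2
        refine h.congr_deriv ?_
        simp [id_eq]
        try ring
      have h := (hA.mul_const
        (Real.exp (-(α*d k+β*δ k))^2 * (1+Real.exp (-(α*d k+β*δ k))^2) / (1-Real.exp (-(α*d k+β*δ k))^2)^2)).mul hB
      exact h
    · simp only [Gd, if_neg hki, if_neg hji, Function.update_of_ne hki, Function.update_of_ne hji]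
      exact hasDerivAt_const _ _

lemma hasDerivAt_phi_del (n : ℕ) (α β : ℝ) (hα : 0 < α) (hβ : 0 < β)
    (d δ : ℕ → ℝ) (hd : ∀ i < n-1, 0 < d i) (hδ : ∀ i < n-1, 0 < δ i)
    (i : ℕ) (hi : i < n-1) :
    HasDerivAt (fun x : ℝ => PhiObj n α β d (Function.update δ i x))
      (∑ k ∈ Finset.range (n-1), ∑ j ∈ Finset.range k, Gdel α β d δ i k j) (δ i) := by
  unfold PhiObj
  apply HasDerivAt.fun_sum
  intro k hk
  apply HasDerivAt.fun_sum
  intro j hj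
  rw [Finset.mem_range] at hk hj
  have hsi : 0 < α * d i + β * δ i := add_pos (mul_pos hα (hd i hi)) (mul_pos hβ (hδ i hi))
  have hlin : HasDerivAt (fun x : ℝ => α * d i + β * x) β (δ i) := by
    simpa using ((hasDerivAt_id (δ i)).const_mul β).const_add (α * d i)
  have hB : HasDerivAt (fun x : ℝ => Real.exp (-(α*d i+β*x))^2 * (1+Real.exp (-(α*d i+β*x))^2) / (1-Real.exp (-(α*d i+β*x))^2)^2)
      (psi' (α*d i+β*δ i) * β) (δ i) := by
    have h := (hasDerivAt_psi hsi).comp (δ i) hlin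
    simpa [psi, Function.comp_def] using h
  by_cases hki : k = i
  · subst hki
    have hji : j ≠ k := by omega
    simp only [Gdel, if_pos rfl, Function.update_self, Function.update_of_ne hji]
    have hA : HasDerivAt (fun x : ℝ => (d k*δ j - d j*x)^2) (2*(d k*δ j - d j*δ k)*(-(d j))) (δ k) := by
      have h := (((hasDerivAt_id (δ k)).const_mul (d j)).const_sub (d k*δ j)).fun_pow 2
      refine h.congr_deriv ?_
      simp [id_eq]
      try ring
    have h := (hA.mul hB).mul_const
      (Real.exp (-(α*d j+β*δ j))^2 * (1+Real.exp (-(α*d j+β*δ j))^2) / (1-Real.exp (-(α*d j+β*δ j))^2)^2)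
    exact h
  · by_cases hji : j = i
    · subst hji
      have hkj : k ≠ j := hki
      simp only [Gdel, if_neg hki, if_pos rfl, Function.update_self, Function.update_of_ne hkj]
      have hA : HasDerivAt (fun x : ℝ => (d k*x - d j*δ k)^2) (2*(d k*δ j - d j*δ k)*(d k)) (δ j) := by
        have h := (((hasDerivAt_id (δ j)).const_mul (d k)).sub_const (d j*δ k)).fun_pow 2
        refine h.congr_deriv ?_
        simp [id_eq]
        try ring
      have h := (hA.mul_const
        (Real.exp (-(α*d k+β*δ k))^2 * (1+Real.exp (-(α*d k+β*δ k))^2) / (1-Real.exp (-(α*d k+β*δ k))^2)^2)).mul hB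
      exact h
    · simp only [Gdel, if_neg hki, if_neg hji, Function.update_of_ne hki, Function.update_of_ne hji]
      exact hasDerivAt_const _ _

noncomputable def Hc (α β : ℝ) (d δ : ℕ → ℝ) (i k j : ℕ) : ℝ :=
  if k = i then (d i*δ j - d j*δ i)^2 * psi (α*d j+β*δ j)
  else if j = i then (d k*δ i - d i*δ k)^2 * psi (α*d k+β*δ k)
  else 0


lemma crit_prop (n : ℕ) (hn : 3 ≤ n) (α β : ℝ) (hα : 0 < α) (hβ : 0 < β)
    (d δ : ℕ → ℝ) (hd : ∀ i < n-1, 0 < d i) (hδ : ∀ i < n-1, 0 < δ i)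
    (hcrit : ∀ i < n-1,
        deriv (fun x : ℝ => PhiObj n α β (Function.update d i x) δ) (d i) = 0 ∧
        deriv (fun x : ℝ => PhiObj n α β d (Function.update δ i x)) (δ i) = 0) :
    ∀ i < n-1, d i * δ 0 - d 0 * δ i = 0 := by
  intro i hi
  rcases Nat.eq_zero_or_pos i with rfl | hipos
  · ring
  have h0n : 0 < n - 1 := by omega
  have e1 : (∑ k ∈ Finset.range (n-1), ∑ j ∈ Finset.range k, Gd α β d δ i k j) = 0 := by
    rw [← (hasDerivAt_phi_d n α β hα hβ d δ hd hδ i hi).deriv]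
    exact (hcrit i hi).1
  have e2 : (∑ k ∈ Finset.range (n-1), ∑ j ∈ Finset.range k, Gdel α β d δ i k j) = 0 := by
    rw [← (hasDerivAt_phi_del n α β hα hβ d δ hd hδ i hi).deriv]
    exact (hcrit i hi).2
  have hsi : 0 < α * d i + β * δ i := add_pos (mul_pos hα (hd i hi)) (mul_pos hβ (hδ i hi))
  have hbr := bracket_neg hsi
  have hsum : (2 * psi (α*d i+β*δ i) + (α*d i+β*δ i) * psi' (α*d i+β*δ i))
      * (∑ k ∈ Finset.range (n-1), ∑ j ∈ Finset.range k, Hc α β d δ i k j) = 0 := by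
    have expand : ∀ k ∈ Finset.range (n-1), ∀ j ∈ Finset.range k,
        (2 * psi (α*d i+β*δ i) + (α*d i+β*δ i) * psi' (α*d i+β*δ i)) * Hc α β d δ i k j
          = d i * Gd α β d δ i k j + δ i * Gdel α β d δ i k j := by
      intro k hk j hj
      rw [Finset.mem_range] at hk hj
      by_cases hki : k = i
      · subst hki
        have hji : ¬ (j = k) := by omega
        simp only [Hc, Gd, Gdel, if_pos rfl, if_neg hji, if_true, eq_self_iff_true]
        ring
      · by_cases hji : j = i
        · subst hji
          simp only [Hc, Gd, Gdel, if_neg hki, if_pos rfl, if_true, eq_self_iff_true]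
          ring
        · simp only [Hc, Gd, Gdel, if_neg hki, if_neg hji]
          ring
    have step : (2 * psi (α*d i+β*δ i) + (α*d i+β*δ i) * psi' (α*d i+β*δ i))
        * (∑ k ∈ Finset.range (n-1), ∑ j ∈ Finset.range k, Hc α β d δ i k j)
        = d i * (∑ k ∈ Finset.range (n-1), ∑ j ∈ Finset.range k, Gd α β d δ i k j)
          + δ i * (∑ k ∈ Finset.range (n-1), ∑ j ∈ Finset.range k, Gdel α β d δ i k j) := by
      simp only [Finset.mul_sum]
      rw [← Finset.sum_add_distrib]
      refine Finset.sum_congr rfl fun k hk => ?_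
      rw [← Finset.sum_add_distrib]
      exact Finset.sum_congr rfl fun j hj => expand k hk j hj
    rw [step, e1, e2]
    ring
  have hS : (∑ k ∈ Finset.range (n-1), ∑ j ∈ Finset.range k, Hc α β d δ i k j) = 0 := by
    rcases mul_eq_zero.mp hsum with h | h
    · exact absurd h (ne_of_lt hbr)
    · exact h
  have hHnn : ∀ k, ∀ j, 0 ≤ Hc α β d δ i k j := by
    intro k j
    unfold Hc
    split_ifs
    · exact mul_nonneg (sq_nonneg _) (psi_nonneg _)
    · exact mul_nonneg (sq_nonneg _) (psi_nonneg _)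
    · exact le_refl 0
  have hinner : (∑ j ∈ Finset.range i, Hc α β d δ i i j) = 0 := by
    have hnn : ∀ k ∈ Finset.range (n-1), 0 ≤ ∑ j ∈ Finset.range k, Hc α β d δ i k j :=
      fun k _ => Finset.sum_nonneg fun j _ => hHnn k j
    exact (Finset.sum_eq_zero_iff_of_nonneg hnn).mp hS i (Finset.mem_range.mpr hi)
  have hterm : Hc α β d δ i i 0 = 0 :=
    (Finset.sum_eq_zero_iff_of_nonneg (fun j _ => hHnn i j)).mp hinner 0 (Finset.mem_range.mpr hipos)
  have hs0 : 0 < α * d 0 + β * δ 0 := add_pos (mul_pos hα (hd 0 h0n)) (mul_pos hβ (hδ 0 h0n))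
  have hpsi0 := psi_pos hs0
  simp only [Hc, if_pos rfl] at hterm
  have hsq : (d i * δ 0 - d 0 * δ i)^2 = 0 := by
    rcases mul_eq_zero.mp hterm with h | h
    · exact h
    · exact absurd h (ne_of_gt hpsi0)
  exact pow_eq_zero_iff (by norm_num) |>.mp hsq

theorem stmt_15 (n : ℕ) (hn : 3 ≤ n) (α β : ℝ) (hα : 0 < α) (hβ : 0 < β) :
    (∀ d δ : ℕ → ℝ, (∀ i < n - 1, 0 < d i) → (∀ i < n - 1, 0 < δ i) →
      (∀ i < n - 1,
        deriv (fun x : ℝ => PhiObj n α β (Function.update d i x) δ) (d i) = 0 ∧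
        deriv (fun x : ℝ => PhiObj n α β d (Function.update δ i x)) (δ i) = 0) →
      ((∃ c : ℕ → ℝ, (∀ i < n - 1, 0 < c i) ∧
          ∀ i < n - 1, d i = c i * d 0 ∧ δ i = c i * δ 0) ∧
        PhiObj n α β d δ = 0 ∧
        ∀ d' δ' : ℕ → ℝ, (∀ i < n - 1, 0 < d' i) → (∀ i < n - 1, 0 < δ' i) →
          PhiObj n α β d δ ≤ PhiObj n α β d' δ')) ∧
    ¬ ∃ d δ : ℕ → ℝ, (∀ i < n - 1, 0 < d i) ∧ (∀ i < n - 1, 0 < δ i) ∧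
        ∀ d' δ' : ℕ → ℝ, (∀ i < n - 1, 0 < d' i) → (∀ i < n - 1, 0 < δ' i) →
          PhiObj n α β d' δ' ≤ PhiObj n α β d δ := by
  have h0n : 0 < n - 1 := by omega
  have h1n : 1 < n - 1 := by omega
  have phi_nonneg : ∀ d' δ' : ℕ → ℝ, 0 ≤ PhiObj n α β d' δ' := by
    intro d' δ'
    unfold PhiObj
    refine Finset.sum_nonneg fun k _ => Finset.sum_nonneg fun j _ => ?_
    positivity
  have part1 : ∀ d δ : ℕ → ℝ, (∀ i < n - 1, 0 < d i) → (∀ i < n - 1, 0 < δ i) →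
      (∀ i < n - 1,
        deriv (fun x : ℝ => PhiObj n α β (Function.update d i x) δ) (d i) = 0 ∧
        deriv (fun x : ℝ => PhiObj n α β d (Function.update δ i x)) (δ i) = 0) →
      ((∃ c : ℕ → ℝ, (∀ i < n - 1, 0 < c i) ∧
          ∀ i < n - 1, d i = c i * d 0 ∧ δ i = c i * δ 0) ∧
        PhiObj n α β d δ = 0 ∧
        ∀ d' δ' : ℕ → ℝ, (∀ i < n - 1, 0 < d' i) → (∀ i < n - 1, 0 < δ' i) →
          PhiObj n α β d δ ≤ PhiObj n α β d' δ') := by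
    intro d δ hd hδ hcrit
    have hD := crit_prop n hn α β hα hβ d δ hd hδ hcrit
    have hd0 := hd 0 h0n
    have hδ0 := hδ 0 h0n
    have hc : ∀ i < n-1, d i = (d i / d 0) * d 0 ∧ δ i = (d i / d 0) * δ 0 := by
      intro i hi
      have h := hD i hi
      constructor
      · rw [div_mul_cancel₀ _ (ne_of_gt hd0)]
      · field_simp
        linear_combination -h
    have hzero : PhiObj n α β d δ = 0 := by
      unfold PhiObj
      refine Finset.sum_eq_zero fun k hk => Finset.sum_eq_zero fun j hj => ?_
      rw [Finset.mem_range] at hk hj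
      have h1 := hD k hk
      have h2 := hD j (lt_trans hj hk)
      have hkey : d k * δ j - d j * δ k = 0 := by
        have h3 : (d k * δ j - d j * δ k) * (d 0 * δ 0) = 0 := by linear_combination (δ j * d 0) * h1 - (δ k * d 0) * h2
        rcases mul_eq_zero.mp h3 with h | h
        · exact h
        · exact absurd h (ne_of_gt (mul_pos hd0 hδ0))
      rw [hkey]
      ring
    refine ⟨⟨fun i => d i / d 0, fun i hi => div_pos (hd i hi) hd0, hc⟩, hzero, ?_⟩
    intro d' δ' _ _
    rw [hzero]
    exact phi_nonneg d' δ'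
  refine ⟨part1, ?_⟩
  rintro ⟨d, δ, hd, hδ, hmax⟩
  have hcrit : ∀ i < n - 1,
      deriv (fun x : ℝ => PhiObj n α β (Function.update d i x) δ) (d i) = 0 ∧
      deriv (fun x : ℝ => PhiObj n α β d (Function.update δ i x)) (δ i) = 0 := by
    intro i hi
    constructor
    · apply IsLocalMax.deriv_eq_zero
      filter_upwards [Ioi_mem_nhds (hd i hi)] with x hx
      have hdx : ∀ j < n-1, 0 < Function.update d i x j := by
        intro j hj
        by_cases h : j = i
        · subst h; rw [Function.update_self]; exact hx
        · rw [Function.update_of_ne h]; exact hd j hj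
      show PhiObj n α β (Function.update d i x) δ ≤ PhiObj n α β (Function.update d i (d i)) δ
      rw [Function.update_eq_self]
      exact hmax (Function.update d i x) δ hdx hδ
    · apply IsLocalMax.deriv_eq_zero
      filter_upwards [Ioi_mem_nhds (hδ i hi)] with x hx
      have hδx : ∀ j < n-1, 0 < Function.update δ i x j := by
        intro j hj
        by_cases h : j = i
        · subst h; rw [Function.update_self]; exact hx
        · rw [Function.update_of_ne h]; exact hδ j hj
      show PhiObj n α β d (Function.update δ i x) ≤ PhiObj n α β d (Function.update δ i (δ i))
      rw [Function.update_eq_self]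
      exact hmax d (Function.update δ i x) hd hδx
  obtain ⟨_, hzero, _⟩ := part1 d δ hd hδ hcrit
  have hpos : 0 < PhiObj n α β (fun _ => 1) (fun j => if j = 0 then 1 else 2) := by
    unfold PhiObj
    apply Finset.sum_pos'
    · intro k _
      exact Finset.sum_nonneg fun j _ => by positivity
    · refine ⟨1, Finset.mem_range.mpr h1n, ?_⟩
      rw [Finset.sum_range_one]
      have t1 : (0:ℝ) < α * 1 + β * 2 := by nlinarith
      have t2 : (0:ℝ) < α * 1 + β * 1 := by nlinarith
      have key : (0:ℝ) < ((1:ℝ) * 1 - 1 * 2) ^ 2 * psi (α * 1 + β * 2) * psi (α * 1 + β * 1) := by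
        have := mul_pos (mul_pos (show (0:ℝ) < ((1:ℝ) * 1 - 1 * 2) ^ 2 by norm_num)
          (psi_pos t1)) (psi_pos t2)
        exact this
      exact key
  have hle := hmax (fun _ => 1) (fun j => if j = 0 then 1 else 2)
    (fun i _ => one_pos)
    (by intro i _; split_ifs <;> norm_num)
  rw [hzero] at hle
  linarith
end

section
/- Let n ≥ 3, α > 0, β > 0, and on the open set of (d_1,…,d_{n−1},δ_1,…,δ_{n−1}) with all coordinates positive define Ψ := M_θ · Φ, where M_θ := 1 + Σ_{i=1}^{n−1} (1−q_i)/(1+q_i), Φ := Σ_{i=2}^{n−1} Σ_{j=1}^{i−1} (d_i δ_j − d_j δ_i)² w_i w_j, q_i := exp(−α d_i − β δ_i) and w_i := q_i²(1+q_i²)/(1−q_i²)². Then Ψ ≥ 0, Ψ vanishes at every point with d_i = c_i d_1 and δ_i = c_i δ_1 for positive constants c_i (in particular at every equidistant design), and if all partial derivatives of Ψ vanish at a point of the open set, then Ψ = 0 at that point; hence Ψ attains no maximum on the open set and no design jointly D-optimal for θ, α and β exists within the class of admissible monotonic designs. -/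
/-- The Fisher information on the trend parameter `θ`. -/
noncomputable def MthetaObj (n : ℕ) (α β : ℝ) (d δ : ℕ → ℝ) : ℝ :=
  1 + ∑ i ∈ Finset.range (n - 1),
    (1 - Real.exp (-(α * d i + β * δ i))) / (1 + Real.exp (-(α * d i + β * δ i)))

/-- The full D-optimality objective `Ψ = M_θ · Φ`. -/
noncomputable def PsiObj (n : ℕ) (α β : ℝ) (d δ : ℕ → ℝ) : ℝ :=
  MthetaObj n α β d δ * PhiObj n α β d δ

/-! ### Auxiliary definitions -/

/-- The weight `w = q²(1+q²)/(1-q²)²` with `q = e^{-t}`. -/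
noncomputable def Wt (α β : ℝ) (d δ : ℕ → ℝ) (k : ℕ) : ℝ :=
  Real.exp (-(α * d k + β * δ k)) ^ 2 * (1 + Real.exp (-(α * d k + β * δ k)) ^ 2) /
    (1 - Real.exp (-(α * d k + β * δ k)) ^ 2) ^ 2

noncomputable def Ct (α β : ℝ) (d δ : ℕ → ℝ) (i k j : ℕ) : ℝ :=
  if k = i then δ j * α⁻¹ + d j * β⁻¹ else if j = i then -(δ k * α⁻¹ + d k * β⁻¹) else 0

noncomputable def gt' (α β : ℝ) (d δ : ℕ → ℝ) (i j : ℕ) : ℝ :=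
  2 * (d i * δ j - d j * δ i) * (δ j * α⁻¹ + d j * β⁻¹) * Wt α β d δ j

/-! ### Positivity helpers -/

lemma aux_w_nonneg (t : ℝ) :
    0 ≤ Real.exp (-t) ^ 2 * (1 + Real.exp (-t) ^ 2) / (1 - Real.exp (-t) ^ 2) ^ 2 := by
  apply div_nonneg (by positivity) (by positivity)

lemma aux_w_pos {t : ℝ} (ht : 0 < t) :
    0 < Real.exp (-t) ^ 2 * (1 + Real.exp (-t) ^ 2) / (1 - Real.exp (-t) ^ 2) ^ 2 := by
  have h0 : 0 < Real.exp (-t) := Real.exp_pos _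
  have h1 : Real.exp (-t) < 1 := Real.exp_lt_one_iff.mpr (by linarith)
  have h2 : Real.exp (-t) ^ 2 < 1 := by nlinarith
  exact div_pos (by positivity) (pow_pos (by linarith) 2)

lemma phi_nonneg (n : ℕ) (α β : ℝ) (d δ : ℕ → ℝ) : 0 ≤ PhiObj n α β d δ := by
  unfold PhiObj
  apply Finset.sum_nonneg; intro k _
  apply Finset.sum_nonneg; intro j _
  exact mul_nonneg (mul_nonneg (sq_nonneg _) (aux_w_nonneg _)) (aux_w_nonneg _)

lemma mtheta_ge_one (n : ℕ) (α β : ℝ) (hα : 0 < α) (hβ : 0 < β) (d δ : ℕ → ℝ)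
    (hd : ∀ k < n - 1, 0 < d k) (hδ : ∀ k < n - 1, 0 < δ k) :
    1 ≤ MthetaObj n α β d δ := by
  unfold MthetaObj
  have : 0 ≤ ∑ i ∈ Finset.range (n - 1),
      (1 - Real.exp (-(α * d i + β * δ i))) / (1 + Real.exp (-(α * d i + β * δ i))) := by
    apply Finset.sum_nonneg; intro k hk
    have hk' := Finset.mem_range.mp hk
    have h1 : Real.exp (-(α * d k + β * δ k)) ≤ 1 := by
      apply Real.exp_le_one_iff.mpr
      have := hd k hk'; have := hδ k hk'; nlinarith
    have h0 : 0 < Real.exp (-(α * d k + β * δ k)) := Real.exp_pos _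
    apply div_nonneg (by linarith) (by linarith)
  linarith
lemma upd_diff (d : ℕ → ℝ) (i k : ℕ) :
    Differentiable ℝ (fun p : ℝ × ℝ => Function.update d i p.1 k) := by
  rcases eq_or_ne k i with h | h
  · subst h; simp only [Function.update_self]; exact differentiable_fst
  · simp only [Function.update_of_ne h]; exact differentiable_const _

lemma upd_diff' (d : ℕ → ℝ) (i k : ℕ) :
    Differentiable ℝ (fun p : ℝ × ℝ => Function.update d i p.2 k) := by
  rcases eq_or_ne k i with h | h
  · subst h; simp only [Function.update_self]; exact differentiable_snd
  · simp only [Function.update_of_ne h]; exact differentiable_const _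

lemma psi_diff (n : ℕ) (α β : ℝ) (hα : 0 < α) (hβ : 0 < β) (d δ : ℕ → ℝ) (i : ℕ)
    (hd : ∀ k < n - 1, 0 < d k) (hδ : ∀ k < n - 1, 0 < δ k) :
    DifferentiableAt ℝ
      (fun p : ℝ × ℝ => PsiObj n α β (Function.update d i p.1) (Function.update δ i p.2))
      (d i, δ i) := by
  have hqd : ∀ k, DifferentiableAt ℝ
      (fun p : ℝ × ℝ => Real.exp (-(α * Function.update d i p.1 k + β * Function.update δ i p.2 k)))
      (d i, δ i) := by
    intro k
    exact (((((upd_diff d i k).const_mul α).add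
      ((upd_diff' δ i k).const_mul β)).neg).exp).differentiableAt
  have hqpos : ∀ k, (0:ℝ) < Real.exp (-(α * d k + β * δ k)) := fun k => Real.exp_pos _
  have hqlt : ∀ k < n - 1, Real.exp (-(α * d k + β * δ k)) < 1 := by
    intro k hk
    apply Real.exp_lt_one_iff.mpr
    have := hd k hk; have := hδ k hk; nlinarith
  have hw : ∀ l, l < n - 1 → DifferentiableAt ℝ (fun p : ℝ × ℝ =>
      Real.exp (-(α * Function.update d i p.1 l + β * Function.update δ i p.2 l)) ^ 2 *
        (1 + Real.exp (-(α * Function.update d i p.1 l + β * Function.update δ i p.2 l)) ^ 2) *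
        ((1 - Real.exp (-(α * Function.update d i p.1 l + β * Function.update δ i p.2 l)) ^ 2) ^ 2)⁻¹)
      (d i, δ i) := by
    intro l hl
    have hnum : DifferentiableAt ℝ (fun p : ℝ × ℝ =>
        Real.exp (-(α * Function.update d i p.1 l + β * Function.update δ i p.2 l)) ^ 2 *
          (1 + Real.exp (-(α * Function.update d i p.1 l + β * Function.update δ i p.2 l)) ^ 2))
        (d i, δ i) :=
      ((hqd l).pow 2).mul ((differentiableAt_const _).add ((hqd l).pow 2))
    have hden : DifferentiableAt ℝ (fun p : ℝ × ℝ =>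
        (1 - Real.exp (-(α * Function.update d i p.1 l + β * Function.update δ i p.2 l)) ^ 2) ^ 2)
        (d i, δ i) :=
      ((differentiableAt_const _).sub ((hqd l).pow 2)).pow 2
    refine hnum.mul (hden.inv ?_)
    simp only [Function.update_eq_self]
    have h1 := hqpos l; have h2 := hqlt l hl
    have h3 : Real.exp (-(α * d l + β * δ l)) ^ 2 < 1 := by nlinarith
    exact ne_of_gt (pow_pos (by linarith) 2)
  unfold PsiObj MthetaObj PhiObj
  simp only [div_eq_mul_inv]
  apply DifferentiableAt.mul
  · apply DifferentiableAt.const_add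
    apply DifferentiableAt.fun_sum
    intro k hk
    have hnum : DifferentiableAt ℝ (fun p : ℝ × ℝ =>
        1 - Real.exp (-(α * Function.update d i p.1 k + β * Function.update δ i p.2 k)))
        (d i, δ i) := (differentiableAt_const _).sub (hqd k)
    have hden : DifferentiableAt ℝ (fun p : ℝ × ℝ =>
        1 + Real.exp (-(α * Function.update d i p.1 k + β * Function.update δ i p.2 k)))
        (d i, δ i) := (differentiableAt_const _).add (hqd k)
    refine hnum.mul (hden.inv ?_)
    simp only [Function.update_eq_self]
    positivity
  · apply DifferentiableAt.fun_sum
    intro k hk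
    apply DifferentiableAt.fun_sum
    intro j hj
    have hk' : k < n - 1 := Finset.mem_range.mp hk
    have hj' : j < n - 1 := lt_trans (Finset.mem_range.mp hj) hk'
    exact ((((((upd_diff d i k).differentiableAt.mul (upd_diff' δ i j).differentiableAt).sub
      ((upd_diff d i j).differentiableAt.mul (upd_diff' δ i k).differentiableAt)).pow 2).mul
      (hw k hk')).mul (hw j hj'))

/-! ### The critical point equation -/

lemma crit_eq (n : ℕ) (α β : ℝ) (hα : 0 < α) (hβ : 0 < β) (d δ : ℕ → ℝ)
    (hd : ∀ k < n - 1, 0 < d k) (hδ : ∀ k < n - 1, 0 < δ k) (i : ℕ) (hi : i < n - 1)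
    (h1 : deriv (fun x : ℝ => PsiObj n α β (Function.update d i x) δ) (d i) = 0)
    (h2 : deriv (fun y : ℝ => PsiObj n α β d (Function.update δ i y)) (δ i) = 0) :
    d i * (∑ j ∈ Finset.range (n - 1),
        Wt α β d δ j * (δ j ^ 2 * α⁻¹ + d j * δ j * β⁻¹)) =
    δ i * (∑ j ∈ Finset.range (n - 1),
        Wt α β d δ j * (d j * δ j * α⁻¹ + d j ^ 2 * β⁻¹)) := by
  classical
  set G : ℝ × ℝ → ℝ :=
    fun p => PsiObj n α β (Function.update d i p.1) (Function.update δ i p.2) with hGdef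
  have hdiff : DifferentiableAt ℝ G (d i, δ i) := psi_diff n α β hα hβ d δ i hd hδ
  set L := fderiv ℝ G (d i, δ i) with hLdef
  have hL : HasFDerivAt G L (d i, δ i) := hdiff.hasFDerivAt
  -- partial derivative in the first slot
  have hx : HasDerivAt (fun x : ℝ => G (x, δ i)) (L (1, 0)) (d i) := by
    have hpath : HasDerivAt (fun x : ℝ => ((x, δ i) : ℝ × ℝ)) ((1 : ℝ), (0 : ℝ)) (d i) :=
      (hasDerivAt_id (d i)).prodMk (hasDerivAt_const (d i) (δ i))
    exact hL.comp_hasDerivAt (d i) hpath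
  have hy : HasDerivAt (fun y : ℝ => G (d i, y)) (L (0, 1)) (δ i) := by
    have hpath : HasDerivAt (fun y : ℝ => ((d i, y) : ℝ × ℝ)) ((0 : ℝ), (1 : ℝ)) (δ i) :=
      (hasDerivAt_const (δ i) (d i)).prodMk (hasDerivAt_id (δ i))
    exact hL.comp_hasDerivAt (δ i) hpath
  have e1 : L (1, 0) = 0 := by
    have hfx : (fun x : ℝ => G (x, δ i)) = fun x : ℝ => PsiObj n α β (Function.update d i x) δ := by
      funext x
      show PsiObj n α β (Function.update d i x) (Function.update δ i (δ i)) = _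
      rw [Function.update_eq_self]
    rw [hfx] at hx
    rw [← hx.deriv]; exact h1
  have e2 : L (0, 1) = 0 := by
    have hfy : (fun y : ℝ => G (d i, y)) = fun y : ℝ => PsiObj n α β d (Function.update δ i y) := by
      funext y
      show PsiObj n α β (Function.update d i (d i)) (Function.update δ i y) = _
      rw [Function.update_eq_self]
    rw [hfy] at hy
    rw [← hy.deriv]; exact h2
  -- the diagonal path along which all exponentials are constant
  have hγ : HasDerivAt (fun s : ℝ => ((d i + s * α⁻¹, δ i - s * β⁻¹) : ℝ × ℝ))
      ((α⁻¹, -β⁻¹) : ℝ × ℝ) 0 := by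
    have ha : HasDerivAt (fun s : ℝ => d i + s * α⁻¹) α⁻¹ 0 := by
      simpa using ((hasDerivAt_id (0 : ℝ)).mul_const α⁻¹).const_add (d i)
    have hb : HasDerivAt (fun s : ℝ => δ i - s * β⁻¹) (-β⁻¹) 0 := by
      simpa using ((hasDerivAt_id (0 : ℝ)).mul_const β⁻¹).const_sub (δ i)
    exact ha.prodMk hb
  have hγ0 : ((d i + (0:ℝ) * α⁻¹, δ i - (0:ℝ) * β⁻¹) : ℝ × ℝ) = (d i, δ i) := by norm_num
  have hφ0 : HasDerivAt (fun s : ℝ => G (d i + s * α⁻¹, δ i - s * β⁻¹))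
      (L ((α⁻¹, -β⁻¹) : ℝ × ℝ)) 0 := by
    have hL' : HasFDerivAt G L ((fun s : ℝ => ((d i + s * α⁻¹, δ i - s * β⁻¹) : ℝ × ℝ)) 0) := by
      simpa [hγ0] using hL
    exact hL'.comp_hasDerivAt 0 hγ
  have hLval : L ((α⁻¹, -β⁻¹) : ℝ × ℝ) = 0 := by
    have hdir : ((α⁻¹, -β⁻¹) : ℝ × ℝ)
        = α⁻¹ • ((1 : ℝ), (0 : ℝ)) + (-β⁻¹) • ((0 : ℝ), (1 : ℝ)) := by
      simp [Prod.ext_iff]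
    rw [hdir, map_add, map_smul, map_smul, e1, e2]
    simp
  -- explicit form along the diagonal path
  have hexp : ∀ (s : ℝ) (k : ℕ),
      α * Function.update d i (d i + s * α⁻¹) k + β * Function.update δ i (δ i - s * β⁻¹) k
        = α * d k + β * δ k := by
    intro s k
    rcases eq_or_ne k i with rfl | h
    · simp only [Function.update_self]
      field_simp
      try ring
    · simp only [Function.update_of_ne h]
  have haff : ∀ (s : ℝ), ∀ k ∈ Finset.range (n - 1), ∀ j ∈ Finset.range k,
      Function.update d i (d i + s * α⁻¹) k * Function.update δ i (δ i - s * β⁻¹) j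
        - Function.update d i (d i + s * α⁻¹) j * Function.update δ i (δ i - s * β⁻¹) k
      = (d k * δ j - d j * δ k) + Ct α β d δ i k j * s := by
    intro s k _ j hj
    have hjk : j < k := Finset.mem_range.mp hj
    rcases eq_or_ne k i with rfl | hki
    · have hji : j ≠ k := Nat.ne_of_lt hjk
      simp [Ct, Function.update_of_ne hji, hji]
      try ring
    · rcases eq_or_ne j i with rfl | hji
      · simp [Ct, Function.update_of_ne hki, hki]
        try ring
      · simp [Ct, Function.update_of_ne hki, Function.update_of_ne hji, hki, hji]
        try ring
  have hEq : (fun s : ℝ => G (d i + s * α⁻¹, δ i - s * β⁻¹))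
      = fun s : ℝ => MthetaObj n α β d δ *
          ∑ k ∈ Finset.range (n - 1), ∑ j ∈ Finset.range k,
            (((d k * δ j - d j * δ k) + Ct α β d δ i k j * s) ^ 2 *
              (Wt α β d δ k * Wt α β d δ j)) := by
    funext s
    show PsiObj n α β (Function.update d i (d i + s * α⁻¹))
        (Function.update δ i (δ i - s * β⁻¹)) = _
    unfold PsiObj PhiObj MthetaObj Wt
    congr 1
    · congr 1
      apply Finset.sum_congr rfl
      intro k _
      rw [hexp s k]
    · apply Finset.sum_congr rfl
      intro k hk
      apply Finset.sum_congr rfl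
      intro j hj
      rw [hexp s k, hexp s j, haff s k hk j hj]
      ring
  have hder : HasDerivAt (fun s : ℝ => MthetaObj n α β d δ *
          ∑ k ∈ Finset.range (n - 1), ∑ j ∈ Finset.range k,
            (((d k * δ j - d j * δ k) + Ct α β d δ i k j * s) ^ 2 *
              (Wt α β d δ k * Wt α β d δ j)))
      (MthetaObj n α β d δ *
          ∑ k ∈ Finset.range (n - 1), ∑ j ∈ Finset.range k,
            (2 * (d k * δ j - d j * δ k) * Ct α β d δ i k j *
              (Wt α β d δ k * Wt α β d δ j))) 0 := by
    apply HasDerivAt.const_mul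
    apply HasDerivAt.fun_sum
    intro k _
    apply HasDerivAt.fun_sum
    intro j _
    have ha : HasDerivAt (fun s : ℝ => (d k * δ j - d j * δ k) + Ct α β d δ i k j * s)
        (Ct α β d δ i k j) 0 := by
      simpa using ((hasDerivAt_id (0 : ℝ)).const_mul (Ct α β d δ i k j)).const_add
        (d k * δ j - d j * δ k)
    have h2' := (ha.fun_pow 2).mul_const (Wt α β d δ k * Wt α β d δ j)
    convert h2' using 1
    · rfl
    simp only [mul_zero, add_zero, pow_one]
    ring
  have hφder : HasDerivAt (fun s : ℝ => G (d i + s * α⁻¹, δ i - s * β⁻¹))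
      (MthetaObj n α β d δ *
          ∑ k ∈ Finset.range (n - 1), ∑ j ∈ Finset.range k,
            (2 * (d k * δ j - d j * δ k) * Ct α β d δ i k j *
              (Wt α β d δ k * Wt α β d δ j))) 0 := by
    rw [hEq]; exact hder
  have hzero : MthetaObj n α β d δ *
      ∑ k ∈ Finset.range (n - 1), ∑ j ∈ Finset.range k,
        (2 * (d k * δ j - d j * δ k) * Ct α β d δ i k j *
          (Wt α β d δ k * Wt α β d δ j)) = 0 := by
    have huniq := hφ0.unique hφder
    rw [← huniq]
    exact hLval
  -- evaluate the double sum
  have hWi : 0 < Wt α β d δ i := by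
    have h := aux_w_pos (t := α * d i + β * δ i)
      (add_pos (mul_pos hα (hd i hi)) (mul_pos hβ (hδ i hi)))
    unfold Wt
    exact h
  have hterm : ∀ k ∈ Finset.range (n - 1), ∀ j ∈ Finset.range k,
      2 * (d k * δ j - d j * δ k) * Ct α β d δ i k j * (Wt α β d δ k * Wt α β d δ j)
      = (if k = i then Wt α β d δ i * gt' α β d δ i j else 0)
        + (if j = i then Wt α β d δ i * gt' α β d δ i k else 0) := by
    intro k _ j hj
    have hjk : j < k := Finset.mem_range.mp hj
    rcases eq_or_ne k i with rfl | hki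
    · have hji : j ≠ k := Nat.ne_of_lt hjk
      simp [Ct, gt', hji]
      try ring
    · rcases eq_or_ne j i with rfl | hji
      · simp [Ct, gt', hki]
        try ring
      · simp [Ct, gt', hki, hji]
        try ring
  have hstep : ∀ k ∈ Finset.range (n - 1),
      ∑ j ∈ Finset.range k,
        (2 * (d k * δ j - d j * δ k) * Ct α β d δ i k j * (Wt α β d δ k * Wt α β d δ j))
      = (if k = i then ∑ j ∈ Finset.range k, Wt α β d δ i * gt' α β d δ i j else 0)
        + (if i ∈ Finset.range k then Wt α β d δ i * gt' α β d δ i k else 0) := by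
    intro k hk
    rw [Finset.sum_congr rfl (fun j hj => hterm k hk j hj), Finset.sum_add_distrib]
    congr 1
    · split_ifs with h <;> simp
    · exact Finset.sum_ite_eq' (Finset.range k) i (fun _ => Wt α β d δ i * gt' α β d δ i k)
  have hs1 : ∑ k ∈ Finset.range (n - 1), ∑ j ∈ Finset.range k,
        (2 * (d k * δ j - d j * δ k) * Ct α β d δ i k j * (Wt α β d δ k * Wt α β d δ j))
      = Wt α β d δ i * ∑ j ∈ Finset.range (n - 1), gt' α β d δ i j := by
    rw [Finset.sum_congr rfl hstep, Finset.sum_add_distrib]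
    have T1 : ∑ k ∈ Finset.range (n - 1),
        (if k = i then ∑ j ∈ Finset.range k, Wt α β d δ i * gt' α β d δ i j else 0)
        = ∑ j ∈ Finset.range i, Wt α β d δ i * gt' α β d δ i j := by
      rw [Finset.sum_ite_eq' (Finset.range (n - 1)) i
        (fun k => ∑ j ∈ Finset.range k, Wt α β d δ i * gt' α β d δ i j)]
      rw [if_pos (Finset.mem_range.mpr hi)]
    have T2 : ∑ k ∈ Finset.range (n - 1),
        (if i ∈ Finset.range k then Wt α β d δ i * gt' α β d δ i k else 0)
        = ∑ k ∈ Finset.Ico (i + 1) (n - 1), Wt α β d δ i * gt' α β d δ i k := by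
      simp only [Finset.range_eq_Ico]
      rw [← Finset.sum_Ico_consecutive _ (Nat.zero_le (i + 1)) hi]
      have hz : ∑ k ∈ Finset.Ico 0 (i + 1),
          (if i ∈ Finset.Ico 0 k then Wt α β d δ i * gt' α β d δ i k else 0) = 0 := by
        apply Finset.sum_eq_zero
        intro k hk
        have hk2 : k ≤ i := by have := (Finset.mem_Ico.mp hk).2; omega
        rw [if_neg (by simp only [Finset.mem_Ico]; omega)]
      rw [hz, zero_add]
      apply Finset.sum_congr rfl
      intro k hk
      have hk1 : i < k := (Finset.mem_Ico.mp hk).1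
      rw [if_pos (by simp only [Finset.mem_Ico]; omega)]
    rw [T1, T2]
    have hgi : gt' α β d δ i i = 0 := by simp [gt']
    have hsplit : ∑ j ∈ Finset.range (n - 1), Wt α β d δ i * gt' α β d δ i j
        = (∑ j ∈ Finset.range i, Wt α β d δ i * gt' α β d δ i j
            + Wt α β d δ i * gt' α β d δ i i)
          + ∑ j ∈ Finset.Ico (i + 1) (n - 1), Wt α β d δ i * gt' α β d δ i j := by
      rw [Finset.range_eq_Ico, ← Finset.sum_Ico_consecutive _ (Nat.zero_le (i + 1)) hi]
      congr 1
      rw [← Finset.range_eq_Ico, Finset.sum_range_succ]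
    rw [Finset.mul_sum, hsplit, hgi, mul_zero, add_zero]
  rw [hs1] at hzero
  have hM0 : (0 : ℝ) < MthetaObj n α β d δ :=
    lt_of_lt_of_le one_pos (mtheta_ge_one n α β hα hβ d δ hd hδ)
  have hg0 : ∑ j ∈ Finset.range (n - 1), gt' α β d δ i j = 0 := by
    rcases mul_eq_zero.mp hzero with h | h
    · exact absurd h (ne_of_gt hM0)
    · rcases mul_eq_zero.mp h with h | h
      · exact absurd h (ne_of_gt hWi)
      · exact h
  have hgsum : ∑ j ∈ Finset.range (n - 1), gt' α β d δ i j
      = 2 * d i * (∑ j ∈ Finset.range (n - 1),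
            Wt α β d δ j * (δ j ^ 2 * α⁻¹ + d j * δ j * β⁻¹))
        - 2 * δ i * (∑ j ∈ Finset.range (n - 1),
            Wt α β d δ j * (d j * δ j * α⁻¹ + d j ^ 2 * β⁻¹)) := by
    rw [Finset.mul_sum, Finset.mul_sum, ← Finset.sum_sub_distrib]
    apply Finset.sum_congr rfl
    intro j _
    simp only [gt']
    ring
  rw [hgsum] at hg0
  linarith

lemma psi_crit_zero (n : ℕ) (α β : ℝ) (hα : 0 < α) (hβ : 0 < β) (d δ : ℕ → ℝ)
    (hd : ∀ k < n - 1, 0 < d k) (hδ : ∀ k < n - 1, 0 < δ k) (hne : 0 < n - 1)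
    (hcrit : ∀ i < n - 1,
      deriv (fun x : ℝ => PsiObj n α β (Function.update d i x) δ) (d i) = 0 ∧
      deriv (fun x : ℝ => PsiObj n α β d (Function.update δ i x)) (δ i) = 0) :
    PsiObj n α β d δ = 0 := by
  have hP : 0 < ∑ j ∈ Finset.range (n - 1),
      Wt α β d δ j * (δ j ^ 2 * α⁻¹ + d j * δ j * β⁻¹) := by
    apply Finset.sum_pos
    · intro j hj
      have hj' := Finset.mem_range.mp hj
      have hw : 0 < Wt α β d δ j := by
        unfold Wt
        exact aux_w_pos (add_pos (mul_pos hα (hd j hj')) (mul_pos hβ (hδ j hj')))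
      exact mul_pos hw (add_pos (mul_pos (pow_pos (hδ j hj') 2) (inv_pos.mpr hα))
        (mul_pos (mul_pos (hd j hj') (hδ j hj')) (inv_pos.mpr hβ)))
    · exact ⟨0, Finset.mem_range.mpr hne⟩
  have hkey : ∀ k, k < n - 1 →
      d k * (∑ j ∈ Finset.range (n - 1),
          Wt α β d δ j * (δ j ^ 2 * α⁻¹ + d j * δ j * β⁻¹)) =
      δ k * (∑ j ∈ Finset.range (n - 1),
          Wt α β d δ j * (d j * δ j * α⁻¹ + d j ^ 2 * β⁻¹)) :=
    fun k hk => crit_eq n α β hα hβ d δ hd hδ k hk (hcrit k hk).1 (hcrit k hk).2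
  have hphi : PhiObj n α β d δ = 0 := by
    unfold PhiObj
    apply Finset.sum_eq_zero
    intro k hk
    apply Finset.sum_eq_zero
    intro j hj
    have hk' := Finset.mem_range.mp hk
    have hj' : j < n - 1 := lt_trans (Finset.mem_range.mp hj) hk'
    have e1 := hkey k hk'
    have e2 := hkey j hj'
    have h5 : (d k * δ j - d j * δ k) * (∑ j ∈ Finset.range (n - 1),
        Wt α β d δ j * (δ j ^ 2 * α⁻¹ + d j * δ j * β⁻¹)) = 0 := by
      linear_combination δ j * e1 - δ k * e2
    have h6 : d k * δ j - d j * δ k = 0 := by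
      rcases mul_eq_zero.mp h5 with h | h
      · exact h
      · exact absurd h (ne_of_gt hP)
    rw [h6]
    ring
  unfold PsiObj
  rw [hphi, mul_zero]

theorem stmt_16 (n : ℕ) (hn : 3 ≤ n) (α β : ℝ) (hα : 0 < α) (hβ : 0 < β) :
    (∀ d δ : ℕ → ℝ, (∀ i < n - 1, 0 < d i) → (∀ i < n - 1, 0 < δ i) →
      0 ≤ PsiObj n α β d δ) ∧
    (∀ d δ : ℕ → ℝ, ∀ c : ℕ → ℝ,
      (∀ i < n - 1, 0 < d i) → (∀ i < n - 1, 0 < δ i) → (∀ i < n - 1, 0 < c i) →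
      (∀ i < n - 1, d i = c i * d 0 ∧ δ i = c i * δ 0) →
      PsiObj n α β d δ = 0) ∧
    (∀ d δ : ℕ → ℝ, (∀ i < n - 1, 0 < d i) → (∀ i < n - 1, 0 < δ i) →
      (∀ i < n - 1,
        deriv (fun x : ℝ => PsiObj n α β (Function.update d i x) δ) (d i) = 0 ∧
        deriv (fun x : ℝ => PsiObj n α β d (Function.update δ i x)) (δ i) = 0) →
      PsiObj n α β d δ = 0) ∧
    ¬ ∃ d δ : ℕ → ℝ, (∀ i < n - 1, 0 < d i) ∧ (∀ i < n - 1, 0 < δ i) ∧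
        ∀ d' δ' : ℕ → ℝ, (∀ i < n - 1, 0 < d' i) → (∀ i < n - 1, 0 < δ' i) →
          PsiObj n α β d' δ' ≤ PsiObj n α β d δ := by
  refine ⟨?_, ?_, ?_, ?_⟩
  · -- nonnegativity
    intro d δ hd hδ
    unfold PsiObj
    exact mul_nonneg (le_trans zero_le_one (mtheta_ge_one n α β hα hβ d δ hd hδ))
      (phi_nonneg n α β d δ)
  · -- vanishing on proportional designs
    intro d δ c hd hδ hc hprop
    have hphi : PhiObj n α β d δ = 0 := by
      unfold PhiObj
      apply Finset.sum_eq_zero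
      intro k hk
      apply Finset.sum_eq_zero
      intro j hj
      have hk' := Finset.mem_range.mp hk
      have hj' : j < n - 1 := lt_trans (Finset.mem_range.mp hj) hk'
      obtain ⟨hdk, hδk⟩ := hprop k hk'
      obtain ⟨hdj, hδj⟩ := hprop j hj'
      have h6 : d k * δ j - d j * δ k = 0 := by rw [hdk, hδk, hdj, hδj]; ring
      rw [h6]
      ring
    unfold PsiObj
    rw [hphi, mul_zero]
  · -- critical points
    intro d δ hd hδ hcrit
    exact psi_crit_zero n α β hα hβ d δ hd hδ (by omega) hcrit
  · -- no maximum
    rintro ⟨d, δ, hd, hδ, hmax⟩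
    have hcrit : ∀ i < n - 1,
        deriv (fun x : ℝ => PsiObj n α β (Function.update d i x) δ) (d i) = 0 ∧
        deriv (fun x : ℝ => PsiObj n α β d (Function.update δ i x)) (δ i) = 0 := by
      intro i hi
      constructor
      · apply IsLocalMax.deriv_eq_zero
        have hev : ∀ᶠ x in nhds (d i), (0 : ℝ) < x := eventually_gt_nhds (hd i hi)
        refine hev.mono fun x hx => ?_
        have hd' : ∀ k < n - 1, 0 < Function.update d i x k := by
          intro k hk
          rcases eq_or_ne k i with rfl | h
          · rw [Function.update_self]; exact hx
          · rw [Function.update_of_ne h]; exact hd k hk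
        have hle := hmax (Function.update d i x) δ hd' hδ
        show PsiObj n α β (Function.update d i x) δ
          ≤ PsiObj n α β (Function.update d i (d i)) δ
        rw [Function.update_eq_self]
        exact hle
      · apply IsLocalMax.deriv_eq_zero
        have hev : ∀ᶠ y in nhds (δ i), (0 : ℝ) < y := eventually_gt_nhds (hδ i hi)
        refine hev.mono fun y hy => ?_
        have hδ' : ∀ k < n - 1, 0 < Function.update δ i y k := by
          intro k hk
          rcases eq_or_ne k i with rfl | h
          · rw [Function.update_self]; exact hy
          · rw [Function.update_of_ne h]; exact hδ k hk
        have hle := hmax d (Function.update δ i y) hd hδ'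
        show PsiObj n α β d (Function.update δ i y)
          ≤ PsiObj n α β d (Function.update δ i (δ i))
        rw [Function.update_eq_self]
        exact hle
    have h0 : PsiObj n α β d δ = 0 :=
      psi_crit_zero n α β hα hβ d δ hd hδ (by omega) hcrit
    -- a competitor design with strictly positive objective
    have hd1 : ∀ k < n - 1, 0 < (fun k : ℕ => (k : ℝ) + 1) k := by
      intro k _
      positivity
    have hδ1 : ∀ k < n - 1, 0 < (fun _ : ℕ => (1 : ℝ)) k := by
      intro k _
      norm_num
    have hM1 : 1 ≤ MthetaObj n α β (fun k : ℕ => (k : ℝ) + 1) (fun _ : ℕ => (1 : ℝ)) :=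
      mtheta_ge_one n α β hα hβ _ _ hd1 hδ1
    have hΦ1 : 0 < PhiObj n α β (fun k : ℕ => (k : ℝ) + 1) (fun _ : ℕ => (1 : ℝ)) := by
      unfold PhiObj
      apply Finset.sum_pos'
      · intro k _
        apply Finset.sum_nonneg
        intro j _
        exact mul_nonneg (mul_nonneg (sq_nonneg _) (aux_w_nonneg _)) (aux_w_nonneg _)
      · refine ⟨1, Finset.mem_range.mpr (by omega), ?_⟩
        rw [Finset.sum_range_one]
        norm_num
        have e1 : -β + -(α * 2) = -(α * 2 + β) := by ring
        have e2 : -β + -α = -(α + β) := by ring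
        rw [e1, e2]
        exact mul_pos (aux_w_pos (by nlinarith)) (aux_w_pos (by nlinarith))
    have hψ1 : 0 < PsiObj n α β (fun k : ℕ => (k : ℝ) + 1) (fun _ : ℕ => (1 : ℝ)) := by
      unfold PsiObj
      exact mul_pos (lt_of_lt_of_le one_pos hM1) hΦ1
    have hle := hmax _ _ hd1 hδ1
    rw [h0] at hle
    linarith
end

section
/- Let n ≥ 3, α > 0, β > 0, and for 0 < r < 1 define the geometric progression increments d_i(r) := (1−r) r^{i−1}/(1 − r^{n−1}) for i = 1,…,n−1, with d_i(1) := 1/(n−1). Then for every fixed r_2 ∈ (0,1], the map r_1 ↦ M_θ(n; r_1, r_2) := 1 + Σ_{i=1}^{n−1} (e^{α d_i(r_1) + β d_i(r_2)} − 1)/(e^{α d_i(r_1) + β d_i(r_2)} + 1) is strictly increasing on (0,1], and symmetrically it is strictly increasing in r_2 for every fixed r_1 ∈ (0,1]. -/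
open Finset

/-- Geometric progression increments, indexed by `i = 0, …, n-2`:
`d_i(r) = (1-r) r^i / (1-r^{n-1})` for `r < 1`, and `d_i(1) = 1/(n-1)`. -/
noncomputable def geomInc (n : ℕ) (r : ℝ) (i : ℕ) : ℝ :=
  if r = 1 then 1 / ((n : ℝ) - 1) else (1 - r) * r ^ i / (1 - r ^ (n - 1))

/-- Fisher information on the trend parameter `θ` under the geometric
progression design with ratios `r₁`, `r₂`. -/
noncomputable def MthetaGeom (n : ℕ) (α β r₁ r₂ : ℝ) : ℝ :=
  1 + ∑ i ∈ Finset.range (n - 1),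
    (Real.exp (α * geomInc n r₁ i + β * geomInc n r₂ i) - 1) /
    (Real.exp (α * geomInc n r₁ i + β * geomInc n r₂ i) + 1)

private lemma geomInc_eq (n : ℕ) (hn : 3 ≤ n) {r : ℝ} (hr : r ∈ Set.Ioc (0:ℝ) 1) (i : ℕ) :
    geomInc n r i = r ^ i / ∑ j ∈ Finset.range (n - 1), r ^ j := by
  obtain ⟨hr0, hr1⟩ := hr
  unfold geomInc
  rcases eq_or_lt_of_le hr1 with h1 | h1
  · subst h1
    simp [Finset.sum_const, Nat.cast_sub (by omega : 1 ≤ n)]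
  · rw [if_neg (by linarith)]
    have hgeom : (1 : ℝ) - r ^ (n - 1) = (1 - r) * ∑ j ∈ Finset.range (n - 1), r ^ j := by
      have := geom_sum_mul r (n - 1)
      linarith [this]
    rw [hgeom, mul_div_mul_left _ _ (by intro h; linarith : (1:ℝ) - r ≠ 0)]

/-- antitone comparison for the derivative factor `2 t / (t+1)^2`. -/
private lemma fp_le {s t : ℝ} (hs : 1 < s) (hst : s ≤ t) :
    2 * t / (t + 1) ^ 2 ≤ 2 * s / (s + 1) ^ 2 := by
  have h1 : (0:ℝ) < (s+1)^2 := by positivity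
  have h2 : (0:ℝ) < (t+1)^2 := by nlinarith
  rw [div_le_div_iff₀ h2 h1]
  nlinarith [mul_nonneg (sub_nonneg.2 hst) (by nlinarith : (0:ℝ) ≤ s * t - 1)]

private lemma fp_lt {s t : ℝ} (hs : 1 < s) (hst : s < t) :
    2 * t / (t + 1) ^ 2 < 2 * s / (s + 1) ^ 2 := by
  have h1 : (0:ℝ) < (s+1)^2 := by positivity
  have h2 : (0:ℝ) < (t+1)^2 := by nlinarith
  rw [div_lt_div_iff₀ h2 h1]
  nlinarith [mul_pos (sub_pos.2 hst) (by nlinarith : (0:ℝ) < s * t - 1)]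

/-- derivative of the logistic-type factor, rewritten. -/
private lemma Dval_eq (E v : ℝ) (hE : 0 < E) :
    (E * v * (E + 1) - (E - 1) * (E * v)) / (E + 1) ^ 2 = 2 * E / (E + 1) ^ 2 * v := by
  have h : E + 1 ≠ 0 := by positivity
  field_simp
  ring

private lemma mainMono (m : ℕ) (hm : 2 ≤ m) (α : ℝ) (hα : 0 < α) (c : ℕ → ℝ)
    (hc0 : ∀ i, 0 ≤ c i) (hc : ∀ i j, i ≤ j → c j ≤ c i) :
    StrictMonoOn (fun r : ℝ => ∑ i ∈ Finset.range m,
      (Real.exp (α * r ^ i / (∑ j ∈ Finset.range m, r ^ j) + c i) - 1) /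
      (Real.exp (α * r ^ i / (∑ j ∈ Finset.range m, r ^ j) + c i) + 1)) (Set.Ioc 0 1) := by
  have hmne : (Finset.range m).Nonempty := Finset.nonempty_range_iff.2 (by omega)
  have hSpos : ∀ r : ℝ, 0 < r → 0 < ∑ j ∈ Finset.range m, r ^ j := fun r hr =>
    Finset.sum_pos (fun j _ => pow_pos hr j) hmne
  apply strictMonoOn_of_deriv_pos (convex_Ioc 0 1)
  · refine continuousOn_finset_sum _ fun i _ => ?_
    have hx : ContinuousOn (fun r : ℝ => α * r ^ i / (∑ j ∈ Finset.range m, r ^ j) + c i)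
        (Set.Ioc 0 1) := by
      refine ContinuousOn.add (ContinuousOn.div ?_ ?_ ?_) continuousOn_const
      · exact (continuous_const.mul (continuous_pow i)).continuousOn
      · exact (continuous_finset_sum _ fun j _ => continuous_pow j).continuousOn
      · exact fun r hr => ne_of_gt (hSpos r hr.1)
    exact ((Real.continuous_exp.comp_continuousOn hx).sub continuousOn_const).div
      ((Real.continuous_exp.comp_continuousOn hx).add continuousOn_const)
      (fun r _ => by positivity)
  · rw [interior_Ioc]
    rintro r ⟨hr0, hr1⟩
    have hS0 : (0:ℝ) < ∑ j ∈ Finset.range m, r ^ j := hSpos r hr0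
    set S : ℝ := ∑ j ∈ Finset.range m, r ^ j with hSdef
    set S' : ℝ := ∑ j ∈ Finset.range m, (j:ℝ) * r ^ (j - 1) with hS'def
    set x : ℕ → ℝ := fun i => α * r ^ i / S + c i with hxdef
    set u : ℕ → ℝ := fun i => (α * ((i:ℝ) * r ^ (i - 1)) * S - α * r ^ i * S') / S ^ 2 with hudef
    set D : ℕ → ℝ := fun i =>
      (Real.exp (x i) * u i * (Real.exp (x i) + 1) -
        (Real.exp (x i) - 1) * (Real.exp (x i) * u i)) / (Real.exp (x i) + 1) ^ 2 with hDdef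
    have hSd : HasDerivAt (fun y : ℝ => ∑ j ∈ Finset.range m, y ^ j) S' r :=
      HasDerivAt.fun_sum fun j _ => hasDerivAt_pow j r
    have hxd : ∀ i, HasDerivAt
        (fun y : ℝ => α * y ^ i / (∑ j ∈ Finset.range m, y ^ j) + c i) (u i) r :=
      fun i => (((hasDerivAt_pow i r).const_mul α).div hSd (ne_of_gt hS0)).add_const (c i)
    have hEne : ∀ i, Real.exp (x i) + 1 ≠ 0 := fun i => by positivity
    have hder : HasDerivAt (fun y : ℝ => ∑ i ∈ Finset.range m,
        (Real.exp (α * y ^ i / (∑ j ∈ Finset.range m, y ^ j) + c i) - 1) /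
        (Real.exp (α * y ^ i / (∑ j ∈ Finset.range m, y ^ j) + c i) + 1))
        (∑ i ∈ Finset.range m, D i) r :=
      HasDerivAt.fun_sum fun i _ =>
        (((hxd i).exp.sub_const 1).div ((hxd i).exp.add_const 1) (hEne i))
    rw [hder.deriv]
    set T : ℕ → ℕ → ℝ := fun i j => (i:ℝ) * r ^ (i - 1) * r ^ j - (j:ℝ) * r ^ (j - 1) * r ^ i
      with hTdef
    set w : ℕ → ℝ := fun i => 2 * Real.exp (x i) / (Real.exp (x i) + 1) ^ 2 with hwdef
    have hDw : ∀ i, D i = w i * u i := fun i =>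
      Dval_eq (Real.exp (x i)) (u i) (Real.exp_pos _)
    have hu : ∀ i, u i = α / S ^ 2 * ∑ j ∈ Finset.range m, T i j := by
      intro i
      have h1 : ∑ j ∈ Finset.range m, T i j = (i:ℝ) * r ^ (i-1) * S - S' * r ^ i := by
        show ∑ j ∈ Finset.range m,
          ((i:ℝ) * r ^ (i - 1) * r ^ j - (j:ℝ) * r ^ (j - 1) * r ^ i)
            = (i:ℝ) * r ^ (i-1) * S - S' * r ^ i
        rw [Finset.sum_sub_distrib, ← Finset.mul_sum, ← Finset.sum_mul, ← hSdef, ← hS'def]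
      show (α * ((i:ℝ) * r ^ (i - 1)) * S - α * r ^ i * S') / S ^ 2
        = α / S ^ 2 * ∑ j ∈ Finset.range m, T i j
      rw [h1]
      field_simp
    have hsum : ∑ i ∈ Finset.range m, D i
        = α / S ^ 2 * ∑ i ∈ Finset.range m, ∑ j ∈ Finset.range m, w i * T i j := by
      rw [Finset.mul_sum]
      refine Finset.sum_congr rfl fun i _ => ?_
      rw [hDw i, hu i]
      simp only [Finset.mul_sum]
      exact Finset.sum_congr rfl fun j _ => by ring
    have hx1 : ∀ i, 1 < Real.exp (x i) := by
      intro i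
      have hpos : 0 < x i := by
        show 0 < α * r ^ i / S + c i
        exact add_pos_of_pos_of_nonneg (div_pos (by positivity) hS0) (hc0 i)
      exact Real.one_lt_exp_iff.2 hpos
    have hxle : ∀ i j, j ≤ i → x i ≤ x j := by
      intro i j hij
      have h1 : r ^ i ≤ r ^ j := pow_le_pow_of_le_one (le_of_lt hr0) (le_of_lt hr1) hij
      have h2 : c i ≤ c j := hc j i hij
      show α * r ^ i / S + c i ≤ α * r ^ j / S + c j
      have h3 : α * r ^ i / S ≤ α * r ^ j / S :=
        div_le_div_of_nonneg_right (by nlinarith) hS0.le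
      linarith
    have hwle : ∀ i j, j ≤ i → w j ≤ w i := fun i j hij =>
      fp_le (hx1 i) (Real.exp_le_exp.2 (hxle i j hij))
    have hTanti : ∀ i j, T j i = -T i j := by
      intro i j
      show (j:ℝ) * r ^ (j - 1) * r ^ i - (i:ℝ) * r ^ (i - 1) * r ^ j
        = -((i:ℝ) * r ^ (i - 1) * r ^ j - (j:ℝ) * r ^ (j - 1) * r ^ i)
      ring
    have hTnn : ∀ i j, j ≤ i → 0 ≤ T i j := by
      intro i j hij
      show 0 ≤ (i:ℝ) * r ^ (i - 1) * r ^ j - (j:ℝ) * r ^ (j - 1) * r ^ i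
      rcases Nat.eq_zero_or_pos j with hj | hj
      · subst hj
        simp only [Nat.cast_zero, zero_mul, sub_zero]
        positivity
      · have hi : 1 ≤ i := le_trans hj hij
        have he : j - 1 + i = i - 1 + j := by omega
        have hrw : (i:ℝ) * r ^ (i - 1) * r ^ j - (j:ℝ) * r ^ (j - 1) * r ^ i
            = ((i:ℝ) - (j:ℝ)) * r ^ (i - 1 + j) := by
          rw [mul_assoc, mul_assoc, ← pow_add, ← pow_add, he]
          ring
        rw [hrw]
        have hij' : (0:ℝ) ≤ (i:ℝ) - (j:ℝ) := by
          have := (Nat.cast_le (α := ℝ)).2 hij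
          linarith
        positivity
    have hpt : ∀ i j, 0 ≤ (w i - w j) * T i j := by
      intro i j
      rcases le_total j i with h | h
      · exact mul_nonneg (sub_nonneg.2 (hwle i j h)) (hTnn i j h)
      · have h1 : w i ≤ w j := hwle j i h
        have h2 : 0 ≤ T j i := hTnn j i h
        have h3 : T i j ≤ 0 := by linarith [hTanti i j]
        nlinarith
    have hx10 : x 1 < x 0 := by
      show α * r ^ 1 / S + c 1 < α * r ^ 0 / S + c 0
      have h2 : c 1 ≤ c 0 := hc 0 1 (by omega)
      have h1 : α * r ^ 1 / S < α * r ^ 0 / S :=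
        div_lt_div_of_pos_right (by rw [pow_one, pow_zero, mul_one]; nlinarith) hS0
      linarith
    have hw10 : w 0 < w 1 := fp_lt (hx1 1) (Real.exp_lt_exp.2 hx10)
    have hT10 : T 1 0 = 1 := by
      show ((1:ℕ):ℝ) * r ^ (1 - 1) * r ^ 0 - ((0:ℕ):ℝ) * r ^ (0 - 1) * r ^ 1 = 1
      norm_num
    have hApos : 0 < ∑ i ∈ Finset.range m, ∑ j ∈ Finset.range m, w i * T i j := by
      have hB : ∑ i ∈ Finset.range m, ∑ j ∈ Finset.range m, w j * T i j
          = -∑ i ∈ Finset.range m, ∑ j ∈ Finset.range m, w i * T i j := by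
        rw [Finset.sum_comm, ← Finset.sum_neg_distrib]
        refine Finset.sum_congr rfl fun i _ => ?_
        rw [← Finset.sum_neg_distrib]
        refine Finset.sum_congr rfl fun j _ => ?_
        rw [hTanti j i]
        ring
      have h2A : ∑ i ∈ Finset.range m, ∑ j ∈ Finset.range m, (w i - w j) * T i j
          = (∑ i ∈ Finset.range m, ∑ j ∈ Finset.range m, w i * T i j)
            + ∑ i ∈ Finset.range m, ∑ j ∈ Finset.range m, w i * T i j := by
        have hsplit : ∀ i j : ℕ, (w i - w j) * T i j = w i * T i j - w j * T i j :=
          fun i j => by ring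
        simp_rw [hsplit, Finset.sum_sub_distrib]
        rw [hB]
        ring
      have hpos : 0 < ∑ i ∈ Finset.range m, ∑ j ∈ Finset.range m, (w i - w j) * T i j := by
        refine Finset.sum_pos' (fun i _ => Finset.sum_nonneg fun j _ => hpt i j) ?_
        refine ⟨1, Finset.mem_range.2 (by omega), ?_⟩
        refine Finset.sum_pos' (fun j _ => hpt 1 j) ⟨0, Finset.mem_range.2 (by omega), ?_⟩
        rw [hT10]
        nlinarith
      linarith
    rw [hsum]
    exact mul_pos (div_pos hα (pow_pos hS0 2)) hApos

theorem stmt_17 (n : ℕ) (hn : 3 ≤ n) (α β : ℝ) (hα : 0 < α) (hβ : 0 < β) :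
    (∀ r₂ ∈ Set.Ioc (0 : ℝ) 1,
      StrictMonoOn (fun r₁ : ℝ => MthetaGeom n α β r₁ r₂) (Set.Ioc 0 1)) ∧
    (∀ r₁ ∈ Set.Ioc (0 : ℝ) 1,
      StrictMonoOn (fun r₂ : ℝ => MthetaGeom n α β r₁ r₂) (Set.Ioc 0 1)) := by
  have hm : 2 ≤ n - 1 := by omega
  have hSpos : ∀ r : ℝ, 0 < r → 0 < ∑ j ∈ Finset.range (n-1), r ^ j := fun r hr =>
    Finset.sum_pos (fun j _ => pow_pos hr j) (Finset.nonempty_range_iff.2 (by omega))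
  have hgpos : ∀ (r : ℝ), r ∈ Set.Ioc (0:ℝ) 1 → ∀ i, 0 < geomInc n r i := by
    intro r hr i
    rw [geomInc_eq n hn hr i]
    exact div_pos (pow_pos hr.1 i) (hSpos r hr.1)
  have hganti : ∀ (r : ℝ), r ∈ Set.Ioc (0:ℝ) 1 → ∀ i j, i ≤ j →
      geomInc n r j ≤ geomInc n r i := by
    intro r hr i j hij
    rw [geomInc_eq n hn hr i, geomInc_eq n hn hr j]
    exact div_le_div_of_nonneg_right
      (pow_le_pow_of_le_one (le_of_lt hr.1) hr.2 hij) (hSpos r hr.1).le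
  constructor
  · intro r₂ hr₂
    have key := mainMono (n-1) hm α hα (fun i => β * geomInc n r₂ i)
      (fun i => le_of_lt (mul_pos hβ (hgpos r₂ hr₂ i)))
      (fun i j hij => mul_le_mul_of_nonneg_left (hganti r₂ hr₂ i j hij) hβ.le)
    intro a ha b hb hab
    have ea : ∀ r ∈ Set.Ioc (0:ℝ) 1, MthetaGeom n α β r r₂ =
        1 + ∑ i ∈ Finset.range (n-1),
          (Real.exp (α * r ^ i / (∑ j ∈ Finset.range (n-1), r ^ j) + β * geomInc n r₂ i) - 1) /
          (Real.exp (α * r ^ i / (∑ j ∈ Finset.range (n-1), r ^ j) + β * geomInc n r₂ i) + 1) := by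
      intro r hr
      unfold MthetaGeom
      congr 1
      refine Finset.sum_congr rfl fun i _ => ?_
      rw [geomInc_eq n hn hr i, mul_div_assoc]
    show MthetaGeom n α β a r₂ < MthetaGeom n α β b r₂
    rw [ea a ha, ea b hb]
    exact (add_lt_add_iff_left 1).2 (key ha hb hab)
  · intro r₁ hr₁
    have key := mainMono (n-1) hm β hβ (fun i => α * geomInc n r₁ i)
      (fun i => le_of_lt (mul_pos hα (hgpos r₁ hr₁ i)))
      (fun i j hij => mul_le_mul_of_nonneg_left (hganti r₁ hr₁ i j hij) hα.le)
    intro a ha b hb hab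
    have ea : ∀ r ∈ Set.Ioc (0:ℝ) 1, MthetaGeom n α β r₁ r =
        1 + ∑ i ∈ Finset.range (n-1),
          (Real.exp (β * r ^ i / (∑ j ∈ Finset.range (n-1), r ^ j) + α * geomInc n r₁ i) - 1) /
          (Real.exp (β * r ^ i / (∑ j ∈ Finset.range (n-1), r ^ j) + α * geomInc n r₁ i) + 1) := by
      intro r hr
      unfold MthetaGeom
      congr 1
      refine Finset.sum_congr rfl fun i _ => ?_
      rw [geomInc_eq n hn hr i, mul_div_assoc, add_comm]
    show MthetaGeom n α β r₁ a < MthetaGeom n α β r₁ b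
    rw [ea a ha, ea b hb]
    exact (add_lt_add_iff_left 1).2 (key ha hb hab)
end

section
/- Let n ≥ 3 and 0 < r < 1, and for i = 1,…,n−1 define p_i(r) := (n−i) r^{n−1} − (n−i−1) r^n + (i−1) − i r, so that the derivative of the geometric increment d_i(r) = (1−r) r^{i−1}/(1−r^{n−1}) with respect to r equals r^i p_i(r)/(r − r^n)². Then p_{i+1}(r) − p_i(r) = (1−r)(1−r^{n−1}) > 0 for all i = 1,…,n−2, so p_i(r) is strictly increasing in i; consequently there exists an index j ∈ {1,…,n−1} such that d_i'(r) < 0 for all i < j and d_i'(r) ≥ 0 for all i ≥ j. -/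
lemma aux_deriv (n i : ℕ) (hn : 3 ≤ n) (hi1 : 1 ≤ i) (hi2 : i ≤ n - 1)
    (r : ℝ) (hr0 : 0 < r) (hr1 : r < 1) :
    HasDerivAt (fun s : ℝ => (1 - s) * s ^ (i - 1) / (1 - s ^ (n - 1)))
      (r ^ i * (((n : ℝ) - i) * r ^ (n - 1) - ((n : ℝ) - i - 1) * r ^ n +
          ((i : ℝ) - 1) - i * r) / (r - r ^ n) ^ 2) r := by
  obtain ⟨m, rfl⟩ : ∃ m, n = m + 3 := ⟨n - 3, by omega⟩
  have hlt : r ^ (m + 2) < 1 := pow_lt_one₀ hr0.le hr1 (by omega)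
  have hne : (1 : ℝ) - r ^ (m + 3 - 1) ≠ 0 := by
    show (1 : ℝ) - r ^ (m + 2) ≠ 0; linarith
  have hrn : r ^ (m + 3) = r ^ (m + 2) * r := pow_succ r (m + 2)
  have hpos : 0 < r - r ^ (m + 3) := by nlinarith
  have hne2 : r - r ^ (m + 3) ≠ 0 := ne_of_gt hpos
  have h1 : HasDerivAt (fun s : ℝ => 1 - s) (-1) r := by
    simpa using (hasDerivAt_id r).const_sub 1
  have h2 := hasDerivAt_pow (i - 1) r
  have hnum := h1.mul h2
  have h3 := hasDerivAt_pow (m + 3 - 1) r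
  have hden : HasDerivAt (fun s : ℝ => 1 - s ^ (m + 3 - 1))
      (-(((m + 3 - 1 : ℕ) : ℝ) * r ^ (m + 3 - 1 - 1))) r := h3.const_sub 1
  have hdiv := hnum.div hden hne
  refine hdiv.congr_deriv (Eq.symm ?_)
  simp only [Pi.mul_apply]
  rw [div_eq_div_iff (pow_ne_zero 2 hne2) (pow_ne_zero 2 hne)]
  rcases eq_or_lt_of_le hi1 with h | h
  · subst h
    push_cast
    ring
  · obtain ⟨a, rfl⟩ : ∃ a, i = a + 2 := ⟨i - 2, by omega⟩
    simp only [show a + 2 - 1 = a + 1 from rfl, show a + 1 - 1 = a from rfl,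
      show m + 3 - 1 = m + 2 from rfl, show m + 2 - 1 = m + 1 from rfl]
    push_cast
    ring

theorem stmt_19 (n : ℕ) (hn : 3 ≤ n) (r : ℝ) (hr0 : 0 < r) (hr1 : r < 1) :
    (∀ i ∈ Finset.Icc 1 (n - 1),
      HasDerivAt (fun s : ℝ => (1 - s) * s ^ (i - 1) / (1 - s ^ (n - 1)))
        (r ^ i * (((n : ℝ) - i) * r ^ (n - 1) - ((n : ℝ) - i - 1) * r ^ n +
            ((i : ℝ) - 1) - i * r) / (r - r ^ n) ^ 2) r) ∧
    (∀ i ∈ Finset.Icc 1 (n - 2),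
      (((n : ℝ) - (i + 1)) * r ^ (n - 1) - ((n : ℝ) - (i + 1) - 1) * r ^ n +
          (((i : ℝ) + 1) - 1) - ((i : ℝ) + 1) * r) -
        (((n : ℝ) - i) * r ^ (n - 1) - ((n : ℝ) - i - 1) * r ^ n +
          ((i : ℝ) - 1) - i * r) = (1 - r) * (1 - r ^ (n - 1)) ∧
      0 < (1 - r) * (1 - r ^ (n - 1))) ∧
    (∃ j ∈ Finset.Icc 1 (n - 1),
      (∀ i ∈ Finset.Icc 1 (n - 1), i < j →
        deriv (fun s : ℝ => (1 - s) * s ^ (i - 1) / (1 - s ^ (n - 1))) r < 0) ∧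
      (∀ i ∈ Finset.Icc 1 (n - 1), j ≤ i →
        0 ≤ deriv (fun s : ℝ => (1 - s) * s ^ (i - 1) / (1 - s ^ (n - 1))) r)) := by
  have hlt1 : r ^ (n - 1) < 1 := pow_lt_one₀ hr0.le hr1 (by omega)
  have hc : 0 < (1 - r) * (1 - r ^ (n - 1)) :=
    mul_pos (by linarith) (by linarith)
  set P : ℕ → ℝ := fun i => ((n : ℝ) - i) * r ^ (n - 1) - ((n : ℝ) - i - 1) * r ^ n +
      ((i : ℝ) - 1) - i * r with hP
  have hrn : r ^ n = r ^ (n - 1) * r := by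
    rw [← pow_succ]; congr 1; omega
  have hstep : ∀ i : ℕ, P (i + 1) = P i + (1 - r) * (1 - r ^ (n - 1)) := by
    intro i
    simp only [hP]
    push_cast
    rw [hrn]; ring
  have hmono : Monotone P := monotone_nat_of_le_succ fun i => by
    rw [hstep]; linarith
  have hcastn1 : ((n - 1 : ℕ) : ℝ) = (n : ℝ) - 1 := by
    push_cast [Nat.cast_sub (by omega : 1 ≤ n)]; ring
  have hlast : 0 ≤ P (n - 1) := by
    have hb := one_add_mul_le_pow (show (-2 : ℝ) ≤ r - 1 by linarith) (n - 1)
    rw [show (1 : ℝ) + (r - 1) = r by ring] at hb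
    simp only [hP, hcastn1]
    rw [hrn]
    nlinarith
  -- deriv value and sign
  have hderiv : ∀ i ∈ Finset.Icc 1 (n - 1),
      deriv (fun s : ℝ => (1 - s) * s ^ (i - 1) / (1 - s ^ (n - 1))) r
        = r ^ i * P i / (r - r ^ n) ^ 2 := by
    intro i hi
    rw [Finset.mem_Icc] at hi
    exact (aux_deriv n i hn hi.1 hi.2 r hr0 hr1).deriv
  have hq : 0 < (r - r ^ n) ^ 2 := by
    have : 0 < r - r ^ n := by rw [hrn]; nlinarith
    positivity
  refine ⟨fun i hi => by
      rw [Finset.mem_Icc] at hi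
      exact aux_deriv n i hn hi.1 hi.2 r hr0 hr1,
    fun i hi => ⟨by push_cast; rw [hrn]; ring, hc⟩, ?_⟩
  -- existence of j
  classical
  set S : Finset ℕ := (Finset.Icc 1 (n - 1)).filter (fun i => 0 ≤ P i) with hS
  have hmemlast : n - 1 ∈ S := by
    rw [hS, Finset.mem_filter, Finset.mem_Icc]
    exact ⟨⟨by omega, le_rfl⟩, hlast⟩
  have hSne : S.Nonempty := ⟨n - 1, hmemlast⟩
  refine ⟨S.min' hSne, ?_, ?_, ?_⟩
  · exact (Finset.mem_filter.mp (S.min'_mem hSne)).1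
  · intro i hi hij
    rw [hderiv i hi]
    have hPi : P i < 0 := by
      by_contra h
      push_neg at h
      have : i ∈ S := Finset.mem_filter.mpr ⟨hi, h⟩
      exact absurd (S.min'_le i this) (by omega)
    have : r ^ i * P i < 0 := mul_neg_of_pos_of_neg (pow_pos hr0 i) hPi
    exact div_neg_of_neg_of_pos this hq
  · intro i hi hij
    rw [hderiv i hi]
    have hPj : 0 ≤ P (S.min' hSne) :=
      (Finset.mem_filter.mp (S.min'_mem hSne)).2
    have hPi : 0 ≤ P i := hPj.trans (hmono hij)
    exact div_nonneg (mul_nonneg (pow_pos hr0 i).le hPi) hq.le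
end
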